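/- arXiv:2003.04957 — 5 statements merged into one kernel-verified Lean document; each statement's English description precedes it below -/
import Mathlib

section
/- Let n be a nonnegative integer, let A and B be subsets of {0,1,...,n} of equal size, and let A^c and B^c be their complements in {0,1,...,n}. Then det(binom(b, a))_{a ∈ A, b ∈ B} = det(binom(a', b'))_{a' ∈ A^c, b' ∈ B^c}, where rows and columns are indexed by the elements of the sets in increasing order. -/
open Finset Equiv Matrix

namespace BinomDual

variable {n k l : ℕ}

/-- The equiv splitting `Fin (n+1)` into a finset `S` (in order) and its complement. -/
noncomputable def sumEquiv (S : Finset (Fin (n+1))) (hS : S.card = k) (hSc : Sᶜ.card = l) :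
    Fin k ⊕ Fin l ≃ Fin (n + 1) :=
  Equiv.ofBijective (Sum.elim (S.orderEmbOfFin hS) (Sᶜ.orderEmbOfFin hSc)) <| by
    rw [Fintype.bijective_iff_injective_and_card]
    constructor
    · rintro (i|i) (j|j) h <;> simp only [Sum.elim_inl, Sum.elim_inr] at h
      · exact congrArg Sum.inl ((S.orderEmbOfFin hS).injective h)
      · exact absurd (h ▸ S.orderEmbOfFin_mem hS i)
          (Finset.mem_compl.mp (Sᶜ.orderEmbOfFin_mem hSc j))
      · exact absurd (h.symm ▸ S.orderEmbOfFin_mem hS j)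
          (Finset.mem_compl.mp (Sᶜ.orderEmbOfFin_mem hSc i))
      · exact congrArg Sum.inr ((Sᶜ.orderEmbOfFin hSc).injective h)
    · simp only [Fintype.card_sum, Fintype.card_fin, ← hS, ← hSc]
      rw [S.card_add_card_compl, Fintype.card_fin]

@[simp] lemma sumEquiv_inl (S : Finset (Fin (n+1))) (hS : S.card = k) (hSc : Sᶜ.card = l)
    (i : Fin k) : sumEquiv S hS hSc (Sum.inl i) = S.orderEmbOfFin hS i := rfl

@[simp] lemma sumEquiv_inr (S : Finset (Fin (n+1))) (hS : S.card = k) (hSc : Sᶜ.card = l)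
    (i : Fin l) : sumEquiv S hS hSc (Sum.inr i) = Sᶜ.orderEmbOfFin hSc i := rfl

lemma orderEmbOfFin_congr {S T : Finset (Fin (n+1))} (hST : S = T) {m : ℕ}
    (hS : S.card = m) (hT : T.card = m) (i : Fin m) :
    S.orderEmbOfFin hS i = T.orderEmbOfFin hT i := by subst hST; rfl

/-- swapping an element `b ∈ T` down to `a = b - 1 ∉ T`. -/
lemma orderEmbOfFin_swap_down (T : Finset (Fin (n+1))) {m : ℕ} (hT : T.card = m)
    (a b : Fin (n+1)) (hab : (a:ℕ) + 1 = (b:ℕ)) (hb : b ∈ T) (ha : a ∉ T)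
    (hT' : (insert a (T.erase b)).card = m) (i : Fin m) :
    (insert a (T.erase b)).orderEmbOfFin hT' i = Equiv.swap a b (T.orderEmbOfFin hT i) := by
  have hmem : ∀ x, Equiv.swap a b (T.orderEmbOfFin hT x) ∈ insert a (T.erase b) := by
    intro x
    have hx : T.orderEmbOfFin hT x ∈ T := T.orderEmbOfFin_mem hT x
    rcases eq_or_ne (T.orderEmbOfFin hT x) b with h | h
    · rw [h, Equiv.swap_apply_right]; exact Finset.mem_insert_self _ _
    · have hxa : T.orderEmbOfFin hT x ≠ a := fun h' => ha (h' ▸ hx)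
      rw [Equiv.swap_apply_of_ne_of_ne hxa h]
      exact Finset.mem_insert_of_mem (Finset.mem_erase.mpr ⟨h, hx⟩)
  have hmono : StrictMono fun x => Equiv.swap a b (T.orderEmbOfFin hT x) := by
    intro x y hxy
    have hlt : T.orderEmbOfFin hT x < T.orderEmbOfFin hT y :=
      (T.orderEmbOfFin hT).strictMono hxy
    set u := T.orderEmbOfFin hT x with hu
    set v := T.orderEmbOfFin hT y with hv
    show Equiv.swap a b u < Equiv.swap a b v
    have hua : u ≠ a := fun h' => ha (h' ▸ T.orderEmbOfFin_mem hT x)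
    have hva : v ≠ a := fun h' => ha (h' ▸ T.orderEmbOfFin_mem hT y)
    rcases eq_or_ne u b with hub | hub
    · rcases eq_or_ne v b with hvb | hvb
      · exact absurd (hub.trans hvb.symm) (ne_of_lt hlt)
      · rw [hub, Equiv.swap_apply_right, Equiv.swap_apply_of_ne_of_ne hva hvb]
        have := Fin.lt_def.mp hlt
        rw [Fin.lt_def]; omega
    · rcases eq_or_ne v b with hvb | hvb
      · rw [hvb, Equiv.swap_apply_right, Equiv.swap_apply_of_ne_of_ne hua hub]
        have h1 := Fin.lt_def.mp hlt
        have h2 : (u:ℕ) ≠ (a:ℕ) := fun h' => hua (Fin.ext h')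
        rw [Fin.lt_def]
        rw [hvb] at h1; omega
      · rwa [Equiv.swap_apply_of_ne_of_ne hua hub, Equiv.swap_apply_of_ne_of_ne hva hvb]
  exact (congrFun (orderEmbOfFin_unique hT' hmem hmono) i).symm

/-- swapping an element `a ∈ T` up to `b = a + 1 ∉ T`. -/
lemma orderEmbOfFin_swap_up (T : Finset (Fin (n+1))) {m : ℕ} (hT : T.card = m)
    (a b : Fin (n+1)) (hab : (a:ℕ) + 1 = (b:ℕ)) (ha : a ∈ T) (hb : b ∉ T)
    (hT' : (insert b (T.erase a)).card = m) (i : Fin m) :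
    (insert b (T.erase a)).orderEmbOfFin hT' i = Equiv.swap a b (T.orderEmbOfFin hT i) := by
  have hmem : ∀ x, Equiv.swap a b (T.orderEmbOfFin hT x) ∈ insert b (T.erase a) := by
    intro x
    have hx : T.orderEmbOfFin hT x ∈ T := T.orderEmbOfFin_mem hT x
    rcases eq_or_ne (T.orderEmbOfFin hT x) a with h | h
    · rw [h, Equiv.swap_apply_left]; exact Finset.mem_insert_self _ _
    · have hxb : T.orderEmbOfFin hT x ≠ b := fun h' => hb (h' ▸ hx)
      rw [Equiv.swap_apply_of_ne_of_ne h hxb]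
      exact Finset.mem_insert_of_mem (Finset.mem_erase.mpr ⟨h, hx⟩)
  have hmono : StrictMono fun x => Equiv.swap a b (T.orderEmbOfFin hT x) := by
    intro x y hxy
    have hlt : T.orderEmbOfFin hT x < T.orderEmbOfFin hT y :=
      (T.orderEmbOfFin hT).strictMono hxy
    set u := T.orderEmbOfFin hT x with hu
    set v := T.orderEmbOfFin hT y with hv
    show Equiv.swap a b u < Equiv.swap a b v
    have hub : u ≠ b := fun h' => hb (h' ▸ T.orderEmbOfFin_mem hT x)
    have hvb : v ≠ b := fun h' => hb (h' ▸ T.orderEmbOfFin_mem hT y)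
    rcases eq_or_ne u a with hua | hua
    · rcases eq_or_ne v a with hva | hva
      · exact absurd (hua.trans hva.symm) (ne_of_lt hlt)
      · rw [hua, Equiv.swap_apply_left, Equiv.swap_apply_of_ne_of_ne hva hvb]
        have h1 := Fin.lt_def.mp hlt
        have h2 : (v:ℕ) ≠ (b:ℕ) := fun h' => hvb (Fin.ext h')
        rw [Fin.lt_def]
        rw [hua] at h1; omega
    · rcases eq_or_ne v a with hva | hva
      · rw [hva, Equiv.swap_apply_left, Equiv.swap_apply_of_ne_of_ne hua hub]
        have h1 := Fin.lt_def.mp hlt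
        rw [Fin.lt_def]
        rw [hva] at h1; omega
      · rwa [Equiv.swap_apply_of_ne_of_ne hua hub, Equiv.swap_apply_of_ne_of_ne hva hvb]
  exact (congrFun (orderEmbOfFin_unique hT' hmem hmono) i).symm

lemma compl_insert_erase (S : Finset (Fin (n+1))) (a b : Fin (n+1)) (hne : a ≠ b)
    (hb : b ∈ S) (ha : a ∉ S) :
    (insert a (S.erase b))ᶜ = insert b (Sᶜ.erase a) := by
  ext x
  simp only [Finset.mem_compl, Finset.mem_insert, Finset.mem_erase]
  by_cases hxb : x = b <;> by_cases hxa : x = a <;> simp_all <;> tauto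

lemma sumEquiv_insert_erase (S : Finset (Fin (n+1))) (hS : S.card = k) (hSc : Sᶜ.card = l)
    (a b : Fin (n+1)) (hab : (a:ℕ) + 1 = (b:ℕ)) (hb : b ∈ S) (ha : a ∉ S)
    (hS' : (insert a (S.erase b)).card = k) (hS'c : (insert a (S.erase b))ᶜ.card = l) :
    sumEquiv (insert a (S.erase b)) hS' hS'c =
      (sumEquiv S hS hSc).trans (Equiv.swap a b) := by
  have hne : a ≠ b := fun h => by rw [h] at hab; omega
  apply Equiv.ext
  rintro (i|i)
  · exact orderEmbOfFin_swap_down S hS a b hab hb ha hS' i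
  · have hcompl := compl_insert_erase S a b hne hb ha
    have hc2 : (insert b (Sᶜ.erase a)).card = l := hcompl ▸ hS'c
    calc (insert a (S.erase b))ᶜ.orderEmbOfFin hS'c i
        = (insert b (Sᶜ.erase a)).orderEmbOfFin hc2 i := orderEmbOfFin_congr hcompl _ _ i
      _ = Equiv.swap a b (Sᶜ.orderEmbOfFin hSc i) :=
          orderEmbOfFin_swap_up Sᶜ hSc a b hab (Finset.mem_compl.mpr ha)
            (fun h => (Finset.mem_compl.mp h) hb) hc2 i

/-- A finset of `Fin (n+1)` closed under predecessor is an initial segment. -/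
lemma mem_iff_lt_of_predClosed (S : Finset (Fin (n+1))) (hS : S.card = k)
    (h : ∀ b ∈ S, ∀ a : Fin (n+1), (a:ℕ) + 1 = (b:ℕ) → a ∈ S) :
    ∀ x : Fin (n+1), x ∈ S ↔ (x:ℕ) < k := by
  have hrange : ∀ x : Fin (n+1), x ∈ S ↔ ∃ i : Fin k, S.orderEmbOfFin hS i = x := by
    intro x
    rw [← Finset.mem_coe, ← S.range_orderEmbOfFin hS]
    exact ⟨fun ⟨i, hi⟩ => ⟨i, hi⟩, fun ⟨i, hi⟩ => ⟨i, hi⟩⟩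
  have key : ∀ j : ℕ, ∀ hj : j < k, ((S.orderEmbOfFin hS ⟨j, hj⟩ : Fin (n+1)) : ℕ) = j := by
    intro j
    induction j using Nat.strong_induction_on with
    | _ j IH =>
      intro hj
      set b := S.orderEmbOfFin hS ⟨j, hj⟩ with hbdef
      have hge : j ≤ (b : ℕ) := by
        rcases Nat.eq_zero_or_pos j with rfl | hjpos
        · exact Nat.zero_le _
        · have hj1 : j - 1 < k := by omega
          have h1 := IH (j-1) (by omega) hj1
          have hlt : S.orderEmbOfFin hS ⟨j-1, hj1⟩ < b :=
            (S.orderEmbOfFin hS).strictMono (by rw [Fin.lt_def]; simp; omega)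
          have := Fin.lt_def.mp hlt
          omega
      rcases Nat.lt_or_ge j (b : ℕ) with hgt | hle
      · exfalso
        have hbpos : 0 < (b:ℕ) := by omega
        set a : Fin (n+1) := ⟨(b:ℕ) - 1, by omega⟩ with hadef
        have haS : a ∈ S := h b (S.orderEmbOfFin_mem hS _) a (by simp [hadef]; omega)
        obtain ⟨t, ht⟩ := (hrange a).mp haS
        have htlt : t < (⟨j, hj⟩ : Fin k) := by
          have : S.orderEmbOfFin hS t < b := by
            rw [ht, Fin.lt_def]; show (b:ℕ) - 1 < (b:ℕ); omega
          exact (S.orderEmbOfFin hS).strictMono.lt_iff_lt.mp this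
        have htj : (t : ℕ) < j := Fin.lt_def.mp htlt
        have := IH t htj t.isLt
        have : ((S.orderEmbOfFin hS ⟨(t:ℕ), t.isLt⟩ : Fin (n+1)) : ℕ) = t := by
          convert this using 3
        rw [show (⟨(t:ℕ), t.isLt⟩ : Fin k) = t from rfl] at this
        rw [ht] at this
        simp [hadef] at this
        omega
      · omega
  intro x
  constructor
  · intro hx
    obtain ⟨i, hi⟩ := (hrange x).mp hx
    have := key i i.isLt
    rw [show (⟨(i:ℕ), i.isLt⟩ : Fin k) = i from rfl] at this
    rw [hi] at this
    omega
  · intro hx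
    have := key (x:ℕ) hx
    exact (hrange x).mpr ⟨⟨(x:ℕ), hx⟩, Fin.ext this⟩

lemma sign_aux : ∀ (m : ℕ) (A B : Finset (Fin (n+1))) (hA : A.card = k) (hB : B.card = k)
    (hAc : Aᶜ.card = l) (hBc : Bᶜ.card = l),
    (∑ x ∈ A, (x:ℕ)) + (∑ x ∈ B, (x:ℕ)) = m →
    Equiv.Perm.sign ((sumEquiv A hA hAc).trans (sumEquiv B hB hBc).symm) = (-1) ^ m := by
  intro m
  induction m using Nat.strong_induction_on with
  | _ m IH =>
    intro A B hA hB hAc hBc hm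
    by_cases hEx : ∃ b ∈ A, ∃ a : Fin (n+1), (a:ℕ) + 1 = (b:ℕ) ∧ a ∉ A
    · obtain ⟨b, hb, a, hab, ha⟩ := hEx
      set A' := insert a (A.erase b) with hA'def
      have hane : a ∉ A.erase b := fun h => ha (Finset.mem_of_mem_erase h)
      have hA' : A'.card = k := by
        rw [hA'def, Finset.card_insert_of_notMem hane, Finset.card_erase_of_mem hb, hA]
        have : 0 < k := hA ▸ Finset.card_pos.mpr ⟨b, hb⟩
        omega
      have hA'c : A'ᶜ.card = l := by
        rw [Finset.card_compl, hA']
        rw [Finset.card_compl, hA] at hAc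
        exact hAc
      have hsum : (∑ x ∈ A', (x:ℕ)) + 1 = ∑ x ∈ A, (x:ℕ) := by
        rw [hA'def, Finset.sum_insert hane,
          ← Finset.add_sum_erase _ _ hb]
        omega
      have hm1 : 1 ≤ m := by
        have : 1 ≤ (b:ℕ) := by omega
        have hble : (b:ℕ) ≤ ∑ x ∈ A, (x:ℕ) :=
          Finset.single_le_sum (fun x _ => Nat.zero_le _) hb
        omega
      have hrec := IH (m-1) (by omega) A' B hA' hB hA'c hBc (by omega)
      have heq : sumEquiv A' hA' hA'c = (sumEquiv A hA hAc).trans (Equiv.swap a b) :=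
        sumEquiv_insert_erase A hA hAc a b hab hb ha hA' hA'c
      have hne : a ≠ b := fun h => by rw [h] at hab; omega
      have hfact : (sumEquiv A' hA' hA'c).trans (sumEquiv B hB hBc).symm =
          ((sumEquiv A hA hAc).trans (sumEquiv B hB hBc).symm).trans
            (Equiv.swap ((sumEquiv B hB hBc).symm a) ((sumEquiv B hB hBc).symm b)) := by
        rw [heq]
        apply Equiv.ext
        intro x
        simp only [Equiv.trans_apply]
        by_cases h1 : (sumEquiv A hA hAc) x = a
        · rw [h1, Equiv.swap_apply_left, Equiv.swap_apply_left]
        · by_cases h2 : (sumEquiv A hA hAc) x = b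
          · rw [h2, Equiv.swap_apply_right, Equiv.swap_apply_right]
          · rw [Equiv.swap_apply_of_ne_of_ne h1 h2,
              Equiv.swap_apply_of_ne_of_ne
                (fun h => h1 ((sumEquiv B hB hBc).symm.injective h))
                (fun h => h2 ((sumEquiv B hB hBc).symm.injective h))]
      have hsw : Equiv.Perm.sign (Equiv.swap ((sumEquiv B hB hBc).symm a)
          ((sumEquiv B hB hBc).symm b)) = -1 :=
        Equiv.Perm.sign_swap (fun h => hne ((sumEquiv B hB hBc).symm.injective h))
      obtain ⟨m', rfl⟩ : ∃ m', m = m' + 1 := ⟨m - 1, by omega⟩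
      rw [hfact] at hrec
      have : Equiv.Perm.sign (((sumEquiv A hA hAc).trans (sumEquiv B hB hBc).symm).trans
          (Equiv.swap ((sumEquiv B hB hBc).symm a) ((sumEquiv B hB hBc).symm b))) =
          Equiv.Perm.sign (Equiv.swap ((sumEquiv B hB hBc).symm a)
            ((sumEquiv B hB hBc).symm b)) *
          Equiv.Perm.sign ((sumEquiv A hA hAc).trans (sumEquiv B hB hBc).symm) := by
        rw [← Equiv.Perm.sign_mul]
        rfl
      rw [this, hsw] at hrec
      simp only [Nat.add_sub_cancel] at hrec
      rw [pow_succ, ← hrec, mul_comm (-1 : ℤˣ), mul_assoc]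
      simp
    · by_cases hExB : ∃ b ∈ B, ∃ a : Fin (n+1), (a:ℕ) + 1 = (b:ℕ) ∧ a ∉ B
      · obtain ⟨b, hb, a, hab, ha⟩ := hExB
        set B' := insert a (B.erase b) with hB'def
        have hane : a ∉ B.erase b := fun h => ha (Finset.mem_of_mem_erase h)
        have hB' : B'.card = k := by
          rw [hB'def, Finset.card_insert_of_notMem hane, Finset.card_erase_of_mem hb, hB]
          have : 0 < k := hB ▸ Finset.card_pos.mpr ⟨b, hb⟩
          omega
        have hB'c : B'ᶜ.card = l := by
          rw [Finset.card_compl, hB']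
          rw [Finset.card_compl, hB] at hBc
          exact hBc
        have hsum : (∑ x ∈ B', (x:ℕ)) + 1 = ∑ x ∈ B, (x:ℕ) := by
          rw [hB'def, Finset.sum_insert hane, ← Finset.add_sum_erase _ _ hb]
          omega
        have hm1 : 1 ≤ m := by
          have : 1 ≤ (b:ℕ) := by omega
          have hble : (b:ℕ) ≤ ∑ x ∈ B, (x:ℕ) :=
            Finset.single_le_sum (fun x _ => Nat.zero_le _) hb
          omega
        have hrec := IH (m-1) (by omega) A B' hA hB' hAc hB'c (by omega)
        have heq : sumEquiv B' hB' hB'c = (sumEquiv B hB hBc).trans (Equiv.swap a b) :=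
          sumEquiv_insert_erase B hB hBc a b hab hb ha hB' hB'c
        have hne : a ≠ b := fun h => by rw [h] at hab; omega
        have hfact : (sumEquiv A hA hAc).trans (sumEquiv B' hB' hB'c).symm =
            ((sumEquiv A hA hAc).trans (sumEquiv B hB hBc).symm).trans
              (Equiv.swap ((sumEquiv B hB hBc).symm a) ((sumEquiv B hB hBc).symm b)) := by
          rw [heq]
          apply Equiv.ext
          intro x
          simp only [Equiv.trans_apply, Equiv.symm_trans_apply, Equiv.symm_swap]
          by_cases h1 : (sumEquiv A hA hAc) x = a
          · rw [h1, Equiv.swap_apply_left, Equiv.swap_apply_left]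
          · by_cases h2 : (sumEquiv A hA hAc) x = b
            · rw [h2, Equiv.swap_apply_right, Equiv.swap_apply_right]
            · rw [Equiv.swap_apply_of_ne_of_ne h1 h2,
                Equiv.swap_apply_of_ne_of_ne
                  (fun h => h1 ((sumEquiv B hB hBc).symm.injective h))
                  (fun h => h2 ((sumEquiv B hB hBc).symm.injective h))]
        have hsw : Equiv.Perm.sign (Equiv.swap ((sumEquiv B hB hBc).symm a)
            ((sumEquiv B hB hBc).symm b)) = -1 :=
          Equiv.Perm.sign_swap (fun h => hne ((sumEquiv B hB hBc).symm.injective h))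
        obtain ⟨m', rfl⟩ : ∃ m', m = m' + 1 := ⟨m - 1, by omega⟩
        rw [hfact] at hrec
        have : Equiv.Perm.sign (((sumEquiv A hA hAc).trans (sumEquiv B hB hBc).symm).trans
            (Equiv.swap ((sumEquiv B hB hBc).symm a) ((sumEquiv B hB hBc).symm b))) =
            Equiv.Perm.sign (Equiv.swap ((sumEquiv B hB hBc).symm a)
              ((sumEquiv B hB hBc).symm b)) *
            Equiv.Perm.sign ((sumEquiv A hA hAc).trans (sumEquiv B hB hBc).symm) := by
          rw [← Equiv.Perm.sign_mul]
          rfl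
        rw [this, hsw] at hrec
        simp only [Nat.add_sub_cancel] at hrec
        rw [pow_succ, ← hrec, mul_comm (-1 : ℤˣ), mul_assoc]
        simp
      · -- base case : both A and B are initial segments, hence equal
        push_neg at hEx hExB
        have hAmem := mem_iff_lt_of_predClosed A hA hEx
        have hBmem := mem_iff_lt_of_predClosed B hB hExB
        obtain rfl : A = B := Finset.ext fun x => (hAmem x).trans (hBmem x).symm
        obtain rfl : hA = hB := Subsingleton.elim _ _
        obtain rfl : hAc = hBc := Subsingleton.elim _ _
        rw [Equiv.self_trans_symm]
        have : m = (∑ x ∈ A, (x:ℕ)) + (∑ x ∈ A, (x:ℕ)) := hm.symm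
        subst this
        rw [Equiv.Perm.sign_refl, Even.neg_one_pow ⟨_, rfl⟩]

lemma key_sum (i j N : ℕ) (hj : j < N) :
    ∑ m ∈ Finset.range N, (Nat.choose m i : ℤ) * ((-1)^(m+j) * (Nat.choose j m : ℤ)) =
      if i = j then 1 else 0 := by
  rw [← Finset.sum_subset (Finset.range_subset_range.mpr (by omega : j + 1 ≤ N))
    (fun x _ hx => by
      have hxj : j < x := by
        simp only [Finset.mem_range] at hx ⊢
        omega
      simp [Nat.choose_eq_zero_of_lt hxj])]
  rcases Nat.lt_or_ge j i with hij | hij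
  · rw [Finset.sum_eq_zero, if_neg (by omega)]
    intro m hm
    have : m < i := by simp only [Finset.mem_range] at hm; omega
    simp [Nat.choose_eq_zero_of_lt this]
  · have hsub : Finset.Ico i (j+1) ⊆ Finset.range (j+1) := by
      intro x hx
      simp only [Finset.mem_Ico] at hx
      simp only [Finset.mem_range]
      omega
    rw [← Finset.sum_subset hsub (fun x hx hnx => by
      have : x < i := by
        simp only [Finset.mem_range] at hx
        simp only [Finset.mem_Ico] at hnx
        omega
      simp [Nat.choose_eq_zero_of_lt this])]
    rw [Finset.sum_Ico_eq_sum_range]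
    have hterm : ∀ t ∈ Finset.range (j + 1 - i),
        (Nat.choose (i+t) i : ℤ) * ((-1)^((i+t)+j) * (Nat.choose j (i+t) : ℤ)) =
        ((-1)^(i+j) * (Nat.choose j i : ℤ)) * ((-1)^t * ((j-i).choose t : ℤ)) := by
      intro t ht
      simp only [Finset.mem_range] at ht
      have h1 : i + t ≤ j := by omega
      have h2 : i ≤ i + t := by omega
      have hmul := Nat.choose_mul (n := j) h2
      have hmul' : (Nat.choose j (i+t) : ℤ) * (Nat.choose (i+t) i : ℤ) =
          (Nat.choose j i : ℤ) * ((j - i).choose (i + t - i) : ℤ) := by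
        exact_mod_cast congrArg (Nat.cast : ℕ → ℤ) hmul
      rw [show i + t - i = t by omega] at hmul'
      have hpow : ((-1:ℤ))^((i+t)+j) = (-1)^(i+j) * (-1)^t := by
        rw [← pow_add]
        congr 1
        omega
      rw [hpow]
      linear_combination ((-1:ℤ)^(i+j) * (-1)^t) * hmul'
    rw [Finset.sum_congr rfl hterm, ← Finset.mul_sum,
      show j + 1 - i = (j - i) + 1 by omega, Int.alternating_sum_range_choose]
    rcases eq_or_ne i j with rfl | hne
    · simp [Even.neg_one_pow ⟨i, rfl⟩]
    · rw [if_neg (by omega), if_neg hne]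
      ring

/-- The Pascal matrix. -/
def Pmat (n : ℕ) : Matrix (Fin (n+1)) (Fin (n+1)) ℤ :=
  Matrix.of fun i j => (Nat.choose j i : ℤ)

/-- Its (signed) inverse. -/
def Nmat (n : ℕ) : Matrix (Fin (n+1)) (Fin (n+1)) ℤ :=
  Matrix.of fun i j => (-1)^((i:ℕ)+(j:ℕ)) * (Nat.choose j i : ℤ)

lemma Pmat_mul_Nmat (n : ℕ) : Pmat n * Nmat n = 1 := by
  ext i j
  rw [Matrix.mul_apply]
  have : ∀ m : Fin (n+1), Pmat n i m * Nmat n m j =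
      (fun m : ℕ => (Nat.choose m i : ℤ) * ((-1)^(m+(j:ℕ)) * (Nat.choose (j:ℕ) m : ℤ))) m :=
    fun m => rfl
  rw [Finset.sum_congr rfl (fun m _ => this m),
    Fin.sum_univ_eq_sum_range
      (fun m : ℕ => (Nat.choose m i : ℤ) * ((-1)^(m+(j:ℕ)) * (Nat.choose (j:ℕ) m : ℤ))) (n+1),
    key_sum i j (n+1) j.isLt]
  rw [Matrix.one_apply]
  by_cases h : i = j
  · rw [if_pos h, if_pos (by exact_mod_cast congrArg Fin.val h)]
  · rw [if_neg h, if_neg (fun h' => h (Fin.ext h'))]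

lemma Nmat_mul_Pmat (n : ℕ) : Nmat n * Pmat n = 1 :=
  mul_eq_one_comm.mp (Pmat_mul_Nmat n)

lemma det_Pmat (n : ℕ) : (Pmat n).det = 1 := by
  rw [Matrix.det_of_upperTriangular]
  · simp [Pmat]
  · intro i j hij
    have h : (j:ℕ) < (i:ℕ) := hij
    simp [Pmat, Nat.choose_eq_zero_of_lt h]

lemma sum_orderEmbOfFin (S : Finset (Fin (n+1))) {m : ℕ} (hS : S.card = m) :
    ∑ i : Fin m, ((S.orderEmbOfFin hS i : Fin (n+1)) : ℕ) = ∑ x ∈ S, (x:ℕ) := by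
  apply Finset.sum_bij (fun i _ => S.orderEmbOfFin hS i)
  · intro i _; exact S.orderEmbOfFin_mem hS i
  · intro i _ j _ h; exact (S.orderEmbOfFin hS).injective h
  · intro x hx
    have : x ∈ Set.range (S.orderEmbOfFin hS) := by
      rw [S.range_orderEmbOfFin hS]; exact hx
    obtain ⟨i, hi⟩ := this
    exact ⟨i, Finset.mem_univ i, hi⟩
  · intro i _; rfl

end BinomDual

open BinomDual in
/-- Binomial determinant duality theorem (Gessel--Viennot):
for `A, B ⊆ {0,…,n}` of equal size with complements `Aᶜ, Bᶜ`,
`det (C(b,a))_{a∈A, b∈B} = det (C(a',b'))_{a'∈Aᶜ, b'∈Bᶜ}`,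
rows and columns indexed by the elements in increasing order. -/
theorem binomial_determinant_duality (n : ℕ) (A B : Finset (Fin (n + 1)))
    (k l : ℕ) (hA : A.card = k) (hB : B.card = k)
    (hAc : Aᶜ.card = l) (hBc : Bᶜ.card = l) :
    Matrix.det (Matrix.of fun i j : Fin k =>
      ((Nat.choose (B.orderEmbOfFin hB j) (A.orderEmbOfFin hA i) : ℤ))) =
    Matrix.det (Matrix.of fun i j : Fin l =>
      ((Nat.choose (Aᶜ.orderEmbOfFin hAc i) (Bᶜ.orderEmbOfFin hBc j) : ℤ))) := by
  classical
  set eA := sumEquiv A hA hAc with heA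
  set eB := sumEquiv B hB hBc with heB
  set R := (Pmat n).submatrix eA eB with hRdef
  set S := (Nmat n).submatrix eB eA with hSdef
  have hRS : R * S = 1 := by
    rw [hRdef, hSdef, Matrix.submatrix_mul_equiv, Pmat_mul_Nmat, Matrix.submatrix_one_equiv]
  have hR := Matrix.fromBlocks_toBlocks R
  have hS := Matrix.fromBlocks_toBlocks S
  have hone12 : Matrix.toBlocks₁₂ (1 : Matrix (Fin k ⊕ Fin l) (Fin k ⊕ Fin l) ℤ) = 0 := by
    ext i j
    simp [Matrix.toBlocks₁₂, Matrix.one_apply]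
  have hone22 : Matrix.toBlocks₂₂ (1 : Matrix (Fin k ⊕ Fin l) (Fin k ⊕ Fin l) ℤ) = 1 := by
    ext i j
    simp [Matrix.toBlocks₂₂, Matrix.one_apply, Sum.inr.injEq]
  have h12 : R.toBlocks₁₁ * S.toBlocks₁₂ + R.toBlocks₁₂ * S.toBlocks₂₂ = 0 := by
    have h := congrArg Matrix.toBlocks₁₂ hRS
    rw [← hR, ← hS, Matrix.fromBlocks_multiply] at h
    rw [hone12] at h
    simpa using h
  have h22 : R.toBlocks₂₁ * S.toBlocks₁₂ + R.toBlocks₂₂ * S.toBlocks₂₂ = 1 := by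
    have h := congrArg Matrix.toBlocks₂₂ hRS
    rw [← hR, ← hS, Matrix.fromBlocks_multiply] at h
    rw [hone22] at h
    simpa using h
  have hblock : R * Matrix.fromBlocks 1 (S.toBlocks₁₂) 0 (S.toBlocks₂₂) =
      Matrix.fromBlocks (R.toBlocks₁₁) 0 (R.toBlocks₂₁) 1 := by
    nth_rewrite 1 [← hR]
    rw [Matrix.fromBlocks_multiply]
    rw [Matrix.mul_one, Matrix.mul_zero, Matrix.mul_one, Matrix.mul_zero, add_zero, add_zero,
      h12, h22]
  have hdet : R.det * (S.toBlocks₂₂).det = (R.toBlocks₁₁).det := by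
    have h := congrArg Matrix.det hblock
    rw [Matrix.det_mul, Matrix.det_fromBlocks_zero₂₁, Matrix.det_fromBlocks_zero₁₂] at h
    simpa using h
  -- determinant of R is the sign of the sorting permutation
  have hsubm : R = ((Pmat n).submatrix eB eB).submatrix (⇑(eA.trans eB.symm)) id := by
    ext i j
    simp [hRdef, Matrix.submatrix_apply, Equiv.trans_apply]
  have hdetR : R.det = ((Equiv.Perm.sign (eA.trans eB.symm)) : ℤ) := by
    rw [hsubm, Matrix.det_permute, Matrix.det_submatrix_equiv_self, det_Pmat, mul_one]
    norm_cast
  have hsign := sign_aux ((∑ x ∈ A, (x:ℕ)) + (∑ x ∈ B, (x:ℕ))) A B hA hB hAc hBc rfl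
  rw [← heA, ← heB] at hsign
  have hdetR' : R.det = (-1:ℤ) ^ ((∑ x ∈ A, (x:ℕ)) + (∑ x ∈ B, (x:ℕ))) := by
    rw [hdetR, hsign]
    simp
  -- identify the blocks
  have hLHS : (Matrix.of fun i j : Fin k =>
      ((Nat.choose (B.orderEmbOfFin hB j) (A.orderEmbOfFin hA i) : ℤ))) = R.toBlocks₁₁ := by
    ext i j
    rfl
  set M0 : Matrix (Fin l) (Fin l) ℤ := Matrix.of fun i j : Fin l =>
    ((Nat.choose (Aᶜ.orderEmbOfFin hAc i) (Bᶜ.orderEmbOfFin hBc j) : ℤ)) with hM0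
  have hdetS22 : (S.toBlocks₂₂).det =
      (-1:ℤ) ^ (∑ x ∈ Bᶜ, (x:ℕ)) * ((-1:ℤ) ^ (∑ x ∈ Aᶜ, (x:ℕ)) * M0.det) := by
    have hstep : S.toBlocks₂₂ = Matrix.of fun i j : Fin l =>
        (-1:ℤ)^((Bᶜ.orderEmbOfFin hBc i : Fin (n+1)) : ℕ) *
          (Matrix.of fun i j : Fin l =>
            (-1:ℤ)^((Aᶜ.orderEmbOfFin hAc j : Fin (n+1)) : ℕ) * M0.transpose i j) i j := by
      ext i j
      have h0 : S.toBlocks₂₂ i j =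
          (-1:ℤ)^(((Bᶜ.orderEmbOfFin hBc i : Fin (n+1)) : ℕ) +
            ((Aᶜ.orderEmbOfFin hAc j : Fin (n+1)) : ℕ)) *
            (Nat.choose (Aᶜ.orderEmbOfFin hAc j) (Bᶜ.orderEmbOfFin hBc i) : ℤ) := rfl
      have h1 : (Matrix.of fun i j : Fin l =>
          (-1:ℤ)^((Aᶜ.orderEmbOfFin hAc j : Fin (n+1)) : ℕ) * M0.transpose i j) i j =
          (-1:ℤ)^((Aᶜ.orderEmbOfFin hAc j : Fin (n+1)) : ℕ) *
            (Nat.choose (Aᶜ.orderEmbOfFin hAc j) (Bᶜ.orderEmbOfFin hBc i) : ℤ) := rfl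
      rw [h0, pow_add, Matrix.of_apply, h1]
      ring
    rw [hstep, Matrix.det_mul_column, Matrix.det_mul_row, Matrix.det_transpose,
      Finset.prod_pow_eq_pow_sum, Finset.prod_pow_eq_pow_sum,
      sum_orderEmbOfFin Bᶜ hBc, sum_orderEmbOfFin Aᶜ hAc]
  rw [hLHS, ← hdet, hdetR', hdetS22]
  have h1 : (∑ x ∈ A, (x:ℕ)) + (∑ x ∈ Aᶜ, (x:ℕ)) = ∑ x : Fin (n+1), (x:ℕ) :=
    Finset.sum_add_sum_compl A _
  have h2 : (∑ x ∈ B, (x:ℕ)) + (∑ x ∈ Bᶜ, (x:ℕ)) = ∑ x : Fin (n+1), (x:ℕ) :=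
    Finset.sum_add_sum_compl B _
  have he : (-1:ℤ) ^ ((∑ x ∈ A, (x:ℕ)) + (∑ x ∈ B, (x:ℕ))) *
      ((-1:ℤ) ^ (∑ x ∈ Bᶜ, (x:ℕ)) * (-1:ℤ) ^ (∑ x ∈ Aᶜ, (x:ℕ))) = 1 := by
    rw [← pow_add, ← pow_add]
    exact Even.neg_one_pow ⟨∑ x : Fin (n+1), (x:ℕ), by omega⟩
  linear_combination M0.det * he
end

section
/- Let n be a nonnegative integer, let A and B be subsets of {0,1,...,n} of equal size, with complements A^c and B^c. Then det([b choose a]_q)_{a ∈ A, b ∈ B} = det(q^{binom(a'-b',2)} [a' choose b']_q)_{a' ∈ A^c, b' ∈ B^c}, as polynomials in q. -/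
open Polynomial
open Finset

/-- The `q`-binomial (Gaussian) coefficient `[m choose k]_q`, a polynomial in `q`,
defined by the `q`-Pascal recurrence `[m+1,k+1] = [m,k] + q^(k+1) [m,k+1]`,
with `[m,0] = 1` and `[0,k+1] = 0` (it is `0` whenever `k > m`). -/
noncomputable def qChoose : ℕ → ℕ → Polynomial ℤ
  | _, 0 => 1
  | 0, _ + 1 => 0
  | m + 1, k + 1 => qChoose m k + X ^ (k + 1) * qChoose m (k + 1)

lemma qChoose_zero_right (m : ℕ) : qChoose m 0 = 1 := by cases m <;> rfl

lemma qChoose_succ_succ (m k : ℕ) :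
    qChoose (m+1) (k+1) = qChoose m k + X ^ (k + 1) * qChoose m (k + 1) := rfl

lemma qChoose_eq_zero : ∀ {m k : ℕ}, m < k → qChoose m k = 0 := by
  intro m
  induction m with
  | zero => intro k hk; match k, hk with | k+1, _ => rfl
  | succ m ih =>
    intro k hk
    match k, hk with
    | k+1, hk =>
      rw [qChoose_succ_succ, ih (by omega), ih (by omega), mul_zero, add_zero]

lemma qChoose_self : ∀ m : ℕ, qChoose m m = 1 := by
  intro m
  induction m with
  | zero => rfl
  | succ m ih =>
    rw [qChoose_succ_succ, ih, qChoose_eq_zero (Nat.lt_succ_self m), mul_zero, add_zero]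

noncomputable def qInt (n : ℕ) : Polynomial ℤ := ∑ i ∈ range n, X ^ i

noncomputable def qFact : ℕ → Polynomial ℤ
  | 0 => 1
  | n + 1 => qFact n * qInt (n + 1)

lemma qInt_ne_zero {n : ℕ} (hn : 0 < n) : qInt n ≠ 0 := by
  intro h
  have : (qInt n).coeff 0 = 1 := by
    rw [qInt, finset_sum_coeff]
    rw [Finset.sum_eq_single 0]
    · simp
    · intro b _ hb
      simp [coeff_X_pow, Ne.symm hb]
    · intro h0; exact absurd (Finset.mem_range.2 hn) h0
  rw [h] at this; simp at this

lemma qFact_ne_zero : ∀ n : ℕ, qFact n ≠ 0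
  | 0 => one_ne_zero
  | n + 1 => mul_ne_zero (qFact_ne_zero n) (qInt_ne_zero n.succ_pos)

lemma qInt_add (a b : ℕ) : qInt a + X ^ a * qInt b = qInt (a + b) := by
  simp only [qInt, Finset.mul_sum, ← pow_add]
  rw [← Finset.sum_range_add_sum_Ico (fun i => (X:Polynomial ℤ)^i) (Nat.le_add_right a b)]
  congr 1
  rw [Finset.sum_Ico_eq_sum_range]
  simp [add_comm]

lemma qChoose_mul_qFact : ∀ m k : ℕ, k ≤ m →
    qChoose m k * (qFact k * qFact (m - k)) = qFact m := by
  intro m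
  induction m with
  | zero => intro k hk; interval_cases k; simp [qChoose_zero_right, qFact]
  | succ m ih =>
    intro k hk
    match k with
    | 0 => simp [qChoose_zero_right, qFact]
    | k + 1 =>
      rcases Nat.lt_or_ge k m with hkm | hkm
      · have h1 : k ≤ m := le_of_lt hkm
        have h2 : k + 1 ≤ m := hkm
        have e1 : m + 1 - (k + 1) = m - k := by omega
        have e2 : m - k = (m - (k+1)) + 1 := by omega
        rw [qChoose_succ_succ, e1, add_mul]
        have hf1 : qFact (k+1) = qFact k * qInt (k+1) := rfl
        have hf2 : qFact (m - k) = qFact (m - (k+1)) * qInt (m - k) := by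
          rw [e2]; rfl
        calc qChoose m k * (qFact (k+1) * qFact (m-k)) +
              X ^ (k+1) * qChoose m (k+1) * (qFact (k+1) * qFact (m-k))
            = qInt (k+1) * (qChoose m k * (qFact k * qFact (m-k))) +
              (X ^ (k+1) * qInt (m-k)) *
                (qChoose m (k+1) * (qFact (k+1) * qFact (m - (k+1)))) := by
              rw [hf1, hf2]; ring
          _ = qInt (k+1) * qFact m + (X ^ (k+1) * qInt (m-k)) * qFact m := by
              rw [ih k h1, ih (k+1) h2]
          _ = (qInt (k+1) + X ^ (k+1) * qInt (m-k)) * qFact m := by ring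
          _ = qFact (m+1) := by
              rw [qInt_add]
              have e3 : k + 1 + (m - k) = m + 1 := by omega
              rw [e3]
              show qInt (m+1) * qFact m = qFact m * qInt (m + 1)
              ring
      · have : k = m := by omega
        subst this
        simp [qChoose_self, Nat.sub_self, qFact]

lemma qChoose_trinomial {i k j : ℕ} (hik : i ≤ k) (hkj : k ≤ j) :
    qChoose j k * qChoose k i = qChoose j i * qChoose (j - i) (k - i) := by
  have hD : qFact i * qFact (k - i) * qFact (j - k) ≠ 0 :=
    mul_ne_zero (mul_ne_zero (qFact_ne_zero i) (qFact_ne_zero _)) (qFact_ne_zero _)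
  apply mul_right_cancel₀ hD
  have h1 := qChoose_mul_qFact k i hik
  have h2 := qChoose_mul_qFact j k hkj
  have h3 := qChoose_mul_qFact (j - i) (k - i) (by omega)
  have h4 := qChoose_mul_qFact j i (hik.trans hkj)
  have e : j - i - (k - i) = j - k := by omega
  have e2 : k - i ≤ j - i := by omega
  rw [e] at h3
  linear_combination (qChoose j k * qFact (j - k)) * h1 + h2 -
    (qChoose j i * qFact i) * h3 - h4

lemma qChoose_alternating_sum {d : ℕ} (hd : 0 < d) :
    ∑ s ∈ range (d + 1), (-1 : Polynomial ℤ) ^ s * X ^ (s.choose 2) * qChoose d s = 0 := by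
  obtain ⟨e, rfl⟩ : ∃ e, d = e + 1 := ⟨d - 1, by omega⟩
  set g : ℕ → Polynomial ℤ := fun s => (-1)^s * X ^ ((s+1).choose 2) * qChoose e s with hg
  have expand : ∀ s, (-1 : Polynomial ℤ) ^ (s+1) * X ^ ((s+1).choose 2) * qChoose (e+1) (s+1)
      = -g s + g (s+1) := by
    intro s
    simp only [hg]
    rw [qChoose_succ_succ]
    have c2 : (s+2).choose 2 = (s+1).choose 2 + (s+1) := by
      have h : (s+2).choose 2 = (s+1).choose 1 + (s+1).choose 2 := Nat.choose_succ_succ _ _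
      rw [Nat.choose_one_right] at h
      omega
    rw [c2, pow_add, pow_add]
    ring
  rw [Finset.sum_range_succ' _ (e+1)]
  have h0 : (-1:Polynomial ℤ)^0 * X ^ (Nat.choose 0 2) * qChoose (e+1) 0 = 1 := by
    simp [qChoose_zero_right]
  rw [h0, Finset.sum_congr rfl (fun s _ => expand s), Finset.sum_add_distrib]
  have hS1 : ∑ s ∈ range (e+1), -g s = -∑ s ∈ range (e+1), g s := by simp
  have hS2 : ∑ s ∈ range (e+1), g (s+1) = (∑ s ∈ range (e+1), g s) + g (e+1) - g 0 := by
    rw [← Finset.sum_range_succ g (e+1), Finset.sum_range_succ' g (e+1)]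
    ring
  have hge : g (e+1) = 0 := by simp [hg, qChoose_eq_zero (Nat.lt_succ_self e)]
  have hg0 : g 0 = 1 := by simp [hg, qChoose_zero_right]
  rw [hS1, hS2, hge, hg0]
  ring

noncomputable def qM (n : ℕ) : Matrix (Fin n) (Fin n) (Polynomial ℤ) :=
  Matrix.of fun i j => qChoose j i

noncomputable def qN (n : ℕ) : Matrix (Fin n) (Fin n) (Polynomial ℤ) :=
  Matrix.of fun i j =>
    (-1) ^ ((i:ℕ) + (j:ℕ)) * X ^ (Nat.choose ((j:ℕ) - (i:ℕ)) 2) * qChoose j i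

lemma qN_mul_qM (n : ℕ) : qN n * qM n = 1 := by
  ext i j : 1
  rw [Matrix.mul_apply, Matrix.one_apply]
  simp only [qN, qM, Matrix.of_apply]
  rcases lt_or_ge (j:ℕ) (i:ℕ) with hji | hij
  · rw [if_neg (by intro h; subst h; omega)]
    apply Finset.sum_eq_zero
    intro k _
    rcases lt_or_ge (k:ℕ) (i:ℕ) with h | h
    · rw [qChoose_eq_zero h]; ring
    · rw [qChoose_eq_zero (show (j:ℕ) < (k:ℕ) by omega)]; ring
  · have hcast := Fin.sum_univ_eq_sum_range (fun k =>
        (-1:Polynomial ℤ)^((i:ℕ)+k) * X ^ ((k-(i:ℕ)).choose 2) *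
          qChoose k (i:ℕ) * qChoose (j:ℕ) k) n
    rw [hcast]
    have hsub : Finset.Icc (i:ℕ) (j:ℕ) ⊆ range n := by
      intro x hx
      simp only [Finset.mem_Icc] at hx
      simp only [Finset.mem_range]
      exact lt_of_le_of_lt hx.2 j.isLt
    rw [← Finset.sum_subset hsub (by
      intro x _ hx
      simp only [Finset.mem_Icc, not_and, not_le] at hx
      rcases lt_or_ge x (i:ℕ) with h | h
      · rw [qChoose_eq_zero h]; ring
      · rw [qChoose_eq_zero (hx h)]; ring)]
    rw [← Finset.Ico_add_one_right_eq_Icc, Finset.sum_Ico_eq_sum_range]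
    have hd : (j:ℕ) + 1 - (i:ℕ) = ((j:ℕ) - (i:ℕ)) + 1 := by omega
    rw [hd]
    have hterm : ∀ s ∈ range (((j:ℕ) - (i:ℕ)) + 1),
        (-1:Polynomial ℤ)^((i:ℕ)+((i:ℕ)+s)) * X ^ ((((i:ℕ)+s)-(i:ℕ)).choose 2) *
          qChoose ((i:ℕ)+s) (i:ℕ) * qChoose (j:ℕ) ((i:ℕ)+s)
        = qChoose (j:ℕ) (i:ℕ) * ((-1:Polynomial ℤ)^s * X ^ (s.choose 2) *
            qChoose ((j:ℕ)-(i:ℕ)) s) := by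
      intro s hs
      rw [Finset.mem_range] at hs
      have h1 : (i:ℕ) ≤ (i:ℕ) + s := Nat.le_add_right _ _
      have h2 : (i:ℕ) + s ≤ (j:ℕ) := by omega
      have htri := qChoose_trinomial h1 h2
      have e1 : (i:ℕ) + s - (i:ℕ) = s := by omega
      rw [e1] at htri ⊢
      have hsign : (-1:Polynomial ℤ)^((i:ℕ)+((i:ℕ)+s)) = (-1)^s := by
        rw [show (i:ℕ)+((i:ℕ)+s) = 2*(i:ℕ)+s by ring, pow_add, pow_mul]
        norm_num
      rw [hsign]
      calc (-1:Polynomial ℤ)^s * X ^ (s.choose 2) * qChoose ((i:ℕ)+s) (i:ℕ) *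
            qChoose (j:ℕ) ((i:ℕ)+s)
          = (-1:Polynomial ℤ)^s * X ^ (s.choose 2) *
            (qChoose (j:ℕ) ((i:ℕ)+s) * qChoose ((i:ℕ)+s) (i:ℕ)) := by ring
        _ = (-1:Polynomial ℤ)^s * X ^ (s.choose 2) *
            (qChoose (j:ℕ) (i:ℕ) * qChoose ((j:ℕ)-(i:ℕ)) s) := by rw [htri]
        _ = qChoose (j:ℕ) (i:ℕ) * ((-1:Polynomial ℤ)^s * X ^ (s.choose 2) *
            qChoose ((j:ℕ)-(i:ℕ)) s) := by ring
    rw [Finset.sum_congr rfl hterm, ← Finset.mul_sum]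
    rcases eq_or_lt_of_le hij with heq | hlt
    · have hij' : i = j := Fin.ext heq
      rw [if_pos hij']
      have : (j:ℕ) - (i:ℕ) = 0 := by omega
      rw [this]
      simp [qChoose_zero_right, heq, qChoose_self]
    · rw [if_neg (by intro h; subst h; omega)]
      rw [qChoose_alternating_sum (by omega : 0 < (j:ℕ) - (i:ℕ)), mul_zero]

lemma qM_mul_qN (n : ℕ) : qM n * qN n = 1 :=
  mul_eq_one_comm.mp (qN_mul_qM n)

lemma det_qM (n : ℕ) : (qM n).det = 1 := by
  have h : (qM n).BlockTriangular id := by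
    intro i j hij
    exact qChoose_eq_zero hij
  rw [Matrix.det_of_upperTriangular h]
  apply Finset.prod_eq_one
  intro i _
  simp [qM, qChoose_self]

section SignPart

variable {n : ℕ}

noncomputable def finSumEquiv {k l : ℕ} (A : Finset (Fin (n+1)))
    (hA : A.card = k) (hAc : Aᶜ.card = l) : Fin k ⊕ Fin l ≃ Fin (n+1) :=
  Equiv.ofBijective (Sum.elim (A.orderEmbOfFin hA) (Aᶜ.orderEmbOfFin hAc)) (by
    rw [Fintype.bijective_iff_injective_and_card]
    constructor
    · intro x y hxy
      match x, y with
      | Sum.inl i, Sum.inl j =>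
        simp only [Sum.elim_inl] at hxy
        exact congrArg Sum.inl ((A.orderEmbOfFin hA).injective hxy)
      | Sum.inl i, Sum.inr j =>
        simp only [Sum.elim_inl, Sum.elim_inr] at hxy
        have h1 := A.orderEmbOfFin_mem hA i
        have h2 := Aᶜ.orderEmbOfFin_mem hAc j
        rw [hxy] at h1
        rw [Finset.mem_compl] at h2
        exact absurd h1 h2
      | Sum.inr i, Sum.inl j =>
        simp only [Sum.elim_inl, Sum.elim_inr] at hxy
        have h1 := A.orderEmbOfFin_mem hA j
        have h2 := Aᶜ.orderEmbOfFin_mem hAc i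
        rw [← hxy] at h1
        rw [Finset.mem_compl] at h2
        exact absurd h1 h2
      | Sum.inr i, Sum.inr j =>
        simp only [Sum.elim_inr] at hxy
        exact congrArg Sum.inr ((Aᶜ.orderEmbOfFin hAc).injective hxy)
    · simp only [Fintype.card_sum, Fintype.card_fin]
      rw [← hA, ← hAc, Finset.card_add_card_compl, Fintype.card_fin])

lemma finSumEquiv_inl {k l : ℕ} (A : Finset (Fin (n+1)))
    (hA : A.card = k) (hAc : Aᶜ.card = l) (i : Fin k) :
    finSumEquiv A hA hAc (Sum.inl i) = A.orderEmbOfFin hA i := rfl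

lemma finSumEquiv_inr {k l : ℕ} (A : Finset (Fin (n+1)))
    (hA : A.card = k) (hAc : Aᶜ.card = l) (i : Fin l) :
    finSumEquiv A hA hAc (Sum.inr i) = Aᶜ.orderEmbOfFin hAc i := rfl

/-- moving a "high" element `a ∈ s` down to `p = a - 1 ∉ s`. -/
lemma orderEmbOfFin_swap_down {k : ℕ} {s s' : Finset (Fin (n+1))} {p a : Fin (n+1)}
    (hpa : (p:ℕ) + 1 = (a:ℕ)) (has : a ∈ s) (hps : p ∉ s)
    (hs' : s' = insert p (s.erase a))
    (hs : s.card = k) (hs'c : s'.card = k) :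
    ∀ i, s.orderEmbOfFin hs i = Equiv.swap p a (s'.orderEmbOfFin hs'c i) := by
  have hpna : p ≠ a := by intro h; rw [h] at hpa; omega
  have hplta : p < a := by rw [Fin.lt_def]; omega
  have hans' : a ∉ s' := by
    rw [hs']
    simp only [Finset.mem_insert, Finset.mem_erase]
    push_neg
    exact ⟨hpna.symm, fun h => absurd rfl h⟩
  have key : (fun i => Equiv.swap p a (s'.orderEmbOfFin hs'c i)) = s.orderEmbOfFin hs := by
    apply Finset.orderEmbOfFin_unique
    · intro i
      have hx := s'.orderEmbOfFin_mem hs'c i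
      set x := s'.orderEmbOfFin hs'c i with hxdef
      by_cases hxp : x = p
      · rw [hxp, Equiv.swap_apply_left]; exact has
      · have hxa : x ≠ a := fun h => absurd (h ▸ hx) hans'
        rw [Equiv.swap_apply_of_ne_of_ne hxp hxa]
        rw [hs'] at hx
        rcases Finset.mem_insert.mp hx with h | h
        · exact absurd h hxp
        · exact Finset.mem_of_mem_erase h
    · intro i j hij
      show Equiv.swap p a (s'.orderEmbOfFin hs'c i) < Equiv.swap p a (s'.orderEmbOfFin hs'c j)
      have hmono := (s'.orderEmbOfFin hs'c).strictMono hij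
      have hxm := s'.orderEmbOfFin_mem hs'c i
      have hym := s'.orderEmbOfFin_mem hs'c j
      set x := s'.orderEmbOfFin hs'c i with hxdef
      set y := s'.orderEmbOfFin hs'c j with hydef
      have hyna : y ≠ a := fun h => absurd (h ▸ hym) hans'
      have hxna : x ≠ a := fun h => absurd (h ▸ hxm) hans'
      by_cases hxp : x = p
      · have hynp : y ≠ p := by intro h; rw [hxp, h] at hmono; exact lt_irrefl _ hmono
        rw [hxp, Equiv.swap_apply_left, Equiv.swap_apply_of_ne_of_ne hynp hyna]
        rw [Fin.lt_def] at hmono ⊢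
        have h1 : (y:ℕ) ≠ (a:ℕ) := fun h => hyna (Fin.ext h)
        rw [hxp] at hmono
        omega
      · rw [Equiv.swap_apply_of_ne_of_ne hxp hxna]
        by_cases hyp : y = p
        · rw [hyp, Equiv.swap_apply_left]
          rw [hyp] at hmono
          exact hmono.trans hplta
        · rw [Equiv.swap_apply_of_ne_of_ne hyp hyna]
          exact hmono
  intro i
  exact (congrFun key i).symm

/-- moving a "low" element `p ∈ s` up to `a = p + 1 ∉ s`. -/
lemma orderEmbOfFin_swap_up {k : ℕ} {s s' : Finset (Fin (n+1))} {p a : Fin (n+1)}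
    (hpa : (p:ℕ) + 1 = (a:ℕ)) (hps : p ∈ s) (has : a ∉ s)
    (hs' : s' = insert a (s.erase p))
    (hs : s.card = k) (hs'c : s'.card = k) :
    ∀ i, s.orderEmbOfFin hs i = Equiv.swap p a (s'.orderEmbOfFin hs'c i) := by
  have hpna : p ≠ a := by intro h; rw [h] at hpa; omega
  have hplta : p < a := by rw [Fin.lt_def]; omega
  have hpns' : p ∉ s' := by
    rw [hs']
    simp only [Finset.mem_insert, Finset.mem_erase]
    push_neg
    exact ⟨hpna, fun h => absurd rfl h⟩
  have key : (fun i => Equiv.swap p a (s'.orderEmbOfFin hs'c i)) = s.orderEmbOfFin hs := by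
    apply Finset.orderEmbOfFin_unique
    · intro i
      have hx := s'.orderEmbOfFin_mem hs'c i
      set x := s'.orderEmbOfFin hs'c i with hxdef
      by_cases hxa : x = a
      · rw [hxa, Equiv.swap_apply_right]; exact hps
      · have hxp : x ≠ p := fun h => absurd (h ▸ hx) hpns'
        rw [Equiv.swap_apply_of_ne_of_ne hxp hxa]
        rw [hs'] at hx
        rcases Finset.mem_insert.mp hx with h | h
        · exact absurd h hxa
        · exact Finset.mem_of_mem_erase h
    · intro i j hij
      show Equiv.swap p a (s'.orderEmbOfFin hs'c i) < Equiv.swap p a (s'.orderEmbOfFin hs'c j)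
      have hmono := (s'.orderEmbOfFin hs'c).strictMono hij
      have hxm := s'.orderEmbOfFin_mem hs'c i
      have hym := s'.orderEmbOfFin_mem hs'c j
      set x := s'.orderEmbOfFin hs'c i with hxdef
      set y := s'.orderEmbOfFin hs'c j with hydef
      have hynp : y ≠ p := fun h => absurd (h ▸ hym) hpns'
      have hxnp : x ≠ p := fun h => absurd (h ▸ hxm) hpns'
      by_cases hxa : x = a
      · have hya : y ≠ a := by intro h; rw [hxa, h] at hmono; exact lt_irrefl _ hmono
        rw [hxa, Equiv.swap_apply_right, Equiv.swap_apply_of_ne_of_ne hynp hya]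
        rw [hxa] at hmono
        exact hplta.trans hmono
      · rw [Equiv.swap_apply_of_ne_of_ne hxnp hxa]
        by_cases hya : y = a
        · rw [hya, Equiv.swap_apply_right]
          rw [hya, Fin.lt_def] at hmono
          rw [Fin.lt_def]
          have h1 : (x:ℕ) ≠ (p:ℕ) := fun h => hxnp (Fin.ext h)
          omega
        · rw [Equiv.swap_apply_of_ne_of_ne hynp hya]
          exact hmono
  intro i
  exact (congrFun key i).symm

end SignPart

section SignPart2
variable {n : ℕ}

def IsDC (s : Finset (Fin (n+1))) : Prop := ∀ a ∈ s, ∀ b, b < a → b ∈ s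

lemma isDC_eq {k : ℕ} {s t : Finset (Fin (n+1))} (hs : IsDC s) (ht : IsDC t)
    (hsk : s.card = k) (htk : t.card = k) : s = t := by
  have mem_iff : ∀ (u : Finset (Fin (n+1))), IsDC u → u.card = k →
      ∀ x : Fin (n+1), x ∈ u ↔ (x:ℕ) < k := by
    intro u hu huk x
    constructor
    · intro hx
      have hsub : Finset.Iic x ⊆ u := by
        intro y hy
        rw [Finset.mem_Iic] at hy
        rcases lt_or_eq_of_le hy with h | h
        · exact hu x hx y h
        · rw [h]; exact hx
      have hc := Finset.card_le_card hsub
      rw [Fin.card_Iic, huk] at hc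
      omega
    · intro hx
      by_contra hxu
      have hsub : u ⊆ Finset.Iio x := by
        intro y hy
        rw [Finset.mem_Iio]
        rcases lt_trichotomy y x with h | h | h
        · exact h
        · exact absurd (h ▸ hy) hxu
        · exact absurd (hu y hy x h) hxu
      have hc := Finset.card_le_card hsub
      rw [Fin.card_Iio, huk] at hc
      omega
  ext x
  rw [mem_iff s hs hsk x, mem_iff t ht htk x]

lemma exists_adjacent {s : Finset (Fin (n+1))} (h : ¬ IsDC s) :
    ∃ p a : Fin (n+1), (p:ℕ) + 1 = (a:ℕ) ∧ a ∈ s ∧ p ∉ s := by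
  rw [IsDC] at h
  push_neg at h
  obtain ⟨a, ha, b, hba, hbs⟩ := h
  have hne : (s.filter (fun c => b < c)).Nonempty :=
    ⟨a, Finset.mem_filter.mpr ⟨ha, hba⟩⟩
  set m := (s.filter (fun c => b < c)).min' hne with hm
  have hmmem := Finset.min'_mem _ hne
  rw [Finset.mem_filter] at hmmem
  obtain ⟨hms, hbm⟩ := hmmem
  have hbm' : (b:ℕ) < (m:ℕ) := hbm
  have hmlt : (m:ℕ) < n + 1 := m.isLt
  refine ⟨⟨(m:ℕ)-1, by omega⟩, m, by simp; omega, hms, ?_⟩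
  intro hp
  by_cases hbeq : (b:ℕ) = (m:ℕ) - 1
  · have : b = (⟨(m:ℕ)-1, by omega⟩ : Fin (n+1)) := Fin.ext (by simp [hbeq])
    rw [← this] at hp
    exact hbs hp
  · have hbp : b < (⟨(m:ℕ)-1, by omega⟩ : Fin (n+1)) := by
      rw [Fin.lt_def]; simp; omega
    have hmem : (⟨(m:ℕ)-1, by omega⟩ : Fin (n+1)) ∈ s.filter (fun c => b < c) :=
      Finset.mem_filter.mpr ⟨hp, hbp⟩
    have hle : m ≤ (⟨(m:ℕ)-1, by omega⟩ : Fin (n+1)) := Finset.min'_le _ _ hmem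
    rw [Fin.le_def] at hle
    simp at hle
    omega

lemma move_card {s : Finset (Fin (n+1))} {p a : Fin (n+1)}
    (hpa : p ≠ a) (has : a ∈ s) (hps : p ∉ s) :
    (insert p (s.erase a)).card = s.card := by
  rw [Finset.card_insert_of_notMem (by
    intro h; exact hps (Finset.mem_of_mem_erase h)),
    Finset.card_erase_of_mem has]
  have : 1 ≤ s.card := Finset.card_pos.mpr ⟨a, has⟩
  omega

lemma move_compl {s : Finset (Fin (n+1))} {p a : Fin (n+1)}
    (hpa : p ≠ a) (has : a ∈ s) (hps : p ∉ s) :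
    (insert p (s.erase a))ᶜ = insert a (sᶜ.erase p) := by
  ext x
  simp only [Finset.mem_compl, Finset.mem_insert, Finset.mem_erase]
  by_cases h1 : x = a
  · subst h1
    simp [hpa.symm, has]
  · by_cases h2 : x = p
    · subst h2
      simp [hpa, hps, h1]
    · simp [h1, h2]

lemma move_sum {s : Finset (Fin (n+1))} {p a : Fin (n+1)}
    (hpa : (p:ℕ) + 1 = (a:ℕ)) (has : a ∈ s) (hps : p ∉ s) :
    (∑ x ∈ insert p (s.erase a), (x:ℕ)) + 1 = ∑ x ∈ s, (x:ℕ) := by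
  rw [Finset.sum_insert (by intro h; exact hps (Finset.mem_of_mem_erase h))]
  have h2 := Finset.add_sum_erase s (fun x : Fin (n+1) => (x:ℕ)) has
  beta_reduce at h2
  omega

lemma sign_step {k l : ℕ} {A A' B : Finset (Fin (n+1))} {p a : Fin (n+1)}
    (hpa : (p:ℕ) + 1 = (a:ℕ)) (haA : a ∈ A) (hpA : p ∉ A)
    (hA'def : A' = insert p (A.erase a))
    (hA : A.card = k) (hA' : A'.card = k) (hAc : Aᶜ.card = l) (hA'c : A'ᶜ.card = l)
    (hB : B.card = k) (hBc : Bᶜ.card = l) :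
    Equiv.Perm.sign ((finSumEquiv A hA hAc).trans (finSumEquiv B hB hBc).symm)
      = - Equiv.Perm.sign ((finSumEquiv A' hA' hA'c).trans (finSumEquiv B hB hBc).symm) := by
  have hpna : p ≠ a := by intro h; rw [h] at hpa; omega
  have hcompl : A'ᶜ = insert a (Aᶜ.erase p) := by
    rw [hA'def]; exact move_compl hpna haA hpA
  have heq : ∀ x, finSumEquiv A hA hAc x
      = Equiv.swap p a (finSumEquiv A' hA' hA'c x) := by
    intro x
    cases x with
    | inl i => exact orderEmbOfFin_swap_down hpa haA hpA hA'def hA hA' i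
    | inr i =>
      exact orderEmbOfFin_swap_up hpa (Finset.mem_compl.mpr hpA)
        (fun h => (Finset.mem_compl.mp h) haA) hcompl hAc hA'c i
  set eB := finSumEquiv B hB hBc with heB
  set eA' := finSumEquiv A' hA' hA'c with heA'
  have hperm : (finSumEquiv A hA hAc).trans eB.symm
      = (eA'.trans eB.symm).trans ((eB.trans (Equiv.swap p a)).trans eB.symm) := by
    apply Equiv.ext
    intro x
    simp only [Equiv.trans_apply, heq x, Equiv.apply_symm_apply]
  rw [hperm]
  have hmul : ∀ (f g : Equiv.Perm (Fin k ⊕ Fin l)), f.trans g = g * f := fun f g => rfl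
  rw [hmul, map_mul]
  rw [Equiv.Perm.sign_trans_trans_symm (Equiv.swap p a) eB, Equiv.Perm.sign_swap hpna]
  exact neg_one_mul _

lemma sign_finSumEquiv {k l : ℕ} (t : ℕ) : ∀ (A B : Finset (Fin (n+1)))
    (hA : A.card = k) (hB : B.card = k) (hAc : Aᶜ.card = l) (hBc : Bᶜ.card = l),
    (∑ x ∈ A, (x:ℕ)) + (∑ x ∈ B, (x:ℕ)) = t →
    Equiv.Perm.sign ((finSumEquiv A hA hAc).trans (finSumEquiv B hB hBc).symm)
      = (-1) ^ t := by
  induction t using Nat.strong_induction_on with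
  | _ t ih =>
  intro A B hA hB hAc hBc ht
  by_cases hdcA : IsDC A
  · by_cases hdcB : IsDC B
    · have hAB : A = B := isDC_eq hdcA hdcB hA hB
      subst hAB
      have hrefl : (finSumEquiv A hA hAc).trans (finSumEquiv A hB hBc).symm
          = Equiv.refl _ := Equiv.self_trans_symm _
      rw [hrefl, Equiv.Perm.sign_refl]
      rw [← ht]
      exact (Even.neg_one_pow ⟨_, rfl⟩).symm
    · obtain ⟨p, a, hpa, haB, hpB⟩ := exists_adjacent hdcB
      have hpna : p ≠ a := by intro h; rw [h] at hpa; omega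
      set B' := insert p (B.erase a) with hB'def
      have hB' : B'.card = k := by rw [hB'def, move_card hpna haB hpB, hB]
      have hB'c : B'ᶜ.card = l := by
        rw [Finset.card_compl, hB', ← hBc, Finset.card_compl, hB]
      have hsum : (∑ x ∈ B', (x:ℕ)) + 1 = ∑ x ∈ B, (x:ℕ) := move_sum hpa haB hpB
      have h1 : Equiv.Perm.sign ((finSumEquiv A hA hAc).trans (finSumEquiv B hB hBc).symm)
          = Equiv.Perm.sign ((finSumEquiv B hB hBc).trans (finSumEquiv A hA hAc).symm) := by
        rw [← Equiv.Perm.sign_inv]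
        congr 1
      rw [h1, sign_step hpa haB hpB hB'def hB hB' hBc hB'c hA hAc]
      have h2 : Equiv.Perm.sign ((finSumEquiv B' hB' hB'c).trans (finSumEquiv A hA hAc).symm)
          = Equiv.Perm.sign ((finSumEquiv A hA hAc).trans (finSumEquiv B' hB' hB'c).symm) := by
        rw [← Equiv.Perm.sign_inv]
        congr 1
      rw [h2, ih (t-1) (by omega) A B' hA hB' hAc hB'c (by omega)]
      have hpow : ((-1:ℤˣ))^t = (-1)^(t-1) * (-1) := by
        conv_lhs => rw [show t = (t-1)+1 by omega]
        rw [pow_succ]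
      rw [hpow, mul_neg_one]
  · obtain ⟨p, a, hpa, haA, hpA⟩ := exists_adjacent hdcA
    have hpna : p ≠ a := by intro h; rw [h] at hpa; omega
    set A' := insert p (A.erase a) with hA'def
    have hA' : A'.card = k := by rw [hA'def, move_card hpna haA hpA, hA]
    have hA'c : A'ᶜ.card = l := by
      rw [Finset.card_compl, hA', ← hAc, Finset.card_compl, hA]
    have hsum : (∑ x ∈ A', (x:ℕ)) + 1 = ∑ x ∈ A, (x:ℕ) := move_sum hpa haA hpA
    rw [sign_step hpa haA hpA hA'def hA hA' hAc hA'c hB hBc]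
    rw [ih (t-1) (by omega) A' B hA' hB hA'c hBc (by omega)]
    have hpow : ((-1:ℤˣ))^t = (-1)^(t-1) * (-1) := by
      conv_lhs => rw [show t = (t-1)+1 by omega]
      rw [pow_succ]
    rw [hpow, mul_neg_one]

end SignPart2

lemma sum_orderEmbOfFin_eq {n l : ℕ} (s : Finset (Fin (n+1))) (h : s.card = l)
    (f : Fin (n+1) → ℕ) :
    ∑ i : Fin l, f (s.orderEmbOfFin h i) = ∑ x ∈ s, f x := by
  apply Finset.sum_bij (fun (i : Fin l) (_ : i ∈ Finset.univ) => s.orderEmbOfFin h i)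
  · intro i _; exact s.orderEmbOfFin_mem h i
  · intro i _ j _ hij; exact (s.orderEmbOfFin h).injective hij
  · intro x hx
    have hr : x ∈ Set.range (s.orderEmbOfFin h) := by
      rw [Finset.range_orderEmbOfFin]; exact hx
    obtain ⟨i, hi⟩ := hr
    exact ⟨i, Finset.mem_univ i, hi⟩
  · intro i _; rfl


/-- `q`-binomial determinant duality: for `A, B ⊆ {0,…,n}` of equal size with
complements `Aᶜ, Bᶜ`,
`det ([b,a]_q)_{a∈A, b∈B} = det (q^{C(a'-b',2)} [a',b']_q)_{a'∈Aᶜ, b'∈Bᶜ}`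
as polynomials in `q`. -/
theorem q_binomial_determinant_duality (n : ℕ) (A B : Finset (Fin (n + 1)))
    (k l : ℕ) (hA : A.card = k) (hB : B.card = k)
    (hAc : Aᶜ.card = l) (hBc : Bᶜ.card = l) :
    Matrix.det (Matrix.of fun i j : Fin k =>
      qChoose (B.orderEmbOfFin hB j) (A.orderEmbOfFin hA i)) =
    Matrix.det (Matrix.of fun i j : Fin l =>
      X ^ (Nat.choose ((Aᶜ.orderEmbOfFin hAc i : ℕ) - (Bᶜ.orderEmbOfFin hBc j : ℕ)) 2) *
        qChoose (Aᶜ.orderEmbOfFin hAc i) (Bᶜ.orderEmbOfFin hBc j)) := by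
  classical
  set eA := finSumEquiv A hA hAc with heA
  set eB := finSumEquiv B hB hBc with heB
  set P : Matrix (Fin k ⊕ Fin l) (Fin k ⊕ Fin l) (Polynomial ℤ) :=
    (qM (n+1)).submatrix eA eB with hPdef
  set Q : Matrix (Fin k ⊕ Fin l) (Fin k ⊕ Fin l) (Polynomial ℤ) :=
    (qN (n+1)).submatrix eB eA with hQdef
  have hPQ : P * Q = 1 := by
    rw [hPdef, hQdef, Matrix.submatrix_mul_equiv, qM_mul_qN, Matrix.submatrix_one_equiv]
  -- block equations
  have hb := hPQ
  rw [← Matrix.fromBlocks_toBlocks P, ← Matrix.fromBlocks_toBlocks Q,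
    Matrix.fromBlocks_multiply, ← Matrix.fromBlocks_one] at hb
  have h12 : P.toBlocks₁₁ * Q.toBlocks₁₂ + P.toBlocks₁₂ * Q.toBlocks₂₂ = 0 := by
    have h := congrArg Matrix.toBlocks₁₂ hb
    simp only [Matrix.toBlocks_fromBlocks₁₂] at h
    exact h
  have h22 : P.toBlocks₂₁ * Q.toBlocks₁₂ + P.toBlocks₂₂ * Q.toBlocks₂₂ = 1 := by
    have h := congrArg Matrix.toBlocks₂₂ hb
    simp only [Matrix.toBlocks_fromBlocks₂₂] at h
    exact h
  have hprod : P * Matrix.fromBlocks 1 Q.toBlocks₁₂ 0 Q.toBlocks₂₂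
      = Matrix.fromBlocks P.toBlocks₁₁ 0 P.toBlocks₂₁ 1 := by
    conv_lhs => rw [← Matrix.fromBlocks_toBlocks P]
    rw [Matrix.fromBlocks_multiply]
    rw [h12, h22]
    simp
  -- determinant of the block identity
  have hdet1 : P.det * Q.toBlocks₂₂.det = P.toBlocks₁₁.det := by
    have := congrArg Matrix.det hprod
    rw [Matrix.det_mul, Matrix.det_fromBlocks_zero₂₁, Matrix.det_fromBlocks_zero₁₂] at this
    simpa using this
  -- determinant of P
  set σ : Equiv.Perm (Fin k ⊕ Fin l) := eA.trans eB.symm with hσ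
  have hPsub : P = ((qM (n+1)).submatrix eB eB).submatrix σ id := by
    have h1 : (⇑eB ∘ ⇑σ) = ⇑eA := by
      funext x
      simp [hσ, Equiv.trans_apply, Equiv.apply_symm_apply]
    rw [Matrix.submatrix_submatrix, h1, Function.comp_id, hPdef]
  have hdetP : P.det = (Equiv.Perm.sign σ : ℤ) * 1 := by
    rw [hPsub, Matrix.det_permute, Matrix.det_submatrix_equiv_self, det_qM]
  -- sign of σ
  have hsign := sign_finSumEquiv (n := n) ((∑ x ∈ A, (x:ℕ)) + (∑ x ∈ B, (x:ℕ)))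
    A B hA hB hAc hBc rfl
  rw [← heA, ← heB, ← hσ] at hsign
  -- LHS matrix is the 11-block of P
  have hLHS : (Matrix.of fun i j : Fin k =>
      qChoose (B.orderEmbOfFin hB j) (A.orderEmbOfFin hA i)) = P.toBlocks₁₁ := by
    ext i j
    simp only [Matrix.toBlocks₁₁, Matrix.of_apply, hPdef, Matrix.submatrix_apply]
    rw [heA, heB]
    rfl
  -- RHS matrix R and the 22-block of Q
  set R : Matrix (Fin l) (Fin l) (Polynomial ℤ) := Matrix.of fun i j : Fin l =>
      X ^ (Nat.choose ((Aᶜ.orderEmbOfFin hAc i : ℕ) - (Bᶜ.orderEmbOfFin hBc j : ℕ)) 2) *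
        qChoose (Aᶜ.orderEmbOfFin hAc i) (Bᶜ.orderEmbOfFin hBc j) with hRdef
  have hQ22 : Q.toBlocks₂₂ =
      Matrix.diagonal (fun i : Fin l => ((-1:Polynomial ℤ)) ^ ((Bᶜ.orderEmbOfFin hBc i : ℕ)))
        * R.transpose *
      Matrix.diagonal (fun j : Fin l => ((-1:Polynomial ℤ)) ^ ((Aᶜ.orderEmbOfFin hAc j : ℕ))) := by
    ext i j
    rw [Matrix.mul_diagonal, Matrix.diagonal_mul]
    simp only [Matrix.toBlocks₂₂, Matrix.of_apply, hQdef, Matrix.submatrix_apply,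
      Matrix.transpose_apply, hRdef]
    rw [heA, heB, finSumEquiv_inr, finSumEquiv_inr]
    simp only [qN, Matrix.of_apply]
    rw [pow_add]
    ring
  have hdetQ22 : Q.toBlocks₂₂.det =
      ((-1:Polynomial ℤ)) ^ (∑ x ∈ Bᶜ, (x:ℕ)) * ((-1:Polynomial ℤ)) ^ (∑ x ∈ Aᶜ, (x:ℕ))
        * R.det := by
    rw [hQ22, Matrix.det_mul, Matrix.det_mul, Matrix.det_diagonal, Matrix.det_diagonal,
      Matrix.det_transpose]
    rw [Finset.prod_pow_eq_pow_sum, Finset.prod_pow_eq_pow_sum]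
    rw [sum_orderEmbOfFin_eq Bᶜ hBc (fun x => (x:ℕ)),
      sum_orderEmbOfFin_eq Aᶜ hAc (fun x => (x:ℕ))]
    ring
  -- put it together
  rw [hLHS, ← hdet1, hdetP, hdetQ22]
  have hTA : (∑ x ∈ A, (x:ℕ)) + (∑ x ∈ Aᶜ, (x:ℕ)) = ∑ x : Fin (n+1), (x:ℕ) :=
    Finset.sum_add_sum_compl A _
  have hTB : (∑ x ∈ B, (x:ℕ)) + (∑ x ∈ Bᶜ, (x:ℕ)) = ∑ x : Fin (n+1), (x:ℕ) :=
    Finset.sum_add_sum_compl B _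
  have hcast : ((Equiv.Perm.sign σ : ℤ) : Polynomial ℤ)
      = ((-1:Polynomial ℤ)) ^ ((∑ x ∈ A, (x:ℕ)) + (∑ x ∈ B, (x:ℕ))) := by
    rw [hsign]
    push_cast
    ring
  rw [hcast, mul_one]
  rw [← mul_assoc, ← mul_assoc, ← pow_add, ← pow_add]
  have heven : Even ((∑ x ∈ A, (x:ℕ)) + (∑ x ∈ B, (x:ℕ)) + (∑ x ∈ Bᶜ, (x:ℕ))
      + (∑ x ∈ Aᶜ, (x:ℕ))) := by
    refine ⟨∑ x : Fin (n+1), (x:ℕ), by omega⟩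
  rw [Even.neg_one_pow heven, one_mul]
end

section
/- Let n be a nonnegative integer, let A and B be subsets of {0,1,...,n} of equal size, with complements A^c and B^c. Then det(h_{b-a}(x_1, x_2, ..., x_{a+1}))_{a ∈ A, b ∈ B} = det(e_{a'-b'}(x_1, x_2, ..., x_{a'}))_{a' ∈ A^c, b' ∈ B^c}, as polynomials in the variables x_1, ..., x_n. -/
open MvPolynomial

/-- `hRange S d` is the complete homogeneous symmetric polynomial of integer
degree `d` in the variables `x_j` for `j ∈ S`; it is `0` for `d < 0`, `1` for
`d = 0`, and `0` for `d > 0` over an empty set of variables. -/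
noncomputable def hRange (S : Finset ℕ) (d : ℤ) : MvPolynomial ℕ ℤ :=
  if 0 ≤ d then ∑ m ∈ S.sym d.toNat, ((m : Multiset ℕ).map X).prod else 0

/-- `eRange S d` is the elementary symmetric polynomial of integer degree `d`
in the variables `x_j` for `j ∈ S`; it is `0` for `d < 0`, `1` for `d = 0`,
and `0` for `d > |S|`. -/
noncomputable def eRange (S : Finset ℕ) (d : ℤ) : MvPolynomial ℕ ℤ :=
  if 0 ≤ d then ∑ T ∈ S.powersetCard d.toNat, ∏ i ∈ T, X i else 0

open Finset Equiv

noncomputable def hN (S : Finset ℕ) (d : ℕ) : MvPolynomial ℕ ℤ :=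
  ∑ m ∈ S.sym d, ((m : Multiset ℕ).map X).prod

noncomputable def eN (S : Finset ℕ) (d : ℕ) : MvPolynomial ℕ ℤ :=
  ∑ T ∈ S.powersetCard d, ∏ i ∈ T, X i

lemma hN_zero (S : Finset ℕ) : hN S 0 = 1 := by
  rw [hN, Finset.sym_zero, Finset.sum_singleton]
  rfl

lemma eN_zero (S : Finset ℕ) : eN S 0 = 1 := by
  simp [eN]

lemma hN_empty (d : ℕ) : hN ∅ (d + 1) = 0 := by
  simp [hN]

lemma eN_of_card_lt {S : Finset ℕ} {d : ℕ} (h : S.card < d) : eN S d = 0 := by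
  rw [eN, Finset.powersetCard_eq_empty.2 h, Finset.sum_empty]

lemma eN_insert {y : ℕ} {S : Finset ℕ} (hy : y ∉ S) (d : ℕ) :
    eN (insert y S) (d + 1) = eN S (d + 1) + X y * eN S d := by
  rw [eN, Finset.powersetCard_succ_insert hy, Finset.sum_union, eN, eN, Finset.mul_sum,
    Finset.sum_image]
  · congr 1
    refine Finset.sum_congr rfl fun T hT => ?_
    rw [Finset.prod_insert fun hyT => hy ((Finset.mem_powersetCard.1 hT).1 hyT)]
  · intro T hT U hU hTU
    have hyT : y ∉ T := fun h => hy ((Finset.mem_powersetCard.1 hT).1 h)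
    have hyU : y ∉ U := fun h => hy ((Finset.mem_powersetCard.1 hU).1 h)
    ext a
    constructor
    · intro ha
      have : a ∈ insert y U := hTU ▸ Finset.mem_insert_of_mem ha
      rcases Finset.mem_insert.1 this with rfl | h
      · exact absurd ha hyT
      · exact h
    · intro ha
      have : a ∈ insert y T := hTU ▸ Finset.mem_insert_of_mem ha
      rcases Finset.mem_insert.1 this with rfl | h
      · exact absurd ha hyU
      · exact h
  · rw [Finset.disjoint_left]
    intro T hT hT2
    obtain ⟨U, hU, rfl⟩ := Finset.mem_image.1 hT2
    exact hy ((Finset.mem_powersetCard.1 hT).1 (Finset.mem_insert_self y U))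

lemma hN_insert {y : ℕ} {S : Finset ℕ} (hy : y ∉ S) (d : ℕ) :
    hN (insert y S) (d + 1) = hN S (d + 1) + X y * hN (insert y S) d := by
  classical
  rw [hN]
  rw [← Finset.sum_filter_add_sum_filter_not ((insert y S).sym (d+1)) (fun m => y ∈ m)]
  rw [add_comm]
  congr 1
  · -- multisets not containing y
    apply Finset.sum_congr
    · ext m
      simp only [Finset.mem_filter, Finset.mem_sym_iff, Finset.mem_insert]
      constructor
      · rintro ⟨h1, h2⟩ a ha
        rcases h1 a ha with rfl | h
        · exact absurd ha h2
        · exact h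
      · intro h
        exact ⟨fun a ha => Or.inr (h a ha), fun hy' => hy (h y hy')⟩
    · intro m _; rfl
  · -- multisets containing y: bijection with (insert y S).sym d via erase/cons
    rw [hN, Finset.mul_sum]
    apply Finset.sum_nbij' (fun m => dite (y ∈ m) (fun h => m.erase y h) (fun _ => Sym.replicate d y))
      (fun m => y ::ₛ m)
    · intro m hm
      simp only [Finset.mem_filter] at hm
      rw [dif_pos hm.2, Finset.mem_sym_iff]
      intro a ha
      refine Finset.mem_sym_iff.1 hm.1 a ?_
      have : a ∈ ((m.erase y hm.2 : Sym ℕ d) : Multiset ℕ) := ha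
      rw [Sym.coe_erase] at this
      exact Multiset.mem_of_mem_erase this
    · intro m hm
      simp only [Finset.mem_filter, Finset.mem_sym_iff]
      constructor
      · intro a ha
        rcases Sym.mem_cons.1 ha with rfl | h
        · exact Finset.mem_insert_self _ _
        · exact Finset.mem_sym_iff.1 hm a h
      · exact Sym.mem_cons_self _ _
    · intro m hm
      simp only [Finset.mem_filter] at hm
      rw [dif_pos hm.2]
      exact Sym.cons_erase hm.2
    · intro m hm
      rw [dif_pos (Sym.mem_cons_self y m)]
      exact Sym.erase_cons_head m y
    · intro m hm
      simp only [Finset.mem_filter] at hm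
      rw [dif_pos hm.2]
      have h2 : y ∈ (m : Multiset ℕ) := hm.2
      have : ((m.erase y hm.2 : Sym ℕ d) : Multiset ℕ) = (m : Multiset ℕ).erase y :=
        Sym.coe_erase hm.2
      rw [this]
      conv_lhs => rw [← Multiset.cons_erase h2]
      rw [Multiset.map_cons, Multiset.prod_cons]

-- power series
noncomputable def Hser (S : Finset ℕ) : PowerSeries (MvPolynomial ℕ ℤ) := PowerSeries.mk (hN S)
noncomputable def Eser (S : Finset ℕ) : PowerSeries (MvPolynomial ℕ ℤ) :=
  ∏ i ∈ S, (1 - PowerSeries.C (X i) * PowerSeries.X)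

lemma coeff_lin_mul (x : MvPolynomial ℕ ℤ) (f : PowerSeries (MvPolynomial ℕ ℤ)) (d : ℕ) :
    (PowerSeries.coeff (d+1)) ((1 - PowerSeries.C x * PowerSeries.X) * f) =
      (PowerSeries.coeff (d+1)) f - x * (PowerSeries.coeff d) f := by
  rw [sub_mul, one_mul, map_sub, mul_assoc, PowerSeries.coeff_C_mul,
    PowerSeries.coeff_succ_X_mul]

lemma coeff_lin_mul_zero (x : MvPolynomial ℕ ℤ) (f : PowerSeries (MvPolynomial ℕ ℤ)) :
    (PowerSeries.coeff 0) ((1 - PowerSeries.C x * PowerSeries.X) * f) =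
      (PowerSeries.coeff 0) f := by
  rw [sub_mul, one_mul, map_sub, mul_assoc, PowerSeries.coeff_zero_eq_constantCoeff, map_mul]
  simp [PowerSeries.constantCoeff_X]

lemma coeff_Eser (S : Finset ℕ) (d : ℕ) :
    (PowerSeries.coeff d) (Eser S) = (-1)^d * eN S d := by
  classical
  induction S using Finset.induction generalizing d with
  | empty =>
    cases d with
    | zero => simp [Eser, eN_zero]
    | succ d => simp [Eser, eN_of_card_lt (by simp : (∅ : Finset ℕ).card < d + 1)]
  | @insert y S hy ih =>
    rw [Eser, Finset.prod_insert hy, ← Eser]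
    cases d with
    | zero => rw [coeff_lin_mul_zero, ih, eN_zero, eN_zero]
    | succ d =>
      rw [coeff_lin_mul, ih, ih, eN_insert hy, pow_succ]
      ring

lemma key_H (y : ℕ) (S : Finset ℕ) (hy : y ∉ S) :
    (1 - PowerSeries.C (X y) * PowerSeries.X) * Hser (insert y S) = Hser S := by
  ext d
  cases d with
  | zero =>
    rw [coeff_lin_mul_zero]
    simp [Hser, hN_zero]
  | succ d =>
    rw [coeff_lin_mul]
    simp only [Hser, PowerSeries.coeff_mk]
    rw [hN_insert hy]
    ring

lemma E_mul_H (S : Finset ℕ) : Eser S * Hser S = 1 := by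
  classical
  induction S using Finset.induction with
  | empty =>
    have : Hser ∅ = 1 := by
      ext d
      cases d with
      | zero => simp [Hser, hN_zero]
      | succ d => simp [Hser, hN_empty]
    rw [this, Eser, Finset.prod_empty, one_mul]
  | @insert y S hy ih =>
    rw [Eser, Finset.prod_insert hy, ← Eser, mul_assoc, mul_left_comm, key_H y S hy, ih]

theorem conv {S T : Finset ℕ} (hST : S ⊆ T) (m : ℕ) :
    ∑ ij ∈ Finset.HasAntidiagonal.antidiagonal m, (-1)^ij.1 * eN T ij.1 * hN S ij.2
      = (-1)^m * eN (T \ S) m := by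
  classical
  have hE : Eser T = Eser (T \ S) * Eser S := by
    rw [Eser, Eser, Eser, Finset.prod_sdiff hST]
  have : Eser T * Hser S = Eser (T \ S) := by
    rw [hE, mul_assoc, E_mul_H, mul_one]
  calc ∑ ij ∈ Finset.HasAntidiagonal.antidiagonal m, (-1)^ij.1 * eN T ij.1 * hN S ij.2
      = ∑ ij ∈ Finset.HasAntidiagonal.antidiagonal m,
          (PowerSeries.coeff ij.1) (Eser T) * (PowerSeries.coeff ij.2) (Hser S) := by
        refine Finset.sum_congr rfl fun ij _ => ?_
        rw [coeff_Eser]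
        simp only [Hser, PowerSeries.coeff_mk]
    _ = (PowerSeries.coeff m) (Eser T * Hser S) := (PowerSeries.coeff_mul m _ _).symm
    _ = (PowerSeries.coeff m) (Eser (T \ S)) := by rw [this]
    _ = (-1)^m * eN (T \ S) m := coeff_Eser _ _

lemma hRange_eq (S : Finset ℕ) (d : ℤ) (hd : 0 ≤ d) : hRange S d = hN S d.toNat := if_pos hd
lemma eRange_eq (S : Finset ℕ) (d : ℤ) (hd : 0 ≤ d) : eRange S d = eN S d.toNat := if_pos hd
lemma hRange_neg (S : Finset ℕ) (d : ℤ) (hd : d < 0) : hRange S d = 0 := if_neg (by omega)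
lemma eRange_neg (S : Finset ℕ) (d : ℤ) (hd : d < 0) : eRange S d = 0 := if_neg (by omega)

/-- entry function over ℕ indices -/
noncomputable def entryNP (a b p : ℕ) : MvPolynomial ℕ ℤ :=
  hRange (Finset.Icc 1 (a + 1)) ((p : ℤ) - (a : ℤ)) *
    ((-1)^(p + b) * eRange (Finset.Icc 1 b) ((b : ℤ) - (p : ℤ)))

noncomputable def Nmat (n : ℕ) : Matrix (Fin (n+1)) (Fin (n+1)) (MvPolynomial ℕ ℤ) :=
  fun a b => hRange (Finset.Icc 1 ((a : ℕ) + 1)) (((b : ℕ) : ℤ) - ((a : ℕ) : ℤ))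

noncomputable def Pmat (n : ℕ) : Matrix (Fin (n+1)) (Fin (n+1)) (MvPolynomial ℕ ℤ) :=
  fun p b => (-1)^((p : ℕ) + (b : ℕ)) * eRange (Finset.Icc 1 (b : ℕ)) (((b : ℕ) : ℤ) - ((p : ℕ) : ℤ))

variable {n : ℕ}

lemma detN : (Nmat n).det = 1 := by
  rw [Matrix.det_of_upperTriangular]
  · rw [Finset.prod_congr rfl fun i _ => ?_, Finset.prod_const_one]
    show hRange _ _ = 1
    rw [sub_self, hRange_eq _ _ le_rfl]
    exact hN_zero _
  · intro i j hij
    show hRange _ _ = 0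
    apply hRange_neg
    have : (j : ℕ) < (i : ℕ) := hij
    omega

lemma entryNP_sum (a b : ℕ) (hb : b ≤ n) (hab : a < b) :
    ∑ p ∈ Finset.range (n+1), entryNP a b p
      = (-1)^(b - a) * eN (Finset.Icc 1 b \ Finset.Icc 1 (a+1)) (b - a) := by
  rw [← Finset.sum_subset (show Finset.Icc a b ⊆ Finset.range (n+1) from by
      intro x hx; simp only [Finset.mem_Icc] at hx; simp only [Finset.mem_range]; omega)
    (fun p _ hp => ?_)]
  · rw [show ∑ p ∈ Finset.Icc a b, entryNP a b p
        = ∑ ij ∈ Finset.HasAntidiagonal.antidiagonal (b - a),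
            (-1)^ij.1 * eN (Finset.Icc 1 b) ij.1 * hN (Finset.Icc 1 (a+1)) ij.2 from ?_]
    · exact conv (Finset.Icc_subset_Icc_right (by omega)) (b - a)
    · refine Finset.sum_nbij' (fun p => (b - p, p - a)) (fun ij => a + ij.2) ?_ ?_ ?_ ?_ ?_
      · intro p hp
        simp only [Finset.mem_Icc] at hp
        simp only [Finset.HasAntidiagonal.mem_antidiagonal]
        omega
      · intro ij hij
        simp only [Finset.HasAntidiagonal.mem_antidiagonal] at hij
        simp only [Finset.mem_Icc]
        omega
      · intro p hp
        simp only [Finset.mem_Icc] at hp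
        dsimp only
        omega
      · intro ij hij
        simp only [Finset.HasAntidiagonal.mem_antidiagonal] at hij
        simp only [Prod.ext_iff]
        omega
      · intro p hp
        simp only [Finset.mem_Icc] at hp
        rw [entryNP, hRange_eq _ _ (by omega), eRange_eq _ _ (by omega)]
        rw [show ((p : ℤ) - a).toNat = p - a from by omega,
          show ((b : ℤ) - p).toNat = b - p from by omega]
        rw [show (-1 : MvPolynomial ℕ ℤ)^(p + b) = (-1)^(b - p) from by
          rw [show p + b = (b - p) + 2 * p from by omega, pow_add, pow_mul]
          simp]
        ring
  · rw [Finset.mem_Icc, not_and_or] at hp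
    rcases hp with hp | hp
    · rw [entryNP, hRange_neg _ _ (by omega), zero_mul]
    · rw [entryNP, eRange_neg _ _ (by omega), mul_zero, mul_zero]

lemma NP_eq_one : Nmat n * Pmat n = 1 := by
  refine Matrix.ext fun a b => ?_
  rw [Matrix.mul_apply]
  have hsum : ∀ p : Fin (n+1), Nmat n a p * Pmat n p b = entryNP (a:ℕ) (b:ℕ) (p:ℕ) := by
    intro p; rfl
  rw [Finset.sum_congr rfl fun p _ => hsum p]
  rw [show ∑ p : Fin (n+1), entryNP (a:ℕ) (b:ℕ) (p:ℕ)
      = ∑ p ∈ Finset.range (n+1), entryNP (a:ℕ) (b:ℕ) p from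
    Fin.sum_univ_eq_sum_range (fun p => entryNP (a:ℕ) (b:ℕ) p) (n+1)]
  by_cases hd : a = b
  · subst hd
    rw [Matrix.one_apply_eq]
    rw [Finset.sum_eq_single (a : ℕ)]
    · rw [entryNP, sub_self, hRange_eq _ _ le_rfl, eRange_eq _ _ le_rfl]
      rw [show ((0:ℤ)).toNat = 0 from rfl, hN_zero, eN_zero]
      rw [show (-1 : MvPolynomial ℕ ℤ)^((a:ℕ) + (a:ℕ)) = 1 from by
        rw [← two_mul, pow_mul]; simp]
      ring
    · intro p _ hpa
      by_cases hpa' : p < (a : ℕ)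
      · rw [entryNP, hRange_neg _ _ (by omega), zero_mul]
      · rw [entryNP, eRange_neg _ _ (by omega), mul_zero, mul_zero]
    · intro h
      exact absurd (Finset.mem_range.2 (by omega)) h
  by_cases hab : (a : ℕ) < (b : ℕ)
  · rw [entryNP_sum _ _ (by omega) hab]
    · rw [eN_of_card_lt (show (Finset.Icc 1 (b:ℕ) \ Finset.Icc 1 ((a:ℕ)+1)).card < (b:ℕ) - (a:ℕ) from by
        rw [show Finset.Icc 1 (b:ℕ) \ Finset.Icc 1 ((a:ℕ)+1) = Finset.Icc ((a:ℕ)+2) (b:ℕ) from by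
          ext x
          simp only [Finset.mem_sdiff, Finset.mem_Icc]
          omega]
        rw [Nat.card_Icc]
        omega)]
      rw [mul_zero, Matrix.one_apply_ne (fun hc => hd hc)]
  · push_neg at hab
    have hne : a ≠ b := hd
    rw [Matrix.one_apply_ne hne]
    apply Finset.sum_eq_zero
    intro p hp
    simp only [Finset.mem_range] at hp
    by_cases hpa : p < (a : ℕ)
    · rw [entryNP, hRange_neg _ _ (by omega), zero_mul]
    · rw [entryNP, eRange_neg _ _ (by omega), mul_zero, mul_zero]

theorem block_jacobi {R : Type*} [CommRing R] {k l : ℕ}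
    {Q P : Matrix (Fin k ⊕ Fin l) (Fin k ⊕ Fin l) R} (hQP : Q * P = 1) :
    (Q.toBlocks₁₁).det = Q.det * (P.toBlocks₂₂).det := by
  have h12 : Q.toBlocks₁₁ * P.toBlocks₁₂ + Q.toBlocks₁₂ * P.toBlocks₂₂ = 0 := by
    have := congrArg Matrix.toBlocks₁₂ hQP
    rw [← Matrix.fromBlocks_toBlocks Q, ← Matrix.fromBlocks_toBlocks P,
      Matrix.fromBlocks_multiply] at this
    simp [Matrix.toBlocks₁₂, ← Matrix.fromBlocks_one] at this
    exact this
  have h22 : Q.toBlocks₂₁ * P.toBlocks₁₂ + Q.toBlocks₂₂ * P.toBlocks₂₂ = 1 := by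
    have := congrArg Matrix.toBlocks₂₂ hQP
    rw [← Matrix.fromBlocks_toBlocks Q, ← Matrix.fromBlocks_toBlocks P,
      Matrix.fromBlocks_multiply] at this
    simp [Matrix.toBlocks₂₂, ← Matrix.fromBlocks_one] at this
    exact this
  have key : Q * Matrix.fromBlocks 1 P.toBlocks₁₂ 0 P.toBlocks₂₂
      = Matrix.fromBlocks Q.toBlocks₁₁ 0 Q.toBlocks₂₁ 1 := by
    conv_lhs => rw [← Matrix.fromBlocks_toBlocks Q]
    rw [Matrix.fromBlocks_multiply]
    rw [Matrix.mul_one, Matrix.mul_one, Matrix.mul_zero, Matrix.mul_zero, add_zero, add_zero,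
      h12, h22]
  have := congrArg Matrix.det key
  rw [Matrix.det_mul, Matrix.det_fromBlocks_zero₂₁, Matrix.det_fromBlocks_zero₁₂] at this
  simpa using this.symm

variable {N k l : ℕ}

def splitFun (A : Finset (Fin N)) (hA : A.card = k) (hAc : Aᶜ.card = l) :
    Fin k ⊕ Fin l → Fin N :=
  Sum.elim (A.orderEmbOfFin hA) (Aᶜ.orderEmbOfFin hAc)

lemma splitFun_bijective (A : Finset (Fin N)) (hA : A.card = k) (hAc : Aᶜ.card = l) :
    Function.Bijective (splitFun A hA hAc) := by
  rw [Fintype.bijective_iff_injective_and_card]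
  constructor
  · intro x y hxy
    match x, y with
    | Sum.inl i, Sum.inl j =>
      exact congrArg Sum.inl ((A.orderEmbOfFin hA).injective hxy)
    | Sum.inl i, Sum.inr j =>
      exfalso
      simp only [splitFun, Sum.elim_inl, Sum.elim_inr] at hxy
      have h1 := A.orderEmbOfFin_mem hA i
      rw [hxy] at h1
      exact Finset.mem_compl.1 (Aᶜ.orderEmbOfFin_mem hAc j) h1
    | Sum.inr i, Sum.inl j =>
      exfalso
      simp only [splitFun, Sum.elim_inl, Sum.elim_inr] at hxy
      have h1 := A.orderEmbOfFin_mem hA j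
      rw [← hxy] at h1
      exact Finset.mem_compl.1 (Aᶜ.orderEmbOfFin_mem hAc i) h1
    | Sum.inr i, Sum.inr j =>
      exact congrArg Sum.inr ((Aᶜ.orderEmbOfFin hAc).injective hxy)
  · simp only [Fintype.card_sum, Fintype.card_fin]
    have := Finset.card_add_card_compl A
    rw [hA, hAc] at this
    simpa using this

noncomputable def splitEquiv (A : Finset (Fin N)) (hA : A.card = k) (hAc : Aᶜ.card = l) :
    (Fin k ⊕ Fin l) ≃ Fin N :=
  Equiv.ofBijective _ (splitFun_bijective A hA hAc)

lemma splitEquiv_apply (A : Finset (Fin N)) (hA : A.card = k) (hAc : Aᶜ.card = l) (z) :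
    splitEquiv A hA hAc z = splitFun A hA hAc z := rfl

/-- The complement of the lowered set. -/
lemma compl_lower {A : Finset (Fin N)} {a c : Fin N} (ha : a ∈ A) (hc : c ∉ A)
    (hca : (c:ℕ) + 1 = (a:ℕ)) :
    (insert c (A.erase a))ᶜ = insert a (Aᶜ.erase c) := by
  have hne : c ≠ a := fun h => by rw [h] at hca; omega
  ext x
  simp only [Finset.mem_compl, Finset.mem_insert, Finset.mem_erase]
  have h2 : ¬(x = a ∧ x = c) := fun ⟨h1', h2'⟩ => hne (by rw [← h2', ← h1'])
  have h3 : x = a → x ∈ A := fun h => h ▸ ha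
  have h4 : x = c → x ∉ A := fun h => h ▸ hc
  tauto


lemma swap_mono_lo {c a : Fin N} (hca : (c:ℕ) + 1 = (a:ℕ)) {W : Finset (Fin N)}
    (hcW : c ∈ W) (haW : a ∉ W) {w : ℕ} (hW : W.card = w) :
    StrictMono (fun i : Fin w => Equiv.swap c a (W.orderEmbOfFin hW i)) := by
  intro i j hij
  dsimp only
  have huv := (W.orderEmbOfFin hW).strictMono hij
  have hu : W.orderEmbOfFin hW i ∈ W := W.orderEmbOfFin_mem hW i
  have hv : W.orderEmbOfFin hW j ∈ W := W.orderEmbOfFin_mem hW j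
  generalize hu' : W.orderEmbOfFin hW i = u at *
  generalize hv' : W.orderEmbOfFin hW j = v at *
  have hua : u ≠ a := fun h => haW (h ▸ hu)
  have hva : v ≠ a := fun h => haW (h ▸ hv)
  rcases eq_or_ne u c with rfl | huc
  · have hvc : v ≠ u := ne_of_gt huv
    rw [Equiv.swap_apply_left, Equiv.swap_apply_of_ne_of_ne hvc hva]
    rw [Fin.lt_def] at huv ⊢
    have h1 : (v:ℕ) ≠ (a:ℕ) := fun h => hva (Fin.ext h)
    omega
  · rcases eq_or_ne v c with rfl | hvc
    · rw [Equiv.swap_apply_left, Equiv.swap_apply_of_ne_of_ne huc hua]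
      rw [Fin.lt_def] at huv ⊢
      omega
    · rw [Equiv.swap_apply_of_ne_of_ne huc hua, Equiv.swap_apply_of_ne_of_ne hvc hva]
      exact huv

lemma swap_mono_hi {c a : Fin N} (hca : (c:ℕ) + 1 = (a:ℕ)) {W : Finset (Fin N)}
    (haW : a ∈ W) (hcW : c ∉ W) {w : ℕ} (hW : W.card = w) :
    StrictMono (fun i : Fin w => Equiv.swap c a (W.orderEmbOfFin hW i)) := by
  intro i j hij
  dsimp only
  have huv := (W.orderEmbOfFin hW).strictMono hij
  have hu : W.orderEmbOfFin hW i ∈ W := W.orderEmbOfFin_mem hW i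
  have hv : W.orderEmbOfFin hW j ∈ W := W.orderEmbOfFin_mem hW j
  generalize hu' : W.orderEmbOfFin hW i = u at *
  generalize hv' : W.orderEmbOfFin hW j = v at *
  have huc : u ≠ c := fun h => hcW (h ▸ hu)
  have hvc : v ≠ c := fun h => hcW (h ▸ hv)
  rcases eq_or_ne u a with rfl | hua
  · have hva : v ≠ u := ne_of_gt huv
    rw [Equiv.swap_apply_right, Equiv.swap_apply_of_ne_of_ne hvc hva]
    rw [Fin.lt_def] at huv ⊢
    omega
  · rcases eq_or_ne v a with rfl | hva
    · rw [Equiv.swap_apply_right, Equiv.swap_apply_of_ne_of_ne huc hua]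
      rw [Fin.lt_def] at huv ⊢
      have h1 : (u:ℕ) ≠ (c:ℕ) := fun h => huc (Fin.ext h)
      omega
    · rw [Equiv.swap_apply_of_ne_of_ne huc hua, Equiv.swap_apply_of_ne_of_ne hvc hva]
      exact huv

/-- key swap lemma -/
lemma splitFun_lower {A : Finset (Fin N)} (hA : A.card = k) (hAc : Aᶜ.card = l)
    {a c : Fin N} (ha : a ∈ A) (hc : c ∉ A) (hca : (c:ℕ) + 1 = (a:ℕ))
    (hA' : (insert c (A.erase a)).card = k) (hAc' : (insert c (A.erase a))ᶜ.card = l) :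
    ∀ z, splitFun A hA hAc z
      = Equiv.swap c a (splitFun (insert c (A.erase a)) hA' hAc' z) := by
  have hne : c ≠ a := fun h => by rw [h] at hca; omega
  have haA' : a ∉ insert c (A.erase a) := by
    simp only [Finset.mem_insert, Finset.mem_erase]
    push_neg
    exact ⟨hne.symm, fun h _ => (h rfl).elim⟩
  have hcA' : c ∈ insert c (A.erase a) := Finset.mem_insert_self _ _
  have hmemA' : ∀ x, x ∈ insert c (A.erase a) → x = c ∨ (x ∈ A ∧ x ≠ a) := by
    intro x hx
    rcases Finset.mem_insert.1 hx with h | h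
    · exact Or.inl h
    · exact Or.inr ⟨(Finset.mem_erase.1 h).2, (Finset.mem_erase.1 h).1⟩
  have hcompl := compl_lower ha hc hca
  -- inl part
  have mem1 : ∀ i : Fin k,
      (fun i => Equiv.swap c a ((insert c (A.erase a)).orderEmbOfFin hA' i)) i ∈ A := by
    intro i
    dsimp only
    rcases hmemA' _ ((insert c (A.erase a)).orderEmbOfFin_mem hA' i) with h | h
    · rw [h, Equiv.swap_apply_left]; exact ha
    · rw [Equiv.swap_apply_of_ne_of_ne (fun h' => hc (by rw [← h']; exact h.1)) h.2]
      exact h.1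
  have hinl := Finset.orderEmbOfFin_unique hA mem1 (swap_mono_lo hca hcA' haA' hA')
  -- inr part
  have haAc : a ∉ Aᶜ := fun h => (Finset.mem_compl.1 h) ha
  have hcAc : c ∈ Aᶜ := Finset.mem_compl.2 hc
  have hcA'c : c ∉ (insert c (A.erase a))ᶜ := fun h => (Finset.mem_compl.1 h) hcA'
  have haA'c : a ∈ (insert c (A.erase a))ᶜ := Finset.mem_compl.2 haA'
  have hmemA'c : ∀ x, x ∈ (insert c (A.erase a))ᶜ → x = a ∨ (x ∈ Aᶜ ∧ x ≠ c) := by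
    intro x hx
    rw [hcompl] at hx
    rcases Finset.mem_insert.1 hx with h | h
    · exact Or.inl h
    · exact Or.inr ⟨(Finset.mem_erase.1 h).2, (Finset.mem_erase.1 h).1⟩
  have mem2 : ∀ j : Fin l,
      (fun j => Equiv.swap c a ((insert c (A.erase a))ᶜ.orderEmbOfFin hAc' j)) j ∈ Aᶜ := by
    intro j
    dsimp only
    rcases hmemA'c _ ((insert c (A.erase a))ᶜ.orderEmbOfFin_mem hAc' j) with h | h
    · rw [h, Equiv.swap_apply_right]; exact hcAc
    · rw [Equiv.swap_apply_of_ne_of_ne h.2 (fun h' => haAc (by rw [← h']; exact h.1))]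
      exact h.1
  have hinr := Finset.orderEmbOfFin_unique hAc mem2 (swap_mono_hi hca haA'c hcA'c hAc')
  intro z
  match z with
  | Sum.inl i => exact (congrFun hinl i).symm
  | Sum.inr j => exact (congrFun hinr j).symm

/-- two downward closed subsets with the same cardinality are equal -/
lemma downward_closed_eq {A B : Finset (Fin N)}
    (hA : ∀ x ∈ A, ∀ y : Fin N, y ≤ x → y ∈ A)
    (hB : ∀ x ∈ B, ∀ y : Fin N, y ≤ x → y ∈ B)
    (hcard : A.card = B.card) : A = B := by
  by_contra hne
  -- wlog there is x ∈ A \ B or x ∈ B \ A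
  have key : ∀ (C D : Finset (Fin N)), (∀ x ∈ C, ∀ y : Fin N, y ≤ x → y ∈ C) →
      (∀ x ∈ D, ∀ y : Fin N, y ≤ x → y ∈ D) → C.card = D.card →
      ∀ x, x ∈ C → x ∉ D → False := by
    intro C D hC hD hcd x hxC hxD
    have h1 : D ⊆ Finset.Iio x := by
      intro y hy
      rw [Finset.mem_Iio]
      by_contra hxy
      exact hxD (hD y hy x (le_of_not_gt hxy))
    have h2 : Finset.Iic x ⊆ C := fun y hy => hC x hxC y (Finset.mem_Iic.1 hy)
    have c1 := Finset.card_le_card h1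
    have c2 := Finset.card_le_card h2
    have hIio : (Finset.Iio x).card = (x:ℕ) := by simp
    have hIic : (Finset.Iic x).card = (x:ℕ) + 1 := by simp
    omega
  rcases Finset.not_subset.1 (fun hsub => hne (Finset.eq_of_subset_of_card_le hsub (le_of_eq hcard.symm))) with ⟨x, hxA, hxB⟩
  exact key A B hA hB hcard x hxA hxB

/-- if A has no lowering pair, it is downward closed -/
lemma no_pair_downward {A : Finset (Fin N)}
    (h : ¬ ∃ a ∈ A, ∃ c : Fin N, (c:ℕ) + 1 = (a:ℕ) ∧ c ∉ A) :
    ∀ x ∈ A, ∀ y : Fin N, y ≤ x → y ∈ A := by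
  push_neg at h
  intro x hx y hyx
  obtain ⟨d, hd⟩ : ∃ d, (y:ℕ) + d = (x:ℕ) := ⟨(x:ℕ) - (y:ℕ), by omega⟩
  clear hyx
  induction d generalizing x with
  | zero => rwa [show y = x from Fin.ext (by omega)]
  | succ d ih =>
    -- pred x ∈ A
    have hx0 : (x:ℕ) ≠ 0 := by omega
    have hcx : (⟨(x:ℕ)-1, by omega⟩ : Fin N) ∈ A := by
      by_contra hc
      exact hc (h x hx ⟨(x:ℕ)-1, by omega⟩ (by simp; omega))
    exact ih _ hcx (by simp; omega)

lemma card_lower {A : Finset (Fin N)} {a c : Fin N} (ha : a ∈ A) (hc : c ∉ A)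
    (hA : A.card = k) : (insert c (A.erase a)).card = k := by
  rw [Finset.card_insert_of_notMem (fun h => hc (Finset.mem_erase.1 h).2),
    Finset.card_erase_of_mem ha, hA]
  have h1 := Finset.card_pos.2 ⟨a, ha⟩
  rw [hA] at h1
  omega

lemma sum_lower {A : Finset (Fin N)} {a c : Fin N} (ha : a ∈ A) (hc : c ∉ A)
    (hca : (c:ℕ) + 1 = (a:ℕ)) :
    (∑ x ∈ insert c (A.erase a), (x:ℕ)) + 1 = ∑ x ∈ A, (x:ℕ) := by
  rw [Finset.sum_insert (fun h => hc (Finset.mem_erase.1 h).2)]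
  have e2 : (a:ℕ) + ∑ x ∈ A.erase a, (x:ℕ) = ∑ x ∈ A, (x:ℕ) :=
    Finset.add_sum_erase A (fun x : Fin N => (x:ℕ)) ha
  omega

lemma sign_splitEquiv (t : ℕ) : ∀ (A B : Finset (Fin N)) (hA : A.card = k)
    (hB : B.card = k) (hAc : Aᶜ.card = l) (hBc : Bᶜ.card = l),
    (∑ x ∈ A, (x:ℕ)) + (∑ x ∈ B, (x:ℕ)) ≤ t →
    Equiv.Perm.sign ((splitEquiv A hA hAc).trans (splitEquiv B hB hBc).symm)
      = (-1 : ℤˣ)^((∑ x ∈ A, (x:ℕ)) + (∑ x ∈ B, (x:ℕ))) := by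
  induction t with
  | zero =>
    intro A B hA hB hAc hBc ht
    -- sums are zero; show A = B via downward closedness (trivially no lowering pair)
    have hPA : ¬ ∃ a ∈ A, ∃ c : Fin N, (c:ℕ) + 1 = (a:ℕ) ∧ c ∉ A := by
      rintro ⟨a, ha, c, hca, -⟩
      have h9 : (a:ℕ) ≤ ∑ x ∈ A, (x:ℕ) := Finset.single_le_sum (f := fun x : Fin N => (x:ℕ))
        (fun _ _ => Nat.zero_le _) ha
      omega
    have hPB : ¬ ∃ a ∈ B, ∃ c : Fin N, (c:ℕ) + 1 = (a:ℕ) ∧ c ∉ B := by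
      rintro ⟨a, ha, c, hca, -⟩
      have h9 : (a:ℕ) ≤ ∑ x ∈ B, (x:ℕ) := Finset.single_le_sum (f := fun x : Fin N => (x:ℕ))
        (fun _ _ => Nat.zero_le _) ha
      omega
    have hAB : A = B := downward_closed_eq (no_pair_downward hPA) (no_pair_downward hPB)
      (hA.trans hB.symm)
    subst hAB
    have he : splitEquiv A hA hAc = splitEquiv A hB hBc := rfl
    rw [he, Equiv.self_trans_symm, Equiv.Perm.sign_refl]
    rw [show (∑ x ∈ A, (x:ℕ)) + (∑ x ∈ A, (x:ℕ)) = 2 * (∑ x ∈ A, (x:ℕ)) from by omega,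
      pow_mul, neg_one_sq, one_pow]
  | succ t ih =>
    intro A B hA hB hAc hBc ht
    by_cases hPA : ∃ a ∈ A, ∃ c : Fin N, (c:ℕ) + 1 = (a:ℕ) ∧ c ∉ A
    · obtain ⟨a, ha, c, hca, hc⟩ := hPA
      have hne : c ≠ a := fun h => by rw [h] at hca; omega
      have hA' := card_lower ha hc hA
      have hAc' : (insert c (A.erase a))ᶜ.card = l := by
        rw [Finset.card_compl, hA']
        rw [Finset.card_compl, hA] at hAc
        exact hAc
      have hsum := sum_lower ha hc hca
      have hEq : splitEquiv A hA hAc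
          = (splitEquiv (insert c (A.erase a)) hA' hAc').trans (Equiv.swap c a) :=
        Equiv.ext (splitFun_lower hA hAc ha hc hca hA' hAc')
      set eA' := splitEquiv (insert c (A.erase a)) hA' hAc'
      set eB := splitEquiv B hB hBc
      have hfact : (splitEquiv A hA hAc).trans eB.symm
          = (eA'.trans eB.symm).trans (eB.trans ((Equiv.swap c a).trans eB.symm)) := by
        rw [hEq]
        ext z
        simp [Equiv.trans_apply, Equiv.apply_symm_apply]
      rw [hfact]
      have hconj : Equiv.Perm.sign (eB.trans ((Equiv.swap c a).trans eB.symm)) = -1 := by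
        rw [← Equiv.trans_assoc]
        have h2 := Equiv.Perm.sign_symm_trans_trans (Equiv.swap c a) eB.symm
        rw [Equiv.symm_symm] at h2
        rw [h2, Equiv.Perm.sign_swap hne]
      have hmul : Equiv.Perm.sign ((eA'.trans eB.symm).trans
            (eB.trans ((Equiv.swap c a).trans eB.symm)))
          = Equiv.Perm.sign (eB.trans ((Equiv.swap c a).trans eB.symm))
            * Equiv.Perm.sign (eA'.trans eB.symm) := by
        rw [show (eA'.trans eB.symm).trans (eB.trans ((Equiv.swap c a).trans eB.symm))
            = (eB.trans ((Equiv.swap c a).trans eB.symm)) * (eA'.trans eB.symm) from rfl]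
        rw [map_mul]
      rw [hmul, hconj, ih _ _ hA' hB hAc' hBc (by omega)]
      rw [show (∑ x ∈ A, (x:ℕ)) + (∑ x ∈ B, (x:ℕ))
          = ((∑ x ∈ insert c (A.erase a), (x:ℕ)) + (∑ x ∈ B, (x:ℕ))) + 1 from by omega,
        pow_succ]
      exact mul_comm _ _
    · by_cases hPB : ∃ a ∈ B, ∃ c : Fin N, (c:ℕ) + 1 = (a:ℕ) ∧ c ∉ B
      · obtain ⟨a, ha, c, hca, hc⟩ := hPB
        have hne : c ≠ a := fun h => by rw [h] at hca; omega
        have hB' := card_lower ha hc hB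
        have hBc' : (insert c (B.erase a))ᶜ.card = l := by
          rw [Finset.card_compl, hB']
          rw [Finset.card_compl, hB] at hBc
          exact hBc
        have hsum := sum_lower ha hc hca
        have hEq : splitEquiv B hB hBc
            = (splitEquiv (insert c (B.erase a)) hB' hBc').trans (Equiv.swap c a) :=
          Equiv.ext (splitFun_lower hB hBc ha hc hca hB' hBc')
        set eB' := splitEquiv (insert c (B.erase a)) hB' hBc'
        set eA := splitEquiv A hA hAc
        have hfact : eA.trans (splitEquiv B hB hBc).symm
            = (eA.trans eB'.symm).trans (eB'.trans ((Equiv.swap c a).trans eB'.symm)) := by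
          rw [hEq]
          ext z
          simp [Equiv.trans_apply, Equiv.symm_apply_eq, Equiv.apply_symm_apply]
        rw [hfact]
        have hconj : Equiv.Perm.sign (eB'.trans ((Equiv.swap c a).trans eB'.symm)) = -1 := by
          rw [← Equiv.trans_assoc]
          have h2 := Equiv.Perm.sign_symm_trans_trans (Equiv.swap c a) eB'.symm
          rw [Equiv.symm_symm] at h2
          rw [h2, Equiv.Perm.sign_swap hne]
        have hmul : Equiv.Perm.sign ((eA.trans eB'.symm).trans
              (eB'.trans ((Equiv.swap c a).trans eB'.symm)))
            = Equiv.Perm.sign (eB'.trans ((Equiv.swap c a).trans eB'.symm))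
              * Equiv.Perm.sign (eA.trans eB'.symm) := by
          rw [show (eA.trans eB'.symm).trans (eB'.trans ((Equiv.swap c a).trans eB'.symm))
              = (eB'.trans ((Equiv.swap c a).trans eB'.symm)) * (eA.trans eB'.symm) from rfl]
          rw [map_mul]
        rw [hmul, hconj, ih _ _ hA hB' hAc hBc' (by omega)]
        rw [show (∑ x ∈ A, (x:ℕ)) + (∑ x ∈ B, (x:ℕ))
            = ((∑ x ∈ A, (x:ℕ)) + (∑ x ∈ insert c (B.erase a), (x:ℕ))) + 1 from by omega,
          pow_succ]
        exact mul_comm _ _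
      · have hAB : A = B := downward_closed_eq (no_pair_downward hPA) (no_pair_downward hPB)
          (hA.trans hB.symm)
        subst hAB
        have he : splitEquiv A hA hAc = splitEquiv A hB hBc := rfl
        rw [he, Equiv.self_trans_symm, Equiv.Perm.sign_refl]
        rw [show (∑ x ∈ A, (x:ℕ)) + (∑ x ∈ A, (x:ℕ)) = 2 * (∑ x ∈ A, (x:ℕ)) from by omega,
          pow_mul, neg_one_sq, one_pow]

lemma sum_orderEmbOfFin {N : ℕ} (s : Finset (Fin N)) {m : ℕ} (h : s.card = m) :
    ∑ i : Fin m, ((s.orderEmbOfFin h i : Fin N) : ℕ) = ∑ x ∈ s, (x : ℕ) := by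
  refine Finset.sum_bij (fun i _ => s.orderEmbOfFin h i) ?_ ?_ ?_ ?_
  · exact fun i _ => s.orderEmbOfFin_mem h i
  · exact fun i _ j _ hij => (s.orderEmbOfFin h).injective hij
  · intro x hx
    have : x ∈ Set.range (s.orderEmbOfFin h) := by
      rw [Finset.range_orderEmbOfFin]
      exact hx
    obtain ⟨i, hi⟩ := this
    exact ⟨i, Finset.mem_univ i, hi⟩
  · exact fun i _ => rfl

/-- Symmetric polynomial lift of the binomial duality theorem:
`det (h_{b-a}(x_1,…,x_{a+1}))_{a∈A, b∈B} = det (e_{a'-b'}(x_1,…,x_{a'}))_{a'∈Aᶜ, b'∈Bᶜ}`. -/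
theorem sym_poly_binomial_duality (n : ℕ) (A B : Finset (Fin (n + 1)))
    (k l : ℕ) (hA : A.card = k) (hB : B.card = k)
    (hAc : Aᶜ.card = l) (hBc : Bᶜ.card = l) :
    Matrix.det (Matrix.of fun i j : Fin k =>
      hRange (Finset.Icc 1 ((A.orderEmbOfFin hA i : ℕ) + 1))
        ((B.orderEmbOfFin hB j : ℕ) - (A.orderEmbOfFin hA i : ℕ) : ℤ)) =
    Matrix.det (Matrix.of fun i j : Fin l =>
      eRange (Finset.Icc 1 (Aᶜ.orderEmbOfFin hAc i : ℕ))
        ((Aᶜ.orderEmbOfFin hAc i : ℕ) - (Bᶜ.orderEmbOfFin hBc j : ℕ) : ℤ)) := by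
  classical
  set R := MvPolynomial ℕ ℤ
  set eA := splitEquiv A hA hAc with heA
  set eB := splitEquiv B hB hBc with heB
  set Q : Matrix (Fin k ⊕ Fin l) (Fin k ⊕ Fin l) R := (Nmat n).submatrix eA eB with hQ
  set Pm : Matrix (Fin k ⊕ Fin l) (Fin k ⊕ Fin l) R := (Pmat n).submatrix eB eA with hPm
  have hQP : Q * Pm = 1 := by
    rw [hQ, hPm, Matrix.submatrix_mul_equiv, NP_eq_one, Matrix.submatrix_one_equiv]
  have hJac := block_jacobi hQP
  -- LHS is Q.toBlocks₁₁
  have hL : (Matrix.of fun i j : Fin k =>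
      hRange (Finset.Icc 1 ((A.orderEmbOfFin hA i : ℕ) + 1))
        ((B.orderEmbOfFin hB j : ℕ) - (A.orderEmbOfFin hA i : ℕ) : ℤ)) = Q.toBlocks₁₁ := by
    ext i j
    rfl
  -- det Q
  set σ : Equiv.Perm (Fin k ⊕ Fin l) := eA.trans eB.symm with hσ
  have hQfact : Q = ((Nmat n).submatrix eB eB).submatrix σ id := by
    ext i j
    simp only [hQ, hσ, Matrix.submatrix_apply, id_eq, Equiv.trans_apply,
      Equiv.apply_symm_apply]
  have hdetQ : Q.det = ((Equiv.Perm.sign σ : ℤ) : R) := by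
    rw [hQfact, Matrix.det_permute, Matrix.det_submatrix_equiv_self, detN, mul_one]
  have hsign := sign_splitEquiv ((∑ x ∈ A, (x:ℕ)) + (∑ x ∈ B, (x:ℕ))) A B hA hB hAc hBc le_rfl
  rw [← hσ] at hsign
  have hdetQ' : Q.det = (-1 : R)^((∑ x ∈ A, (x:ℕ)) + (∑ x ∈ B, (x:ℕ))) := by
    rw [hdetQ, hsign]
    push_cast
    norm_num
  -- Pm.toBlocks₂₂
  have hP22 : Pm.toBlocks₂₂ = Matrix.of (fun i j : Fin l =>
      (-1 : R)^(((Bᶜ.orderEmbOfFin hBc i : Fin (n+1)) : ℕ) + ((Aᶜ.orderEmbOfFin hAc j : Fin (n+1)) : ℕ))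
        * eRange (Finset.Icc 1 ((Aᶜ.orderEmbOfFin hAc j : Fin (n+1)) : ℕ))
          (((Aᶜ.orderEmbOfFin hAc j : Fin (n+1)) : ℕ) - ((Bᶜ.orderEmbOfFin hBc i : Fin (n+1)) : ℕ) : ℤ)) := by
    ext i j
    rfl
  set Mr : Matrix (Fin l) (Fin l) R := Matrix.of (fun i j : Fin l =>
      eRange (Finset.Icc 1 (Aᶜ.orderEmbOfFin hAc i : ℕ))
        ((Aᶜ.orderEmbOfFin hAc i : ℕ) - (Bᶜ.orderEmbOfFin hBc j : ℕ) : ℤ)) with hMr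
  have hP22T : Matrix.transpose Pm.toBlocks₂₂ = Matrix.of (fun i j : Fin l =>
      ((-1 : R)^((Aᶜ.orderEmbOfFin hAc i : ℕ))) * (((-1 : R)^((Bᶜ.orderEmbOfFin hBc j : ℕ)))
        * Mr i j)) := by
    ext i j
    rw [Matrix.transpose_apply, hP22, hMr]
    simp only [Matrix.of_apply]
    rw [pow_add]
    congr 1
    ring
  have hdetP22 : Pm.toBlocks₂₂.det
      = (-1 : R)^((∑ x ∈ Aᶜ, (x:ℕ)) + (∑ x ∈ Bᶜ, (x:ℕ))) * Mr.det := by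
    rw [← Matrix.det_transpose, hP22T]
    rw [show Matrix.of (fun i j : Fin l =>
        ((-1 : R)^((Aᶜ.orderEmbOfFin hAc i : ℕ))) * (((-1 : R)^((Bᶜ.orderEmbOfFin hBc j : ℕ)))
          * Mr i j))
      = Matrix.of (fun i j : Fin l =>
        ((-1 : R)^((Aᶜ.orderEmbOfFin hAc i : ℕ))) * (Matrix.of (fun i' j' : Fin l =>
          ((-1 : R)^((Bᶜ.orderEmbOfFin hBc j' : ℕ))) * Mr i' j')) i j) from rfl]
    rw [Matrix.det_mul_column, Matrix.det_mul_row]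
    rw [Finset.prod_pow_eq_pow_sum, Finset.prod_pow_eq_pow_sum,
      sum_orderEmbOfFin Aᶜ hAc, sum_orderEmbOfFin Bᶜ hBc]
    rw [← mul_assoc, ← pow_add]
  rw [hL, hJac, hdetQ', hdetP22, ← mul_assoc, ← pow_add]
  have hsumA := Finset.sum_add_sum_compl A (fun x : Fin (n+1) => (x:ℕ))
  have hsumB := Finset.sum_add_sum_compl B (fun x : Fin (n+1) => (x:ℕ))
  rw [show (∑ x ∈ A, (x:ℕ)) + (∑ x ∈ B, (x:ℕ)) + ((∑ x ∈ Aᶜ, (x:ℕ)) + (∑ x ∈ Bᶜ, (x:ℕ)))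
      = 2 * (∑ x : Fin (n+1), (x:ℕ)) from by omega]
  rw [pow_mul, neg_one_sq, one_pow, one_mul]
end

section
/- Let G be a finite directed acyclic graph with edge weights in a commutative ring, with designated sources u_1,...,u_m and sinks v_1,...,v_m. Suppose G is nonpermutable, i.e. every m-tuple of pairwise vertex-disjoint paths from the sources to the sinks connects u_i to v_i for each i. Let M be the m×m matrix whose (i,j) entry is the sum, over paths P from u_i to v_j, of the product of the edge weights of P. Then det(M) equals the sum, over all m-tuples of pairwise vertex-disjoint paths (P_1,...,P_m) with P_i from u_i to v_i, of the product of the weights of all the P_i. -/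
/-- The weight of a path, given as its list of visited vertices: the product of
the weights of its edges (the empty product being `1`). -/
def pathWeight {V R : Type*} [CommRing R] (w : V → V → R) (l : List V) : R :=
  ((l.zip l.tail).map fun p => w p.1 p.2).prod

/-- The finite set of directed paths from `u` to `v` in the digraph with
adjacency relation `adj`, each path recorded as its (repetition-free) list of
visited vertices.  (In an acyclic digraph every path is repetition-free.) -/
noncomputable def pathsBetween {V : Type*} [Fintype V] [DecidableEq V]
    (adj : V → V → Prop) [DecidableRel adj] (u v : V) : Finset (List V) :=
  ((Finset.univ : Finset { l : List V // l.Nodup }).image Subtype.val).filter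
    fun l => l.IsChain adj ∧ l.head? = some u ∧ l.getLast? = some v

set_option linter.unusedSectionVars false
set_option maxHeartbeats 1000000

section
variable {V R : Type*} [DecidableEq V] [CommRing R] {m : ℕ} {adj : V → V → Prop} (w : V → V → R)

namespace LGV

lemma takeWhile_append_cons' (p : V → Bool) {A : List V} {x : V}
    (hA : ∀ a ∈ A, p a = true) (hx : p x = false) (B : List V) :
    (A ++ x :: B).takeWhile p = A ∧ (A ++ x :: B).dropWhile p = x :: B := by
  induction A with
  | nil => simp [List.takeWhile, List.dropWhile, hx]
  | cons a A ih =>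
    have ha : p a = true := hA a (by simp)
    have := ih (fun a h => hA a (by simp [h]))
    simp [List.takeWhile, List.dropWhile, ha, this.1, this.2]

lemma chain'_of_chain {a : V} {l : List V} (h : List.Chain adj a l) : l.Chain' adj := by
  cases l with
  | nil => exact List.IsChain.nil
  | cons b t => exact (List.chain_cons.1 h).2

lemma nodup_of_chain' (hacyc : ∀ (x : V) (l : List V), ¬ List.Chain adj x (l ++ [x])) :
    ∀ {l : List V}, l.Chain' adj → l.Nodup := by
  intro l hl
  induction l with
  | nil => simp
  | cons a l ih =>
    have hch : List.Chain adj a l := hl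
    refine List.nodup_cons.2 ⟨?_, ih (chain'_of_chain hch)⟩
    intro hmem
    obtain ⟨l1, l2, rfl⟩ := List.append_of_mem hmem
    exact hacyc a l1 ((List.isChain_split (l₁ := a :: l1) (c := a) (l₂ := l2)).1 hch).1

lemma chain'_splice {A B C D : List V} {x : V}
    (h1 : List.Chain' adj (A ++ x :: B)) (h2 : List.Chain' adj (C ++ x :: D)) :
    List.Chain' adj (A ++ x :: D) := by
  unfold List.Chain' at h1 h2 ⊢
  rw [List.isChain_append] at h1 h2 ⊢
  refine ⟨h1.1, h2.2.1, ?_⟩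
  intro a ha y hy
  have hxy : y = x := by simpa [Option.mem_def, eq_comm] using hy
  subst hxy
  exact h1.2.2 a ha y (by simp)

lemma head?_append_cons (A : List V) (x : V) (B D : List V) :
    (A ++ x :: B).head? = (A ++ x :: D).head? := by cases A <;> simp

lemma getLast?_append_cons (A C : List V) (x : V) (D : List V) :
    (A ++ x :: D).getLast? = (C ++ x :: D).getLast? := by
  rw [List.getLast?_append, List.getLast?_append]
  obtain ⟨c, hc⟩ : ∃ c, (x :: D).getLast? = some c := ⟨_, List.getLast?_eq_getLast (l := x :: D) (by simp)⟩
  simp [hc]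

@[simp] lemma pathWeight_nil : pathWeight w ([] : List V) = 1 := rfl
@[simp] lemma pathWeight_single (a : V) : pathWeight w [a] = 1 := rfl
lemma pathWeight_cons_cons (a b : V) (l : List V) :
    pathWeight w (a :: b :: l) = w a b * pathWeight w (b :: l) := by
  simp [pathWeight]

lemma pathWeight_append_cons (x : V) (A B : List V) :
    pathWeight w (A ++ x :: B) = pathWeight w (A ++ [x]) * pathWeight w (x :: B) := by
  induction A with
  | nil => simp
  | cons a A ih =>
    cases A with
    | nil => simp [pathWeight_cons_cons, mul_assoc]
    | cons a' A' =>
      simp only [List.cons_append, pathWeight_cons_cons]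
      rw [List.cons_append] at ih
      rw [ih, mul_assoc]
      simp

lemma mem_pathsBetween_iff {V : Type*} [Fintype V] [DecidableEq V]
    {adj : V → V → Prop} [DecidableRel adj] {u v : V} {l : List V} :
    l ∈ pathsBetween adj u v ↔
      l.Nodup ∧ l.Chain' adj ∧ l.head? = some u ∧ l.getLast? = some v := by
  simp only [pathsBetween, Finset.mem_filter, Finset.mem_image, Finset.mem_univ, true_and,
    Subtype.exists, exists_prop, exists_eq_right, List.Chain']

def badSet (P : Fin m → List V) : Finset (Fin m) :=
  Finset.univ.filter fun i => ∃ j, j ≠ i ∧ ∃ y ∈ P i, y ∈ P j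

def jSet (P : Fin m → List V) (i0 : Fin m) (x : V) : Finset (Fin m) :=
  Finset.univ.filter fun j => j ≠ i0 ∧ x ∈ P j

def lgvPick2 (P : Fin m → List V) (i0 : Fin m) : Option (Fin m × V × Fin m) :=
  ((P i0).dropWhile fun y => !decide (∃ j, j ≠ i0 ∧ y ∈ P j)).head?.bind fun x =>
    if hj : (jSet P i0 x).Nonempty then some (i0, x, (jSet P i0 x).min' hj) else none

def lgvPick (P : Fin m → List V) : Option (Fin m × V × Fin m) :=
  if h : (badSet P).Nonempty then lgvPick2 P ((badSet P).min' h) else none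

lemma first_sat {p : V → Prop} [DecidablePred p] {l : List V} (h : ∃ y ∈ l, p y) :
    ∃ A x B, l = A ++ x :: B ∧ (∀ a ∈ A, ¬ p a) ∧ p x := by
  induction l with
  | nil => simp at h
  | cons a t ih =>
    by_cases ha : p a
    · exact ⟨[], a, t, by simp, by simp, ha⟩
    · obtain ⟨y, hy, hpy⟩ := h
      rcases List.mem_cons.1 hy with rfl | hy
      · exact absurd hpy ha
      · obtain ⟨A, x, B, rfl, hA, hx⟩ := ih ⟨y, hy, hpy⟩
        exact ⟨a :: A, x, B, by simp, by
          intro b hb; rcases List.mem_cons.1 hb with rfl | hb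
          exacts [ha, hA b hb], hx⟩

lemma lgvPick_eq_some {P : Fin m → List V} {i0 j0 : Fin m} {x : V} {A B : List V}
    (h1 : i0 ∈ badSet P)
    (h2 : ∀ k, k < i0 → k ∉ badSet P)
    (h3 : P i0 = A ++ x :: B)
    (h4 : ∀ a ∈ A, ¬ ∃ j, j ≠ i0 ∧ a ∈ P j)
    (h6 : j0 ≠ i0 ∧ x ∈ P j0)
    (h7 : ∀ k, k < j0 → k ≠ i0 → x ∉ P k) :
    lgvPick P = some (i0, x, j0) := by
  have hne : (badSet P).Nonempty := ⟨i0, h1⟩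
  have hmin : (badSet P).min' hne = i0 := by
    refine le_antisymm (Finset.min'_le _ _ h1) (Finset.le_min' _ _ _ fun b hb => ?_)
    by_contra hlt
    exact h2 b (lt_of_not_ge hlt) hb
  have hx : (∃ j, j ≠ i0 ∧ x ∈ P j) := ⟨j0, h6.1, h6.2⟩
  have hdrop : ((P i0).dropWhile fun y => !decide (∃ j, j ≠ i0 ∧ y ∈ P j)) = x :: B := by
    rw [h3]
    exact (takeWhile_append_cons' _ (fun a ha => by simp [h4 a ha]) (by simp [hx]) B).2
  have hjne : (jSet P i0 x).Nonempty := ⟨j0, by simp [jSet, h6.1, h6.2]⟩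
  have hjmin : (jSet P i0 x).min' hjne = j0 := by
    refine le_antisymm (Finset.min'_le _ _ (by simp [jSet, h6.1, h6.2]))
      (Finset.le_min' _ _ _ fun b hb => ?_)
    simp only [jSet, Finset.mem_filter, Finset.mem_univ, true_and] at hb
    by_contra hlt
    exact h7 b (lt_of_not_ge hlt) hb.1 hb.2
  rw [lgvPick, dif_pos hne, hmin, lgvPick2, hdrop]
  simp [hjne, hjmin]

lemma lgvPick_spec {P : Fin m → List V}
    (h : ∃ i j, i ≠ j ∧ ∃ y ∈ P i, y ∈ P j) :
    ∃ i0 x j0 A B, lgvPick P = some (i0, x, j0) ∧ j0 ≠ i0 ∧ x ∈ P j0 ∧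
      P i0 = A ++ x :: B ∧
      (∀ a ∈ A, ¬ ∃ j, j ≠ i0 ∧ a ∈ P j) ∧
      (∀ k, k < i0 → k ∉ badSet P) ∧
      (∀ k, k < j0 → k ≠ i0 → x ∉ P k) := by
  have hne : (badSet P).Nonempty := by
    obtain ⟨i, j, hij, y, hyi, hyj⟩ := h
    refine ⟨i, ?_⟩
    simp only [badSet, Finset.mem_filter, Finset.mem_univ, true_and]
    exact ⟨j, hij.symm, y, hyi, hyj⟩
  set i0 := (badSet P).min' hne with hi0
  have hmem : i0 ∈ badSet P := Finset.min'_mem _ _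
  have h2 : ∀ k, k < i0 → k ∉ badSet P := fun k hk hkmem =>
    absurd (Finset.min'_le _ _ hkmem) (not_le.2 hk)
  have hmem' := hmem
  simp only [badSet, Finset.mem_filter, Finset.mem_univ, true_and] at hmem'
  obtain ⟨j1, hj1, y, hyi, hyj⟩ := hmem'
  obtain ⟨A, x, B, hAB, hA, hx⟩ :=
    first_sat (p := fun y => ∃ j, j ≠ i0 ∧ y ∈ P j) ⟨y, hyi, j1, hj1, hyj⟩
  obtain ⟨j2, hj2, hxj2⟩ := hx
  have hjne : (jSet P i0 x).Nonempty := ⟨j2, by simp [jSet, hj2, hxj2]⟩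
  set j0 := (jSet P i0 x).min' hjne with hj0
  have hj0mem : j0 ∈ jSet P i0 x := Finset.min'_mem _ _
  simp only [jSet, Finset.mem_filter, Finset.mem_univ, true_and] at hj0mem
  have h7 : ∀ k, k < j0 → k ≠ i0 → x ∉ P k := fun k hk hki hxk =>
    absurd (Finset.min'_le _ _ (by simp [jSet, hki, hxk])) (not_le.2 hk)
  exact ⟨i0, x, j0, A, B,
    lgvPick_eq_some hmem h2 hAB hA hj0mem h7,
    hj0mem.1, hj0mem.2, hAB, hA, h2, h7⟩

def lgvStep (a : (_ : Equiv.Perm (Fin m)) × (Fin m → List V)) :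
    (_ : Equiv.Perm (Fin m)) × (Fin m → List V) :=
  (lgvPick a.2).elim a fun t =>
    ⟨a.1 * Equiv.swap t.1 t.2.2,
      Function.update (Function.update a.2 t.1
          ((a.2 t.1).takeWhile (· ≠ t.2.1) ++ (a.2 t.2.2).dropWhile (· ≠ t.2.1))) t.2.2
        ((a.2 t.2.2).takeWhile (· ≠ t.2.1) ++ (a.2 t.1).dropWhile (· ≠ t.2.1))⟩

lemma lgvStep_eq {σ : Equiv.Perm (Fin m)} {P : Fin m → List V} {i0 j0 : Fin m} {x : V}
    {A B C D : List V} (hpick : lgvPick P = some (i0, x, j0))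
    (hAB : P i0 = A ++ x :: B) (hxA : x ∉ A)
    (hCD : P j0 = C ++ x :: D) (hxC : x ∉ C) :
    lgvStep ⟨σ, P⟩ = ⟨σ * Equiv.swap i0 j0,
      Function.update (Function.update P i0 (A ++ x :: D)) j0 (C ++ x :: B)⟩ := by
  have h1 : (P i0).takeWhile (· ≠ x) = A ∧ (P i0).dropWhile (· ≠ x) = x :: B := by
    rw [hAB]
    exact takeWhile_append_cons' _ (fun a ha => by simp; exact fun h => hxA (h ▸ ha))
      (by simp) B
  have h2 : (P j0).takeWhile (· ≠ x) = C ∧ (P j0).dropWhile (· ≠ x) = x :: D := by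
    rw [hCD]
    exact takeWhile_append_cons' _ (fun a ha => by simp; exact fun h => hxC (h ▸ ha))
      (by simp) D
  simp only [lgvStep, hpick, Option.elim, h1.1, h1.2, h2.1, h2.2]

lemma lgvStep_spec {V R : Type*} [Fintype V] [DecidableEq V] [CommRing R]
    {adj : V → V → Prop} [DecidableRel adj]
    (hacyc : ∀ (x : V) (l : List V), ¬ List.Chain adj x (l ++ [x]))
    {m : ℕ} (u v : Fin m → V) (w : V → V → R)
    (σ : Equiv.Perm (Fin m)) (P : Fin m → List V)
    (hP : ∀ i, P i ∈ pathsBetween adj (u i) (v (σ i)))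
    (hbad : ¬ ∀ i j, i ≠ j → ∀ x ∈ P i, x ∉ P j) :
    ∃ τ Q, lgvStep ⟨σ, P⟩ = ⟨τ, Q⟩ ∧
      (∀ i, Q i ∈ pathsBetween adj (u i) (v (τ i))) ∧
      ¬ (∀ i j, i ≠ j → ∀ x ∈ Q i, x ∉ Q j) ∧
      τ ≠ σ ∧
      Equiv.Perm.sign τ = - Equiv.Perm.sign σ ∧
      (∏ i, pathWeight w (Q i)) = (∏ i, pathWeight w (P i)) ∧
      lgvStep ⟨τ, Q⟩ = ⟨σ, P⟩ := by
  push_neg at hbad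
  obtain ⟨i1, j1, hij1, y1, hy1i, hy1j⟩ := hbad
  obtain ⟨i0, x, j0, A, B, hpick, hj0i0, hxj0, hAB, hA, h2, h7⟩ :=
    lgvPick_spec ⟨i1, j1, hij1, y1, hy1i, hy1j⟩
  -- basic facts about the paths
  have hmem : ∀ i, (P i).Nodup ∧ (P i).Chain' adj ∧
      (P i).head? = some (u i) ∧ (P i).getLast? = some (v (σ i)) :=
    fun i => mem_pathsBetween_iff.1 (hP i)
  have hxi0 : x ∈ P i0 := by rw [hAB]; simp
  have hi0j0 : i0 ≠ j0 := hj0i0.symm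
  have hi0lt : i0 < j0 := by
    have hj0bad : j0 ∈ badSet P := by
      simp only [badSet, Finset.mem_filter, Finset.mem_univ, true_and]
      exact ⟨i0, hi0j0, x, hxj0, hxi0⟩
    rcases lt_trichotomy i0 j0 with h | h | h
    · exact h
    · exact absurd h hi0j0
    · exact absurd hj0bad (h2 j0 h)
  obtain ⟨C, D, hCD⟩ := List.append_of_mem hxj0
  -- nodup consequences
  have hndi0 : (A ++ x :: B).Nodup := hAB ▸ (hmem i0).1
  have hndj0 : (C ++ x :: D).Nodup := hCD ▸ (hmem j0).1
  have hxA : x ∉ A := fun h => (List.disjoint_of_nodup_append hndi0) h (by simp)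
  have hxC : x ∉ C := fun h => (List.disjoint_of_nodup_append hndj0) h (by simp)
  have hdisjAB : ∀ a ∈ A, a ∉ x :: B := fun a ha => List.disjoint_of_nodup_append hndi0 ha
  have hdisjCD : ∀ a ∈ C, a ∉ x :: D := fun a ha => List.disjoint_of_nodup_append hndj0 ha
  set τ := σ * Equiv.swap i0 j0 with hτ
  set Q := Function.update (Function.update P i0 (A ++ x :: D)) j0 (C ++ x :: B) with hQdef
  have hstep : lgvStep ⟨σ, P⟩ = ⟨τ, Q⟩ := lgvStep_eq hpick hAB hxA hCD hxC
  have hQ : ∀ k, Q k = if k = j0 then C ++ x :: B else if k = i0 then A ++ x :: D else P k := by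
    intro k
    simp [hQdef, Function.update_apply]
  have hQi0 : Q i0 = A ++ x :: D := by rw [hQ]; simp [hi0j0]
  have hQj0 : Q j0 = C ++ x :: B := by rw [hQ]; simp
  have hQk : ∀ k, k ≠ i0 → k ≠ j0 → Q k = P k := by
    intro k h1 h2'; rw [hQ]; simp [h1, h2']
  have hτi0 : τ i0 = σ j0 := by simp [hτ, Equiv.Perm.mul_apply]
  have hτj0 : τ j0 = σ i0 := by simp [hτ, Equiv.Perm.mul_apply]
  have hτk : ∀ k, k ≠ i0 → k ≠ j0 → τ k = σ k := by
    intro k h1 h2'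
    simp [hτ, Equiv.Perm.mul_apply, Equiv.swap_apply_of_ne_of_ne h1 h2']
  have hxQi0 : x ∈ Q i0 := by rw [hQi0]; simp
  have hxQj0 : x ∈ Q j0 := by rw [hQj0]; simp
  -- chains
  have hchQi0 : (Q i0).Chain' adj := by
    rw [hQi0]
    exact chain'_splice (hAB ▸ (hmem i0).2.1) (hCD ▸ (hmem j0).2.1)
  have hchQj0 : (Q j0).Chain' adj := by
    rw [hQj0]
    exact chain'_splice (hCD ▸ (hmem j0).2.1) (hAB ▸ (hmem i0).2.1)
  -- memberships
  have hQmem : ∀ i, Q i ∈ pathsBetween adj (u i) (v (τ i)) := by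
    intro i
    by_cases hii : i = i0
    · rw [hii, mem_pathsBetween_iff, hQi0, hτi0]
      refine ⟨nodup_of_chain' hacyc (hQi0 ▸ hchQi0), hQi0 ▸ hchQi0, ?_, ?_⟩
      · rw [← head?_append_cons A x B D, ← hAB]; exact (hmem i0).2.2.1
      · rw [getLast?_append_cons A C x D, ← hCD]; exact (hmem j0).2.2.2
    · by_cases hjj : i = j0
      · rw [hjj, mem_pathsBetween_iff, hQj0, hτj0]
        refine ⟨nodup_of_chain' hacyc (hQj0 ▸ hchQj0), hQj0 ▸ hchQj0, ?_, ?_⟩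
        · rw [← head?_append_cons C x D B, ← hCD]; exact (hmem j0).2.2.1
        · rw [getLast?_append_cons C A x B, ← hAB]; exact (hmem i0).2.2.2
      · rw [hQk i hii hjj, hτk i hii hjj]; exact hP i
  -- Q is still bad
  have hQbad : ¬ ∀ i j, i ≠ j → ∀ y ∈ Q i, y ∉ Q j := by
    intro h
    exact h i0 j0 hi0j0 x hxQi0 hxQj0
  -- τ ≠ σ
  have hτσ : τ ≠ σ := by
    intro h
    have : Equiv.swap i0 j0 = 1 := by
      have := congrArg (σ⁻¹ * ·) h
      simpa [hτ, mul_assoc] using this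
    exact hj0i0 (by simpa using congrArg (fun e => e i0) this)
  -- sign
  have hsign : Equiv.Perm.sign τ = - Equiv.Perm.sign σ := by
    rw [hτ, Equiv.Perm.sign_mul, Equiv.Perm.sign_swap hi0j0, mul_neg_one]
  -- weights
  have hw : (∏ i, pathWeight w (Q i)) = ∏ i, pathWeight w (P i) := by
    have hmemj0 : j0 ∈ (Finset.univ : Finset (Fin m)) := Finset.mem_univ _
    have hmemi0 : i0 ∈ (Finset.univ : Finset (Fin m)).erase j0 :=
      Finset.mem_erase.2 ⟨hi0j0, Finset.mem_univ _⟩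
    rw [← Finset.mul_prod_erase Finset.univ _ hmemj0,
      ← Finset.mul_prod_erase _ _ hmemi0,
      ← Finset.mul_prod_erase Finset.univ (fun i => pathWeight w (P i)) hmemj0,
      ← Finset.mul_prod_erase _ (fun i => pathWeight w (P i)) hmemi0]
    have hrest : ∏ k ∈ (Finset.univ.erase j0).erase i0, pathWeight w (Q k)
        = ∏ k ∈ (Finset.univ.erase j0).erase i0, pathWeight w (P k) := by
      refine Finset.prod_congr rfl fun k hk => ?_
      rw [Finset.mem_erase, Finset.mem_erase] at hk
      rw [hQk k hk.1 hk.2.1]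
    rw [hrest, hQi0, hQj0, hAB, hCD]
    have key : pathWeight w (A ++ x :: D) * pathWeight w (C ++ x :: B)
        = pathWeight w (A ++ x :: B) * pathWeight w (C ++ x :: D) := by
      rw [pathWeight_append_cons w x A D, pathWeight_append_cons w x C B,
        pathWeight_append_cons w x A B, pathWeight_append_cons w x C D]
      ring
    linear_combination (∏ k ∈ (Finset.univ.erase j0).erase i0, pathWeight w (P k)) * key
  -- double application
  have hpickQ : lgvPick Q = some (i0, x, j0) := by
    refine lgvPick_eq_some ?_ ?_ hQi0 ?_ ⟨hj0i0, hxQj0⟩ ?_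
    · simp only [badSet, Finset.mem_filter, Finset.mem_univ, true_and]
      exact ⟨j0, hj0i0, x, hxQi0, hxQj0⟩
    · intro k hk hkmem
      have hki0 : k ≠ i0 := ne_of_lt hk
      have hkj0 : k ≠ j0 := ne_of_lt (hk.trans hi0lt)
      simp only [badSet, Finset.mem_filter, Finset.mem_univ, true_and] at hkmem
      obtain ⟨j, hjk, y, hyk, hyj⟩ := hkmem
      rw [hQk k hki0 hkj0] at hyk
      have hbadP : k ∉ badSet P := h2 k hk
      simp only [badSet, Finset.mem_filter, Finset.mem_univ, true_and, not_exists] at hbadP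
      by_cases hji : j = i0
      · rw [hji, hQi0] at hyj
        rcases List.mem_append.1 hyj with hyA | hyxD
        · exact hbadP i0 ⟨hki0.symm, y, hyk, by rw [hAB]; exact List.mem_append.2 (Or.inl hyA)⟩
        · exact hbadP j0 ⟨hkj0.symm, y, hyk, by rw [hCD]; exact List.mem_append.2 (Or.inr hyxD)⟩
      · by_cases hjj : j = j0
        · rw [hjj, hQj0] at hyj
          rcases List.mem_append.1 hyj with hyC | hyxB
          · exact hbadP j0 ⟨hkj0.symm, y, hyk, by rw [hCD]; exact List.mem_append.2 (Or.inl hyC)⟩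
          · exact hbadP i0 ⟨hki0.symm, y, hyk, by rw [hAB]; exact List.mem_append.2 (Or.inr hyxB)⟩
        · rw [hQk j hji hjj] at hyj
          exact hbadP j ⟨hjk, y, hyk, hyj⟩
    · intro a ha
      rintro ⟨j, hj, haj⟩
      by_cases hjj : j = j0
      · rw [hjj, hQj0] at haj
        rcases List.mem_append.1 haj with hyC | hyxB
        · exact hA a ha ⟨j0, hj0i0, by rw [hCD]; exact List.mem_append.2 (Or.inl hyC)⟩
        · exact hdisjAB a ha hyxB
      · rw [hQk j hj hjj] at haj
        exact hA a ha ⟨j, hj, haj⟩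
    · intro k hk hki0
      have hkj0 : k ≠ j0 := ne_of_lt hk
      rw [hQk k hki0 hkj0]
      exact h7 k hk hki0
  have hback : lgvStep ⟨τ, Q⟩ = ⟨σ, P⟩ := by
    have := lgvStep_eq (σ := τ) hpickQ hQi0 hxA hQj0 hxC
    rw [this]
    have hperm : τ * Equiv.swap i0 j0 = σ := by
      rw [hτ, mul_assoc, Equiv.swap_mul_self, mul_one]
    have hfun : Function.update (Function.update Q i0 (A ++ x :: B)) j0 (C ++ x :: D) = P := by
      funext k
      by_cases hkj : k = j0
      · subst hkj; simp [hCD]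
      · by_cases hki : k = i0
        · subst hki
          rw [Function.update_of_ne hkj, Function.update_self, hAB]
        · rw [Function.update_of_ne hkj, Function.update_of_ne hki, hQk k hki hkj]
    rw [hperm, hfun]
  exact ⟨τ, Q, hstep, hQmem, hQbad, hτσ, hsign, hw, hback⟩

end LGV
end

open LGV in
/-- The Lindström–Gessel–Viennot lemma: let `G` be a finite directed acyclic
graph with edge weights in a commutative ring, with sources `u 1, …, u m` and
sinks `v 1, …, v m`.  Suppose `G` is nonpermutable: every `m`-tuple of pairwise
vertex-disjoint paths from the sources to the sinks connects `u i` to `v i`.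
Let `M` be the `m × m` matrix whose `(i,j)` entry is the weighted count of
paths from `u i` to `v j`.  Then `det M` is the weighted count of `m`-tuples of
pairwise vertex-disjoint paths `P i : u i → v i`. -/
theorem lindstrom_gessel_viennot {V R : Type*} [Fintype V] [DecidableEq V] [CommRing R]
    (adj : V → V → Prop) [DecidableRel adj]
    (hacyc : ∀ (x : V) (l : List V), ¬ List.Chain adj x (l ++ [x]))
    (m : ℕ) (u v : Fin m → V) (w : V → V → R)
    (hnonperm : ∀ (τ : Equiv.Perm (Fin m)) (P : Fin m → List V),
      (∀ i, P i ∈ pathsBetween adj (u i) (v (τ i))) →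
      (∀ i j, i ≠ j → ∀ x ∈ P i, x ∉ P j) → τ = 1) :
    Matrix.det (Matrix.of fun i j : Fin m =>
        ∑ l ∈ pathsBetween adj (u i) (v j), pathWeight w l)
      = ∑ P ∈ (Fintype.piFinset fun i => pathsBetween adj (u i) (v i)).filter
            (fun P => ∀ i j, i ≠ j → ∀ x ∈ P i, x ∉ P j),
          ∏ i, pathWeight w (P i) := by
  classical
  rw [← Matrix.det_transpose, Matrix.det_apply']
  simp only [Matrix.transpose_apply, Matrix.of_apply]
  have hexp : ∀ σ : Equiv.Perm (Fin m),
      (∏ i, ∑ l ∈ pathsBetween adj (u i) (v (σ i)), pathWeight w l)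
        = ∑ P ∈ Fintype.piFinset (fun i => pathsBetween adj (u i) (v (σ i))),
            ∏ i, pathWeight w (P i) :=
    fun σ => Finset.prod_univ_sum _ _
  have hsplit : ∀ σ : Equiv.Perm (Fin m),
      (∑ P ∈ Fintype.piFinset (fun i => pathsBetween adj (u i) (v (σ i))),
          ∏ i, pathWeight w (P i))
        = (∑ P ∈ (Fintype.piFinset (fun i => pathsBetween adj (u i) (v (σ i)))).filter
              (fun P => ∀ i j, i ≠ j → ∀ x ∈ P i, x ∉ P j), ∏ i, pathWeight w (P i))
          + ∑ P ∈ (Fintype.piFinset (fun i => pathsBetween adj (u i) (v (σ i)))).filter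
              (fun P => ¬ ∀ i j, i ≠ j → ∀ x ∈ P i, x ∉ P j), ∏ i, pathWeight w (P i) :=
    fun σ => (Finset.sum_filter_add_sum_filter_not _ _ _).symm
  calc
    (∑ σ : Equiv.Perm (Fin m), ((Equiv.Perm.sign σ : ℤ) : R)
        * ∏ i, ∑ l ∈ pathsBetween adj (u i) (v (σ i)), pathWeight w l)
      = (∑ σ : Equiv.Perm (Fin m), ((Equiv.Perm.sign σ : ℤ) : R)
          * ∑ P ∈ (Fintype.piFinset (fun i => pathsBetween adj (u i) (v (σ i)))).filter
              (fun P => ∀ i j, i ≠ j → ∀ x ∈ P i, x ∉ P j), ∏ i, pathWeight w (P i))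
        + ∑ σ : Equiv.Perm (Fin m), ((Equiv.Perm.sign σ : ℤ) : R)
          * ∑ P ∈ (Fintype.piFinset (fun i => pathsBetween adj (u i) (v (σ i)))).filter
              (fun P => ¬ ∀ i j, i ≠ j → ∀ x ∈ P i, x ∉ P j), ∏ i, pathWeight w (P i) := by
          rw [← Finset.sum_add_distrib]
          refine Finset.sum_congr rfl fun σ _ => ?_
          rw [hexp σ, hsplit σ, mul_add]
    _ = ∑ P ∈ (Fintype.piFinset fun i => pathsBetween adj (u i) (v i)).filter
            (fun P => ∀ i j, i ≠ j → ∀ x ∈ P i, x ∉ P j),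
          ∏ i, pathWeight w (P i) := by
          have hzero : (∑ σ : Equiv.Perm (Fin m), ((Equiv.Perm.sign σ : ℤ) : R)
              * ∑ P ∈ (Fintype.piFinset (fun i => pathsBetween adj (u i) (v (σ i)))).filter
                  (fun P => ¬ ∀ i j, i ≠ j → ∀ x ∈ P i, x ∉ P j),
                ∏ i, pathWeight w (P i)) = 0 := by
            simp only [Finset.mul_sum]
            rw [Finset.sum_sigma']
            set S := (Finset.univ : Finset (Equiv.Perm (Fin m))).sigma
              (fun σ => (Fintype.piFinset (fun i => pathsBetween adj (u i) (v (σ i)))).filter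
                (fun P => ¬ ∀ i j, i ≠ j → ∀ x ∈ P i, x ∉ P j)) with hS
            have key : ∀ a ∈ S,
                (((Equiv.Perm.sign (lgvStep a).1 : ℤ) : R) * ∏ i, pathWeight w ((lgvStep a).2 i))
                    = -(((Equiv.Perm.sign a.1 : ℤ) : R) * ∏ i, pathWeight w (a.2 i)) ∧
                  lgvStep a ≠ a ∧ lgvStep a ∈ S ∧ lgvStep (lgvStep a) = a := by
              rintro ⟨σ, P⟩ ha
              rw [hS, Finset.mem_sigma, Finset.mem_filter, Fintype.mem_piFinset] at ha
              obtain ⟨-, hPmem, hbad⟩ := ha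
              obtain ⟨τ, Q, hstep, hQmem, hQbad, hτσ, hsign, hw, hback⟩ :=
                lgvStep_spec hacyc u v w σ P hPmem hbad
              rw [hstep]
              refine ⟨?_, ?_, ?_, ?_⟩
              · show ((Equiv.Perm.sign τ : ℤ) : R) * ∏ i, pathWeight w (Q i) = _
                rw [hw, hsign]
                push_cast
                ring
              · intro h
                exact hτσ (congrArg Sigma.fst h)
              · rw [hS, Finset.mem_sigma, Finset.mem_filter, Fintype.mem_piFinset]
                exact ⟨Finset.mem_univ _, hQmem, hQbad⟩
              · rw [hback]
            refine Finset.sum_involution (fun a _ => lgvStep a)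
              (fun a ha => ?_) (fun a ha _ => ?_) (fun a ha => ?_) (fun a ha => ?_)
            · rw [(key a ha).1]; ring
            · exact (key a ha).2.1
            · exact (key a ha).2.2.1
            · exact (key a ha).2.2.2
          rw [hzero, add_zero]
          rw [Finset.sum_eq_single (1 : Equiv.Perm (Fin m))]
          · simp only [Equiv.Perm.sign_one, Units.val_one, Int.cast_one, one_mul,
              Equiv.Perm.one_apply]
          · intro σ _ hσ
            have : (∑ P ∈ (Fintype.piFinset (fun i => pathsBetween adj (u i) (v (σ i)))).filter
                (fun P => ∀ i j, i ≠ j → ∀ x ∈ P i, x ∉ P j), ∏ i, pathWeight w (P i)) = 0 := by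
              refine Finset.sum_eq_zero fun P hP => ?_
              rw [Finset.mem_filter, Fintype.mem_piFinset] at hP
              exact absurd (hnonperm σ P hP.1 hP.2) hσ
            rw [this, mul_zero]
          · intro h
            exact absurd (Finset.mem_univ _) h
end

section
/- Let n be a nonnegative integer, A, B ⊆ {0,...,n} of equal size with complements A^c, B^c, and let m be a positive integer. Then det(h_{b-a}(x_1,...,x_m))_{a ∈ A, b ∈ B} = det(e_{a'-b'}(x_1,...,x_m))_{a' ∈ A^c, b' ∈ B^c}, as polynomials in x_1,...,x_m. -/
open MvPolynomial

/-- The complete homogeneous symmetric polynomial in `m` variables of integer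
degree `d`, with `h_d = 0` for `d < 0` and `h_0 = 1`. -/
noncomputable def hIntDeg (m : ℕ) (d : ℤ) : MvPolynomial (Fin m) ℤ :=
  if 0 ≤ d then hsymm (Fin m) ℤ d.toNat else 0

/-- The elementary symmetric polynomial in `m` variables of integer degree `d`,
with `e_d = 0` for `d < 0` (and `e_d = 0` for `d > m`) and `e_0 = 1`. -/
noncomputable def eIntDeg (m : ℕ) (d : ℤ) : MvPolynomial (Fin m) ℤ :=
  if 0 ≤ d then esymm (Fin m) ℤ d.toNat else 0

set_option linter.unusedSectionVars false
set_option linter.unusedVariables false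
set_option linter.unusedTactic false

open Finset Equiv

section PartOne

open MvPolynomial Finset

variable {σ : Type*} [Fintype σ] [DecidableEq σ] {R : Type*} [CommRing R]

lemma one_sub_mul_geom {A : Type*} [CommRing A] (a : A) :
    (1 - PowerSeries.C (R := A) a * PowerSeries.X) * PowerSeries.mk (fun n => a ^ n) = 1 := by
  ext n
  rw [sub_mul, one_mul, map_sub, mul_assoc]
  cases n with
  | zero => simp
  | succ n =>
    rw [PowerSeries.coeff_C_mul, PowerSeries.coeff_succ_X_mul]
    simp [pow_succ, mul_comm]

lemma sum_count_univ (s : Multiset σ) : ∑ i : σ, s.count i = Multiset.card s := by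
  rw [← Multiset.toFinset_sum_count_eq s]
  refine (Finset.sum_subset (Finset.subset_univ _) ?_).symm
  intro x _ hx
  exact Multiset.count_eq_zero_of_notMem (fun h => hx (Multiset.mem_toFinset.2 h))

lemma hsymm_as_sum (d : ℕ) :
    hsymm σ R d = ∑ l ∈ finsuppAntidiag (univ : Finset σ) d, ∏ i, X i ^ (l i) := by
  rw [hsymm]
  refine Finset.sum_bij' (fun s _ => Multiset.toFinsupp s.1)
    (fun l hl => ⟨Finsupp.toMultiset l, ?_⟩) ?_ ?_ ?_ ?_ ?_
  · rw [Finsupp.card_toMultiset]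
    rw [Finset.mem_finsuppAntidiag] at hl
    rw [← hl.1, Finsupp.sum_fintype _ _ (fun _ => rfl)]
    rfl
  · intro s _
    rw [Finset.mem_finsuppAntidiag]
    refine ⟨?_, Finset.subset_univ _⟩
    show ∑ i : σ, (Multiset.toFinsupp s.1) i = d
    simp only [Multiset.toFinsupp_apply]
    rw [sum_count_univ]
    exact s.2
  · intro l hl
    exact Finset.mem_univ _
  · intro s _; exact Subtype.ext (Multiset.toFinsupp_toMultiset _)
  · intro l _; exact Finsupp.toMultiset_toFinsupp _
  · intro s _
    show (Multiset.map X s.1).prod = _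
    rw [Finset.prod_multiset_map_count]
    rw [Finset.prod_subset (Finset.subset_univ s.1.toFinset) (fun x _ hx => by
      rw [Multiset.count_eq_zero_of_notMem (fun h => hx (Multiset.mem_toFinset.2 h)), pow_zero])]
    exact Finset.prod_congr rfl fun x _ => by rw [Multiset.toFinsupp_apply]

lemma prod_geom_eq :
    (∏ i : σ, PowerSeries.mk (fun n => (X i : MvPolynomial σ R) ^ n)) =
      PowerSeries.mk (fun d => hsymm σ R d) := by
  refine PowerSeries.ext fun d => ?_
  rw [PowerSeries.coeff_prod, PowerSeries.coeff_mk, hsymm_as_sum]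
  exact Finset.sum_congr rfl fun l _ => Finset.prod_congr rfl fun i _ => by
    rw [PowerSeries.coeff_mk]

lemma coeff_prod_one_sub (k : ℕ) (s : Finset σ) :
    PowerSeries.coeff (R := MvPolynomial σ R) k
        (∏ i ∈ s, (1 - PowerSeries.C (R := MvPolynomial σ R) (X i) * PowerSeries.X)) =
      (-1) ^ k * ∑ t ∈ s.powersetCard k, ∏ i ∈ t, (X i : MvPolynomial σ R) := by
  induction s using Finset.induction generalizing k with
  | empty =>
    cases k with
    | zero => simp
    | succ k => rw [Finset.powersetCard_eq_empty.2 (by simp), Finset.sum_empty, mul_zero, Finset.prod_empty, PowerSeries.coeff_one, if_neg (by omega)]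
  | @insert a s ha ih =>
    rw [Finset.prod_insert ha, sub_mul, one_mul, map_sub, ih k, mul_assoc,
      PowerSeries.coeff_C_mul]
    cases k with
    | zero =>
      rw [PowerSeries.coeff_zero_X_mul, mul_zero, sub_zero]
      simp
    | succ k =>
      rw [PowerSeries.coeff_succ_X_mul, ih k, Finset.powersetCard_succ_insert ha,
        Finset.sum_union ?disj, Finset.sum_image ?inj]
      case disj =>
        rw [Finset.disjoint_left]
        intro t ht ht'
        rw [Finset.mem_powersetCard] at ht
        obtain ⟨u, hu, rfl⟩ := Finset.mem_image.1 ht'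
        rw [Finset.mem_powersetCard] at hu
        exact ha (ht.1 (Finset.mem_insert_self a u))
      case inj =>
        intro t ht u hu htu
        rw [Finset.mem_coe, Finset.mem_powersetCard] at ht hu
        have : ∀ v : Finset σ, v ⊆ s → (insert a v).erase a = v := fun v hv =>
          Finset.erase_insert (fun h => ha (hv h))
        rw [← this t ht.1, ← this u hu.1, htu]
      have hins : ∑ t ∈ s.powersetCard k, ∏ i ∈ insert a t, (X i : MvPolynomial σ R)
          = ∑ t ∈ s.powersetCard k, X a * ∏ i ∈ t, X i := by
        refine Finset.sum_congr rfl fun t ht => ?_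
        rw [Finset.mem_powersetCard] at ht
        rw [Finset.prod_insert fun h => ha (ht.1 h)]
      rw [hins, ← Finset.mul_sum]
      ring

lemma esymm_hsymm_orth (d : ℕ) (hd : d ≠ 0) :
    ∑ s ∈ Finset.range (d + 1),
      (-1 : MvPolynomial σ R) ^ s * esymm σ R s * hsymm σ R (d - s) = 0 := by
  have key : (∏ i : σ, (1 - PowerSeries.C (R := MvPolynomial σ R) (X i) * PowerSeries.X)) *
      PowerSeries.mk (fun d => hsymm σ R d) = 1 := by
    rw [← prod_geom_eq, ← Finset.prod_mul_distrib]
    exact Finset.prod_eq_one fun i _ => one_sub_mul_geom _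
  have h2 := congrArg (PowerSeries.coeff (R := MvPolynomial σ R) d) key
  rw [PowerSeries.coeff_mul, Finset.Nat.sum_antidiagonal_eq_sum_range_succ_mk,
    PowerSeries.coeff_one, if_neg hd] at h2
  rw [← h2]
  refine Finset.sum_congr rfl fun s hs => ?_
  rw [coeff_prod_one_sub, PowerSeries.coeff_mk, esymm, mul_assoc]


end PartOne

section
variable {p q : Type*} [Fintype p] [Fintype q] [DecidableEq p] [DecidableEq q]
  {A : Type*} [CommRing A]

lemma det_block_jacobi (M N : Matrix (p ⊕ q) (p ⊕ q) A) (h : M * N = 1) :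
    Matrix.det M.toBlocks₁₁ = M.det * N.toBlocks₂₂.det := by
  have hMN : Matrix.fromBlocks (M.toBlocks₁₁ * N.toBlocks₁₁ + M.toBlocks₁₂ * N.toBlocks₂₁)
      (M.toBlocks₁₁ * N.toBlocks₁₂ + M.toBlocks₁₂ * N.toBlocks₂₂)
      (M.toBlocks₂₁ * N.toBlocks₁₁ + M.toBlocks₂₂ * N.toBlocks₂₁)
      (M.toBlocks₂₁ * N.toBlocks₁₂ + M.toBlocks₂₂ * N.toBlocks₂₂) = 1 := by
    rw [← Matrix.fromBlocks_multiply, Matrix.fromBlocks_toBlocks, Matrix.fromBlocks_toBlocks, h]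
  rw [← Matrix.fromBlocks_one] at hMN
  have h12 : M.toBlocks₁₁ * N.toBlocks₁₂ + M.toBlocks₁₂ * N.toBlocks₂₂ = 0 := by
    have := congrArg Matrix.toBlocks₁₂ hMN
    rwa [Matrix.toBlocks_fromBlocks₁₂, Matrix.toBlocks_fromBlocks₁₂] at this
  have h22 : M.toBlocks₂₁ * N.toBlocks₁₂ + M.toBlocks₂₂ * N.toBlocks₂₂ = 1 := by
    have := congrArg Matrix.toBlocks₂₂ hMN
    rwa [Matrix.toBlocks_fromBlocks₂₂, Matrix.toBlocks_fromBlocks₂₂] at this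
  have key : M * Matrix.fromBlocks 1 N.toBlocks₁₂ 0 N.toBlocks₂₂ =
      Matrix.fromBlocks M.toBlocks₁₁ 0 M.toBlocks₂₁ 1 := by
    conv_lhs => rw [← Matrix.fromBlocks_toBlocks M]
    rw [Matrix.fromBlocks_multiply]
    rw [Matrix.mul_one, Matrix.mul_one, Matrix.mul_zero, Matrix.mul_zero, add_zero, add_zero,
      h12, h22]
  have hdet := congrArg Matrix.det key
  rw [Matrix.det_mul, Matrix.det_fromBlocks_zero₂₁, Matrix.det_fromBlocks_zero₁₂] at hdet
  simp only [Matrix.det_one, one_mul, mul_one] at hdet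
  exact hdet.symm

end

variable (m nn : ℕ)

noncomputable def Mh : Matrix (Fin nn) (Fin nn) (MvPolynomial (Fin m) ℤ) :=
  Matrix.of fun i j => hIntDeg m ((j : ℤ) - (i : ℤ))

noncomputable def Me : Matrix (Fin nn) (Fin nn) (MvPolynomial (Fin m) ℤ) :=
  Matrix.of fun i j => (-1) ^ ((i : ℕ) + (j : ℕ)) * eIntDeg m ((j : ℤ) - (i : ℤ))

lemma hIntDeg_neg {d : ℤ} (hd : d < 0) : hIntDeg m d = 0 := if_neg (by omega)
lemma eIntDeg_neg {d : ℤ} (hd : d < 0) : eIntDeg m d = 0 := if_neg (by omega)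
lemma hIntDeg_ofNat (d : ℕ) : hIntDeg m d = hsymm (Fin m) ℤ d := by
  rw [hIntDeg, if_pos (by omega)]; norm_num
lemma eIntDeg_ofNat (d : ℕ) : eIntDeg m d = esymm (Fin m) ℤ d := by
  rw [eIntDeg, if_pos (by omega)]; norm_num

lemma det_Mh : (Mh m nn).det = 1 := by
  rw [Matrix.det_of_upperTriangular (M := Mh m nn) (fun i j hij => by
    simp only [Mh, Matrix.of_apply]
    exact hIntDeg_neg m (by simp only [id] at hij; omega))]
  refine Finset.prod_eq_one fun i _ => ?_
  simp only [Mh, Matrix.of_apply, sub_self]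
  rw [show (0 : ℤ) = ((0 : ℕ) : ℤ) from rfl, hIntDeg_ofNat, hsymm_zero]

lemma Mh_mul_Me : Mh m nn * Me m nn = 1 := by
  refine Matrix.ext fun i j => ?_
  rw [Matrix.mul_apply, Matrix.one_apply]
  simp only [Mh, Me, Matrix.of_apply]
  by_cases hij : (j : ℕ) < (i : ℕ)
  · rw [if_neg (fun h => by subst h; omega)]
    refine Finset.sum_eq_zero fun t _ => ?_
    by_cases hti : (t : ℕ) < (i : ℕ)
    · rw [hIntDeg_neg m (by omega), zero_mul]
    · rw [eIntDeg_neg m (by omega), mul_zero, mul_zero]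
  · -- i ≤ j
    push_neg at hij
    set d : ℕ := (j : ℕ) - (i : ℕ) with hd
    have hstep : ∑ t : Fin nn, hIntDeg m ((t : ℤ) - (i : ℤ)) *
          ((-1) ^ ((t : ℕ) + (j : ℕ)) * eIntDeg m ((j : ℤ) - (t : ℤ))) =
        ∑ s ∈ Finset.range (d + 1),
          (-1) ^ (d - s) * esymm (Fin m) ℤ (d - s) * hsymm (Fin m) ℤ s := by
      rw [← Finset.sum_subset (Finset.subset_univ (Finset.Icc i j)) (fun t _ ht => ?_)]
      · refine Finset.sum_bij' (fun t _ => (t : ℕ) - (i : ℕ))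
          (fun s _ => (⟨min ((i : ℕ) + s) (j : ℕ), lt_of_le_of_lt (min_le_right _ _) j.isLt⟩ : Fin nn)) ?_ ?_ ?_ ?_ ?_
        · intro t ht
          rw [Finset.mem_Icc, Fin.le_def, Fin.le_def] at ht
          rw [Finset.mem_range]
          omega
        · intro s hs
          rw [Finset.mem_range] at hs
          rw [Finset.mem_Icc, Fin.le_def, Fin.le_def]
          refine ⟨?_, ?_⟩
          · show (i : ℕ) ≤ min ((i : ℕ) + s) (j : ℕ)
            omega
          · show min ((i : ℕ) + s) (j : ℕ) ≤ (j : ℕ)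
            omega
        · intro t ht
          rw [Finset.mem_Icc, Fin.le_def, Fin.le_def] at ht
          refine Fin.ext ?_
          show min ((i : ℕ) + ((t : ℕ) - (i : ℕ))) (j : ℕ) = (t : ℕ)
          omega

        · intro s hs
          rw [Finset.mem_range] at hs
          show min ((i : ℕ) + s) (j : ℕ) - (i : ℕ) = s
          omega
        · intro t ht
          rw [Finset.mem_Icc, Fin.le_def, Fin.le_def] at ht
          have h1 : (t : ℤ) - (i : ℤ) = (((t : ℕ) - (i : ℕ) : ℕ) : ℤ) := by
            push_cast; omega
          have h2 : (j : ℤ) - (t : ℤ) = ((d - ((t : ℕ) - (i : ℕ)) : ℕ) : ℤ) := by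
            push_cast; omega
          rw [h1, h2, hIntDeg_ofNat, eIntDeg_ofNat]
          have h3 : (-1 : MvPolynomial (Fin m) ℤ) ^ ((t : ℕ) + (j : ℕ))
              = (-1) ^ (d - ((t : ℕ) - (i : ℕ))) := by
            rw [neg_one_pow_eq_pow_mod_two, neg_one_pow_eq_pow_mod_two
              (n := d - ((t : ℕ) - (i : ℕ)))]
            congr 1
            omega
          rw [h3]
          ring
      · -- zero outside Icc
        rw [Finset.mem_Icc] at ht
        rw [Fin.le_def, Fin.le_def] at ht
        push_neg at ht
        by_cases hti : (t : ℕ) < (i : ℕ)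
        · rw [hIntDeg_neg m (by omega), zero_mul]
        · rw [eIntDeg_neg m (by omega), mul_zero, mul_zero]
    rw [hstep]
    by_cases hij' : i = j
    · subst hij'
      have hd0 : d = 0 := by omega
      rw [if_pos rfl, hd0, Finset.sum_range_one]
      simp [esymm_zero, hsymm_zero]
    · rw [if_neg hij']
      have hd0 : d ≠ 0 := fun h => hij' (Fin.ext (by omega))
      have horth := esymm_hsymm_orth (σ := Fin m) (R := ℤ) d hd0
      rw [← Finset.sum_range_reflect] at horth
      refine Eq.trans ?_ horth
      refine Finset.sum_congr rfl fun s hs => ?_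
      rw [Finset.mem_range] at hs
      have e1 : d + 1 - 1 - s = d - s := by omega
      have e2 : d - (d + 1 - 1 - s) = s := by omega
      rw [e2, e1]


variable {Nn : ℕ}

lemma emb_swap (c : ℕ) (S : Finset (Fin Nn)) (hS : S.card = c) (x y : Fin Nn)
    (hadj : (x : ℕ) + 1 = (y : ℕ) ∨ (y : ℕ) + 1 = (x : ℕ)) (hx : x ∈ S) (hy : y ∉ S)
    (hS' : (insert y (S.erase x)).card = c) (i : Fin c) :
    (insert y (S.erase x)).orderEmbOfFin hS' i = Equiv.swap x y (S.orderEmbOfFin hS i) := by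
  have key : ∀ z w : Fin Nn, z ∈ S → w ∈ S → z < w →
      Equiv.swap x y z < Equiv.swap x y w := by
    intro z w hzS hwS hzw
    have hzy : z ≠ y := fun h => hy (h ▸ hzS)
    have hwy : w ≠ y := fun h => hy (h ▸ hwS)
    have hzy' : (z : ℕ) ≠ (y : ℕ) := fun h => hzy (Fin.ext h)
    have hwy' : (w : ℕ) ≠ (y : ℕ) := fun h => hwy (Fin.ext h)
    have hzw' : (z : ℕ) < (w : ℕ) := Fin.lt_def.1 hzw
    by_cases hzx : z = x
    · have hwx : w ≠ x := by intro h; rw [h, ← hzx] at hzw; exact lt_irrefl _ hzw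
      have hwx' : (w : ℕ) ≠ (x : ℕ) := fun h => hwx (Fin.ext h)
      have hzx' : (z : ℕ) = (x : ℕ) := congrArg Fin.val hzx
      rw [hzx, Equiv.swap_apply_left, Equiv.swap_apply_of_ne_of_ne hwx hwy]
      exact Fin.lt_def.2 (by omega)
    · have hzx' : (z : ℕ) ≠ (x : ℕ) := fun h => hzx (Fin.ext h)
      by_cases hwx : w = x
      · have hwx' : (w : ℕ) = (x : ℕ) := congrArg Fin.val hwx
        rw [hwx, Equiv.swap_apply_left, Equiv.swap_apply_of_ne_of_ne hzx hzy]
        exact Fin.lt_def.2 (by omega)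
      · rw [Equiv.swap_apply_of_ne_of_ne hzx hzy, Equiv.swap_apply_of_ne_of_ne hwx hwy]
        exact hzw
  have huniq := Finset.orderEmbOfFin_unique hS'
      (f := fun i => Equiv.swap x y (S.orderEmbOfFin hS i)) ?_ ?_
  · exact (congrFun huniq i).symm
  · intro i
    show Equiv.swap x y (S.orderEmbOfFin hS i) ∈ insert y (S.erase x)
    have hzS : S.orderEmbOfFin hS i ∈ S := Finset.orderEmbOfFin_mem S hS i
    rcases eq_or_ne (S.orderEmbOfFin hS i) x with h | h
    · rw [h, Equiv.swap_apply_left]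
      exact Finset.mem_insert_self _ _
    · rw [Equiv.swap_apply_of_ne_of_ne h (fun hh => hy (by rw [← hh]; exact hzS))]
      exact Finset.mem_insert_of_mem (Finset.mem_erase.2 ⟨h, hzS⟩)
  · intro i j hij
    exact key _ _ (Finset.orderEmbOfFin_mem S hS i) (Finset.orderEmbOfFin_mem S hS j)
      ((S.orderEmbOfFin hS).strictMono hij)

lemma compl_move (S : Finset (Fin Nn)) (x y : Fin Nn) (hx : x ∈ S) (hy : y ∉ S) :
    (insert y (S.erase x))ᶜ = insert x (Sᶜ.erase y) := by
  have hxy : x ≠ y := fun h => hy (h ▸ hx)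
  have hyx : y ≠ x := fun h => hxy h.symm
  ext z
  simp only [Finset.mem_compl, Finset.mem_insert, Finset.mem_erase]
  by_cases hzx : z = x
  · simp [hzx, hxy, hx]
  · by_cases hzy : z = y
    · simp [hzx, hzy, hy, hyx]
    · simp [hzx, hzy]

section SignPart

variable (k l : ℕ) (hkl : k + l = Nn)

noncomputable def sumEquiv (S : Finset (Fin Nn)) (h1 : S.card = k) (h2 : Sᶜ.card = l) :
    Fin k ⊕ Fin l ≃ Fin Nn :=
  Equiv.ofBijective (Sum.elim (S.orderEmbOfFin h1) (Sᶜ.orderEmbOfFin h2)) (by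
    rw [Fintype.bijective_iff_injective_and_card]
    constructor
    · rintro (a | a) (b | b) hab <;> simp only [Sum.elim_inl, Sum.elim_inr] at hab
      · exact congrArg Sum.inl ((S.orderEmbOfFin h1).injective hab)
      · have h1m := Finset.orderEmbOfFin_mem S h1 a
        rw [hab] at h1m
        exact absurd h1m (Finset.mem_compl.1 (Finset.orderEmbOfFin_mem Sᶜ h2 b))
      · have h2m := Finset.orderEmbOfFin_mem Sᶜ h2 a
        rw [hab] at h2m
        exact absurd (Finset.orderEmbOfFin_mem S h1 b) (Finset.mem_compl.1 h2m)
      · exact congrArg Sum.inr ((Sᶜ.orderEmbOfFin h2).injective hab)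
    · simp only [Fintype.card_sum, Fintype.card_fin]
      omega)

noncomputable def permOf (S : Finset (Fin Nn)) (h1 : S.card = k) (h2 : Sᶜ.card = l) :
    Equiv.Perm (Fin Nn) :=
  ((finSumFinEquiv.trans (finCongr hkl)).symm.trans (sumEquiv k l hkl S h1 h2))

noncomputable def signTerm (S : Finset (Fin Nn)) (h1 : S.card = k) (h2 : Sᶜ.card = l) : ℤ :=
  (Equiv.Perm.sign (permOf k l hkl S h1 h2) : ℤ) * (-1) ^ (∑ z ∈ Sᶜ, (z : ℕ))

end SignPart

section SignPart2

variable {k l : ℕ}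

lemma signTerm_move (hkl : k + l = Nn) (S : Finset (Fin Nn)) (h1 : S.card = k)
    (h2 : Sᶜ.card = l) (x y : Fin Nn) (hyx : (y : ℕ) + 1 = (x : ℕ))
    (hx : x ∈ S) (hy : y ∉ S) (h1' : (insert y (S.erase x)).card = k)
    (h2' : (insert y (S.erase x))ᶜ.card = l) :
    signTerm k l hkl (insert y (S.erase x)) h1' h2' = signTerm k l hkl S h1 h2 := by
  have hxy : x ≠ y := fun h => hy (h ▸ hx)
  have hcompl : (insert y (S.erase x))ᶜ = insert x (Sᶜ.erase y) := compl_move S x y hx hy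
  -- the permutation relation
  have hperm : permOf k l hkl (insert y (S.erase x)) h1' h2' =
      Equiv.swap x y * permOf k l hkl S h1 h2 := by
    apply Equiv.ext
    intro z
    show sumEquiv k l hkl _ h1' h2' ((finSumFinEquiv.trans (finCongr hkl)).symm z) =
      Equiv.swap x y (sumEquiv k l hkl S h1 h2 ((finSumFinEquiv.trans (finCongr hkl)).symm z))
    rcases hsplit : (finSumFinEquiv.trans (finCongr hkl)).symm z with a | a
    · show (insert y (S.erase x)).orderEmbOfFin h1' a = Equiv.swap x y (S.orderEmbOfFin h1 a)
      exact emb_swap k S h1 x y (Or.inr hyx) hx hy h1' a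
    · show ((insert y (S.erase x))ᶜ).orderEmbOfFin h2' a =
        Equiv.swap x y (Sᶜ.orderEmbOfFin h2 a)
      have h2'' : (insert x (Sᶜ.erase y)).card = l := by rw [← hcompl]; exact h2'
      have step := congrFun (congrArg
          (fun p : {t : Finset (Fin Nn) // t.card = l} => (⇑(p.1.orderEmbOfFin p.2) : Fin l → Fin Nn))
          (Subtype.ext hcompl :
            (⟨(insert y (S.erase x))ᶜ, h2'⟩ : {t : Finset (Fin Nn) // t.card = l}) =
              ⟨insert x (Sᶜ.erase y), h2''⟩)) a
      dsimp only at step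
      rw [step, Equiv.swap_comm]
      exact emb_swap l Sᶜ h2 y x (Or.inl hyx) (Finset.mem_compl.2 hy)
        (fun hc => (Finset.mem_compl.1 hc) hx) h2'' a
  -- the sum relation
  have hsum : ∑ z ∈ (insert y (S.erase x))ᶜ, (z : ℕ) = (∑ z ∈ Sᶜ, (z : ℕ)) + 1 := by
    have e2 : ∑ z ∈ Sᶜ, (z : ℕ) = (y : ℕ) + ∑ z ∈ Sᶜ.erase y, (z : ℕ) := by
      rw [← Finset.sum_insert (Finset.notMem_erase y Sᶜ),
        Finset.insert_erase (Finset.mem_compl.2 hy)]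
    rw [hcompl, Finset.sum_insert (fun hc =>
      (Finset.mem_compl.1 (Finset.mem_of_mem_erase hc)) hx), e2]
    omega
  rw [signTerm, signTerm, hperm, hsum, map_mul, Equiv.Perm.sign_swap hxy, pow_succ]
  push_cast
  ring

lemma down_closed (S : Finset (Fin Nn))
    (h : ∀ x ∈ S, ∀ y : Fin Nn, (y : ℕ) + 1 = (x : ℕ) → y ∈ S) :
    ∀ x ∈ S, ∀ y : Fin Nn, (y : ℕ) ≤ (x : ℕ) → y ∈ S := by
  have main : ∀ c : ℕ, ∀ x ∈ S, (x : ℕ) ≤ c → ∀ y : Fin Nn, (y : ℕ) ≤ (x : ℕ) → y ∈ S := by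
    intro c
    induction c with
    | zero =>
      intro x hx _ y hy
      have : y = x := Fin.ext (by omega)
      rwa [this]
    | succ c ih =>
      intro x hx hxc y hyx
      by_cases hcase : (y : ℕ) = (x : ℕ)
      · rwa [show y = x from Fin.ext hcase]
      · have hx0 : 0 < (x : ℕ) := by omega
        have hlt : (x : ℕ) - 1 < Nn := by omega
        have hx' : (⟨(x : ℕ) - 1, hlt⟩ : Fin Nn) ∈ S := h x hx _ (by simp; omega)
        exact ih _ hx' (by simp; omega) y (by simp; omega)
  exact fun x hx y hy => main (x : ℕ) x hx le_rfl y hy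

lemma dc_subset (S T : Finset (Fin Nn))
    (hS : ∀ x ∈ S, ∀ y : Fin Nn, (y : ℕ) + 1 = (x : ℕ) → y ∈ S)
    (hT : ∀ x ∈ T, ∀ y : Fin Nn, (y : ℕ) + 1 = (x : ℕ) → y ∈ T)
    (hcard : S.card ≤ T.card) : S ⊆ T := by
  intro x hx
  by_contra hxT
  have hTsub : T ⊆ Finset.Iio x := by
    intro z hz
    rw [Finset.mem_Iio]
    by_contra hzx
    push_neg at hzx
    exact hxT (down_closed T hT z hz x (Fin.le_def.1 hzx))
  have hSsup : Finset.Iic x ⊆ S := fun z hz =>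
    down_closed S hS x hx z (Fin.le_def.1 (Finset.mem_Iic.1 hz))
  have hss : Finset.Iio x ⊂ Finset.Iic x := by
    refine Finset.ssubset_iff_of_subset (fun z hz => Finset.mem_Iic.2
      (le_of_lt (Finset.mem_Iio.1 hz))) |>.2 ⟨x, Finset.mem_Iic.2 le_rfl, by simp⟩
  have := (Finset.card_le_card hTsub).trans_lt
    ((Finset.card_lt_card hss).trans_le (Finset.card_le_card hSsup))
  omega

lemma signTerm_const (hkl : k + l = Nn) (w : ℕ) :
    ∀ S T : Finset (Fin Nn), ∀ h1 h2 h1' h2',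
      (∑ z ∈ S, (z : ℕ)) + (∑ z ∈ T, (z : ℕ)) = w →
      signTerm k l hkl S h1 h2 = signTerm k l hkl T h1' h2' := by
  induction w using Nat.strong_induction_on with
  | _ w ih =>
    intro S T h1 h2 h1' h2' hw
    by_cases hS : ∃ x, x ∈ S ∧ ∃ y : Fin Nn, (y : ℕ) + 1 = (x : ℕ) ∧ y ∉ S
    · obtain ⟨x, hx, y, hyx, hy⟩ := hS
      set S' := insert y (S.erase x) with hS'def
      have hc1 : S'.card = k := by
        rw [hS'def, Finset.card_insert_of_notMem (fun hc => hy (Finset.mem_of_mem_erase hc)),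
          Finset.card_erase_of_mem hx]
        have : 1 ≤ S.card := Finset.card_pos.2 ⟨x, hx⟩
        omega
      have hc2 : S'ᶜ.card = l := by
        have := Finset.card_add_card_compl S'
        have := Finset.card_add_card_compl S
        simp only [Fintype.card_fin] at *
        omega
      have hsum' : (∑ z ∈ S', (z : ℕ)) + 1 = ∑ z ∈ S, (z : ℕ) := by
        have e2 : ∑ z ∈ S, (z : ℕ) = (x : ℕ) + ∑ z ∈ S.erase x, (z : ℕ) := by
          rw [← Finset.sum_insert (Finset.notMem_erase x S), Finset.insert_erase hx]
        rw [hS'def, Finset.sum_insert (fun hc => hy (Finset.mem_of_mem_erase hc)), e2]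
        omega
      rw [← signTerm_move hkl S h1 h2 x y hyx hx hy hc1 hc2]
      have hwpos : 1 ≤ w := by
        have : 1 ≤ ∑ z ∈ S, (z : ℕ) := by omega
        omega
      exact ih (w - 1) (by omega) S' T hc1 hc2 h1' h2' (by omega)
    · by_cases hT : ∃ x, x ∈ T ∧ ∃ y : Fin Nn, (y : ℕ) + 1 = (x : ℕ) ∧ y ∉ T
      · obtain ⟨x, hx, y, hyx, hy⟩ := hT
        set T' := insert y (T.erase x) with hT'def
        have hc1 : T'.card = k := by
          rw [hT'def, Finset.card_insert_of_notMem (fun hc => hy (Finset.mem_of_mem_erase hc)),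
            Finset.card_erase_of_mem hx]
          have : 1 ≤ T.card := Finset.card_pos.2 ⟨x, hx⟩
          omega
        have hc2 : T'ᶜ.card = l := by
          have := Finset.card_add_card_compl T'
          have := Finset.card_add_card_compl T
          simp only [Fintype.card_fin] at *
          omega
        have hsum' : (∑ z ∈ T', (z : ℕ)) + 1 = ∑ z ∈ T, (z : ℕ) := by
          have e2 : ∑ z ∈ T, (z : ℕ) = (x : ℕ) + ∑ z ∈ T.erase x, (z : ℕ) := by
            rw [← Finset.sum_insert (Finset.notMem_erase x T), Finset.insert_erase hx]
          rw [hT'def, Finset.sum_insert (fun hc => hy (Finset.mem_of_mem_erase hc)), e2]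
          omega
        rw [← signTerm_move hkl T h1' h2' x y hyx hx hy hc1 hc2]
        have hwpos : 1 ≤ w := by
          have : 1 ≤ ∑ z ∈ T, (z : ℕ) := by omega
          omega
        exact ih (w - 1) (by omega) S T' h1 h2 hc1 hc2 (by omega)
      · -- both are downward closed, hence equal
        push_neg at hS hT
        have hSdc : ∀ x ∈ S, ∀ y : Fin Nn, (y : ℕ) + 1 = (x : ℕ) → y ∈ S :=
          fun x hx y hyx => hS x hx y hyx
        have hTdc : ∀ x ∈ T, ∀ y : Fin Nn, (y : ℕ) + 1 = (x : ℕ) → y ∈ T :=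
          fun x hx y hyx => hT x hx y hyx
        have hST : S = T := Finset.Subset.antisymm
          (dc_subset S T hSdc hTdc (by omega))
          (dc_subset T S hTdc hSdc (by omega))
        subst hST
        rfl

end SignPart2


lemma sum_emb {Nn c : ℕ} (S : Finset (Fin Nn)) (h : S.card = c) :
    ∑ i : Fin c, ((S.orderEmbOfFin h i) : ℕ) = ∑ z ∈ S, (z : ℕ) := by
  refine Finset.sum_bij (fun i _ => S.orderEmbOfFin h i)
    (fun i _ => Finset.orderEmbOfFin_mem S h i)
    (fun a _ b _ hab => (S.orderEmbOfFin h).injective hab)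
    (fun z hz => ?_) (fun _ _ => rfl)
  have : z ∈ Set.range ⇑(S.orderEmbOfFin h) := by
    rw [Finset.range_orderEmbOfFin]
    exact hz
  obtain ⟨i, hi⟩ := this
  exact ⟨i, Finset.mem_univ i, hi⟩

/-- Rectangular-lattice specialization of the main theorem: for `A, B ⊆ {0,…,n}`
of equal size with complements `Aᶜ, Bᶜ`, and any positive integer `m`,
`det (h_{b-a}(x_1,…,x_m))_{a∈A,b∈B} = det (e_{a'-b'}(x_1,…,x_m))_{a'∈Aᶜ,b'∈Bᶜ}`. -/
theorem rectangular_duality (n : ℕ) (A B : Finset (Fin (n + 1)))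
    (k l : ℕ) (hA : A.card = k) (hB : B.card = k)
    (hAc : Aᶜ.card = l) (hBc : Bᶜ.card = l)
    (m : ℕ) (hm : 1 ≤ m) :
    Matrix.det (Matrix.of fun i j : Fin k =>
      hIntDeg m ((B.orderEmbOfFin hB j : ℕ) - (A.orderEmbOfFin hA i : ℕ) : ℤ)) =
    Matrix.det (Matrix.of fun i j : Fin l =>
      eIntDeg m ((Aᶜ.orderEmbOfFin hAc i : ℕ) - (Bᶜ.orderEmbOfFin hBc j : ℕ) : ℤ)) := by
  classical
  have hkl : k + l = n + 1 := by
    have h := Finset.card_add_card_compl A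
    simp only [Fintype.card_fin] at h
    omega
  set R := MvPolynomial (Fin m) ℤ with hR
  set eA : Fin k ⊕ Fin l ≃ Fin (n + 1) := sumEquiv k l hkl A hA hAc with heA
  set eB : Fin k ⊕ Fin l ≃ Fin (n + 1) := sumEquiv k l hkl B hB hBc with heB
  set MM : Matrix (Fin k ⊕ Fin l) (Fin k ⊕ Fin l) R := (Mh m (n + 1)).submatrix ⇑eA ⇑eB with hMM
  set NN : Matrix (Fin k ⊕ Fin l) (Fin k ⊕ Fin l) R := (Me m (n + 1)).submatrix ⇑eB ⇑eA with hNNd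
  have hMN : MM * NN = 1 := by
    rw [hMM, hNNd, Matrix.submatrix_mul_equiv, Mh_mul_Me, Matrix.submatrix_one_equiv]
  have hJ := det_block_jacobi MM NN hMN
  have hL : (Matrix.of fun i j : Fin k =>
      hIntDeg m ((B.orderEmbOfFin hB j : ℕ) - (A.orderEmbOfFin hA i : ℕ) : ℤ)) =
      MM.toBlocks₁₁ := by
    ext i j
    rfl
  set pA := permOf k l hkl A hA hAc with hpA
  set pB := permOf k l hkl B hB hBc with hpB
  have hdetMM : MM.det = ((Equiv.Perm.sign (eA.symm.trans eB) : ℤ) : R) := by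
    have hMM2 : MM = ((Mh m (n + 1)).submatrix id ⇑(eA.symm.trans eB)).submatrix ⇑eA ⇑eA := by
      refine Matrix.ext fun i j => ?_
      simp only [hMM, Matrix.submatrix_apply, Equiv.trans_apply, Equiv.symm_apply_apply, id_eq]
    rw [hMM2, Matrix.det_submatrix_equiv_self, Matrix.det_permute', det_Mh, mul_one]
  have hsgn : eA.symm.trans eB = pB * pA⁻¹ := by
    apply Equiv.ext
    intro z
    simp only [hpA, hpB, permOf, Equiv.trans_apply, Equiv.Perm.mul_apply,
      Equiv.Perm.inv_def, Equiv.symm_trans_apply, Equiv.symm_symm, Equiv.symm_apply_apply]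
    rfl
  set T : Matrix (Fin l) (Fin l) R := Matrix.of fun i j : Fin l =>
      eIntDeg m ((Aᶜ.orderEmbOfFin hAc i : ℕ) - (Bᶜ.orderEmbOfFin hBc j : ℕ) : ℤ) with hT
  have hNN : NN.toBlocks₂₂ = Matrix.of (fun i j : Fin l =>
      (-1 : R) ^ ((Bᶜ.orderEmbOfFin hBc i : ℕ)) *
        ((Matrix.of fun i' j' : Fin l =>
          (-1 : R) ^ ((Aᶜ.orderEmbOfFin hAc j' : ℕ)) * T.transpose i' j') i j)) := by
    refine Matrix.ext fun i j => ?_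
    have h1 : eB (Sum.inr i) = Bᶜ.orderEmbOfFin hBc i := rfl
    have h2 : eA (Sum.inr j) = Aᶜ.orderEmbOfFin hAc j := rfl
    show Me m (n + 1) (eB (Sum.inr i)) (eA (Sum.inr j)) = _
    simp only [Me, Matrix.of_apply, Matrix.transpose_apply, hT, h1, h2]
    rw [pow_add, mul_assoc]
  have hdetNN : NN.toBlocks₂₂.det =
      (-1 : R) ^ (∑ z ∈ Bᶜ, (z : ℕ)) * ((-1 : R) ^ (∑ z ∈ Aᶜ, (z : ℕ)) * T.det) := by
    rw [hNN, Matrix.det_mul_column, Matrix.det_mul_row, Matrix.det_transpose,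
      Finset.prod_pow_eq_pow_sum, Finset.prod_pow_eq_pow_sum,
      sum_emb Bᶜ hBc, sum_emb Aᶜ hAc]
  -- the sign identity
  have hST := signTerm_const hkl ((∑ z ∈ A, (z : ℕ)) + (∑ z ∈ B, (z : ℕ)))
    A B hA hAc hB hBc rfl
  simp only [signTerm] at hST
  have hZ : (((Equiv.Perm.sign pB : ℤ) * (Equiv.Perm.sign pA : ℤ)) *
      ((-1 : ℤ) ^ (∑ z ∈ Bᶜ, (z : ℕ)) * (-1 : ℤ) ^ (∑ z ∈ Aᶜ, (z : ℕ)))) = 1 := by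
    have hsq : ((Equiv.Perm.sign pB : ℤ) * (-1 : ℤ) ^ (∑ z ∈ Bᶜ, (z : ℕ))) *
        ((Equiv.Perm.sign pB : ℤ) * (-1 : ℤ) ^ (∑ z ∈ Bᶜ, (z : ℕ))) = 1 := by
      have h1 : (Equiv.Perm.sign pB : ℤ) * (Equiv.Perm.sign pB : ℤ) = 1 := by
        rcases Int.units_eq_one_or (Equiv.Perm.sign pB) with h | h <;> simp [h]
      have h2 : ((-1 : ℤ) ^ (∑ z ∈ Bᶜ, (z : ℕ))) * ((-1 : ℤ) ^ (∑ z ∈ Bᶜ, (z : ℕ))) = 1 := by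
        rw [← pow_add]
        exact Even.neg_one_pow ⟨∑ z ∈ Bᶜ, (z : ℕ), by ring⟩
      rw [mul_mul_mul_comm, h1, h2, one_mul]
    calc ((Equiv.Perm.sign pB : ℤ) * (Equiv.Perm.sign pA : ℤ)) *
        ((-1 : ℤ) ^ (∑ z ∈ Bᶜ, (z : ℕ)) * (-1 : ℤ) ^ (∑ z ∈ Aᶜ, (z : ℕ)))
        = ((Equiv.Perm.sign pA : ℤ) * (-1 : ℤ) ^ (∑ z ∈ Aᶜ, (z : ℕ))) *
          ((Equiv.Perm.sign pB : ℤ) * (-1 : ℤ) ^ (∑ z ∈ Bᶜ, (z : ℕ))) := by ring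
      _ = 1 := by rw [hST]; exact hsq
  have hZR := congrArg (fun t : ℤ => (t : R)) hZ
  push_cast at hZR
  rw [hL, hJ, hdetMM, hsgn, map_mul, Equiv.Perm.sign_inv, hdetNN]
  rw [Units.val_mul, Int.cast_mul]
  linear_combination T.det * hZR
end
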